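/- arXiv:1910.13009 — 15 statements merged into one kernel-verified Lean document; each statement's English description precedes it below -/
import Mathlib

section
/- In the absolute leader system on a strongly connected weighted directed graph with single leaders S0 = {s0} and S1 = {s1} (s0 ≠ s1), the steady-state opinion of every vertex v satisfies x̂_v = (b_{v,s0}ᵀ R b_{s1,s0}) / (b_{s1,s0}ᵀ R b_{s1,s0}) = (b_{v,s0}ᵀ 𝓛⁺ b_{s1,s0}) / (b_{s1,s0}ᵀ 𝓛⁺ b_{s1,s0}). -/
open Matrix BigOperators

/-- The four Penrose equations characterizing the Moore–Penrose pseudoinverse. -/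
def Penrose {m : Type*} [Fintype m] (M Mp : Matrix m m ℝ) : Prop :=
  M * Mp * M = M ∧ Mp * M * Mp = Mp ∧ (M * Mp)ᵀ = M * Mp ∧ (Mp * M)ᵀ = Mp * M

/-- `bvec u v = e_u - e_v`. -/
noncomputable def bvec {n : ℕ} (u v : Fin n) : Fin n → ℝ :=
  Pi.single u 1 - Pi.single v 1

lemma bvec_dot {n : ℕ} (u w : Fin n) (z : Fin n → ℝ) :
    bvec u w ⬝ᵥ z = z u - z w := by
  simp [bvec, sub_dotProduct, single_dotProduct]

lemma bvec_apply_self {n : ℕ} {u w : Fin n} (h : u ≠ w) : bvec u w u = 1 := by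
  simp [bvec, Pi.single_apply, h.symm]

lemma bvec_apply_other {n : ℕ} {u w : Fin n} (h : u ≠ w) : bvec u w w = -1 := by
  simp [bvec, Pi.single_apply, h]

lemma bvec_apply_ne {n : ℕ} {u w v : Fin n} (h1 : v ≠ u) (h2 : v ≠ w) :
    bvec u w v = 0 := by
  simp [bvec, Pi.single_apply, h1.symm, h2.symm]

/-- Maximum principle: a harmonic function on a strongly connected nonneg. weighted
digraph is constant. -/
lemma harmonic_const {n : ℕ} (A : Matrix (Fin n) (Fin n) ℝ)
    (hA : ∀ u v, 0 ≤ A u v)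
    (hconn : ∀ u v : Fin n, Relation.ReflTransGen (fun a b => 0 < A a b) u v)
    (d : Fin n → ℝ) (hd : ∀ u, d u = ∑ v, A u v)
    (x : Fin n → ℝ) (hx : ∀ u, d u * x u = ∑ v, A u v * x v) :
    ∀ u v : Fin n, x u = x v := by
  rcases isEmpty_or_nonempty (Fin n) with h | h
  · intro u v; exact (h.false u).elim
  obtain ⟨u0, hu0⟩ := Finite.exists_max x
  have step : ∀ a b : Fin n, x a = x u0 → 0 < A a b → x b = x u0 := by
    intro a b ha hab
    have hsum : ∑ w, A a w * (x u0 - x w) = 0 := by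
      have h1 : ∑ w, A a w * (x u0 - x w)
          = (∑ w, A a w) * x u0 - ∑ w, A a w * x w := by
        rw [Finset.sum_mul]
        rw [← Finset.sum_sub_distrib]
        congr 1; funext w; ring
      rw [h1, ← hd a, ← hx a, ha]; ring
    have hterm : A a b * (x u0 - x b) = 0 := by
      have := (Finset.sum_eq_zero_iff_of_nonneg (fun w _ =>
        mul_nonneg (hA a w) (sub_nonneg.mpr (hu0 w)))).mp hsum b (Finset.mem_univ b)
      exact this
    rcases mul_eq_zero.mp hterm with h' | h'
    · exact absurd h' hab.ne'
    · linarith [sub_eq_zero.mp h']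
  have hall : ∀ v, x v = x u0 := by
    intro v
    have hr := hconn u0 v
    induction hr with
    | refl => rfl
    | tail _ hab ih => exact step _ _ ih hab
  intro u v; rw [hall u, hall v]

/-- If `M * Mp * M = M` and the kernel of `M` consists of constants, then
`Mp * M` applied to any vector preserves differences of coordinates. -/
lemma proj_const {n : ℕ} (M Mp : Matrix (Fin n) (Fin n) ℝ)
    (h1 : M * Mp * M = M)
    (hker : ∀ x, M *ᵥ x = 0 → ∀ u v : Fin n, x u = x v)
    (y : Fin n → ℝ) (u v : Fin n) :
    ((Mp * M) *ᵥ y) u - ((Mp * M) *ᵥ y) v = y u - y v := by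
  have hz : M *ᵥ (y - (Mp * M) *ᵥ y) = 0 := by
    rw [Matrix.mulVec_sub, Matrix.mulVec_mulVec, ← Matrix.mul_assoc, h1, sub_self]
  have hc := hker _ hz u v
  simp only [Pi.sub_apply] at hc
  linarith

/-- in the absolute leader system on a strongly connected weighted directed
graph with single leaders `S0 = {s0}`, `S1 = {s1}`, the steady-state opinion of every
vertex `v` is `(b_{v,s0}ᵀ R b_{s1,s0}) / (b_{s1,s0}ᵀ R b_{s1,s0})
= (b_{v,s0}ᵀ 𝓛⁺ b_{s1,s0}) / (b_{s1,s0}ᵀ 𝓛⁺ b_{s1,s0})`. -/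
theorem stmt0
    (n : ℕ) (hn : 2 ≤ n)
    (A : Matrix (Fin n) (Fin n) ℝ)
    (hA : ∀ u v, 0 ≤ A u v)
    (hconn : ∀ u v : Fin n, Relation.ReflTransGen (fun a b => 0 < A a b) u v)
    (d : Fin n → ℝ) (hd : d = fun u => ∑ v, A u v) (hdpos : ∀ u, 0 < d u)
    (W : Matrix (Fin n) (Fin n) ℝ)
    (hW : W = Aᵀ * Matrix.diagonal (fun u => (d u)⁻¹))
    (pdist : Fin n → ℝ) (hppos : ∀ v, 0 < pdist v) (hpsum : ∑ v, pdist v = 1)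
    (hpstat : W.mulVec pdist = pdist)
    (L : Matrix (Fin n) (Fin n) ℝ) (hL : L = Matrix.diagonal d * (1 - Wᵀ))
    (calL : Matrix (Fin n) (Fin n) ℝ)
    (hcalL : calL = Matrix.diagonal pdist * (1 - Wᵀ))
    (calLplus : Matrix (Fin n) (Fin n) ℝ) (hcalLplus : Penrose calL calLplus)
    (Bplus : Matrix (Fin n) (Fin n) ℝ) (hBplus : Penrose (1 - Wᵀ) Bplus)
    (R : Matrix (Fin n) (Fin n) ℝ)
    (hR : R = Bplus * Matrix.diagonal (fun v => (pdist v)⁻¹))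
    (s0 s1 : Fin n) (hs : s0 ≠ s1)
    -- the steady-state opinion vector of the absolute leader system with
    -- `S0 = {s0}` and `S1 = {s1}`:
    (xhat : Fin n → ℝ)
    (hx0 : xhat s0 = 0) (hx1 : xhat s1 = 1)
    (hxF : ∀ v, v ≠ s0 → v ≠ s1 → L.mulVec xhat v = 0)
    -- the follower-follower submatrix of the Laplacian is invertible:
    (hinv : IsUnit (Matrix.det
      (Matrix.of (fun i j : {v : Fin n // v ≠ s0 ∧ v ≠ s1} => L i.1 j.1)))) :
    ∀ v : Fin n,
      xhat v =
        (bvec v s0 ⬝ᵥ R.mulVec (bvec s1 s0)) /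
          (bvec s1 s0 ⬝ᵥ R.mulVec (bvec s1 s0)) ∧
      xhat v =
        (bvec v s0 ⬝ᵥ calLplus.mulVec (bvec s1 s0)) /
          (bvec s1 s0 ⬝ᵥ calLplus.mulVec (bvec s1 s0)) := by
  set B : Matrix (Fin n) (Fin n) ℝ := 1 - Wᵀ with hB
  -- Wᵀ = D⁻¹ A
  have hWT : Wᵀ = Matrix.diagonal (fun u => (d u)⁻¹) * A := by
    rw [hW, Matrix.transpose_mul, Matrix.transpose_transpose, Matrix.diagonal_transpose]
  have hBapp : ∀ (x : Fin n → ℝ) (u : Fin n),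
      (B *ᵥ x) u = x u - (d u)⁻¹ * ∑ w, A u w * x w := by
    intro x u
    rw [hB, Matrix.sub_mulVec, hWT, ← Matrix.mulVec_mulVec]
    simp only [Pi.sub_apply, Matrix.one_mulVec, Matrix.mulVec_diagonal]
    rfl
  -- kernel of B consists of constants
  have hkerB : ∀ x, B *ᵥ x = 0 → ∀ u w : Fin n, x u = x w := by
    intro x hx
    refine harmonic_const A hA hconn d (fun u => by rw [hd]) x ?_
    intro u
    have h0 := congrFun hx u
    rw [hBapp] at h0
    have hne := (hdpos u).ne'
    have hxu : x u = (d u)⁻¹ * ∑ w, A u w * x w := by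
      have : (0 : ℝ) = x u - (d u)⁻¹ * ∑ w, A u w * x w := h0.symm
      linarith
    rw [hxu]; field_simp
  -- L = D * B
  have hLx : ∀ w, (L *ᵥ xhat) w = d w * (B *ᵥ xhat) w := by
    intro w
    rw [hL, ← Matrix.mulVec_mulVec]
    simp [Matrix.mulVec_diagonal]
  -- followers give zero
  have hF : ∀ w, w ≠ s0 → w ≠ s1 → (B *ᵥ xhat) w = 0 := by
    intro w h0 h1
    have := hxF w h0 h1
    rw [hLx w] at this
    rcases mul_eq_zero.mp this with h' | h'
    · exact absurd h' (hdpos w).ne'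
    · exact h'
  -- π is in the left kernel of B
  have hpiB : pdist ⬝ᵥ (B *ᵥ xhat) = 0 := by
    rw [Matrix.dotProduct_mulVec, ← Matrix.mulVec_transpose]
    have hBT : Bᵀ = 1 - W := by
      rw [hB, Matrix.transpose_sub, Matrix.transpose_one, Matrix.transpose_transpose]
    rw [hBT, Matrix.sub_mulVec, Matrix.one_mulVec, hpstat, sub_self,
      zero_dotProduct]
  have hsum2 : pdist s0 * (B *ᵥ xhat) s0 + pdist s1 * (B *ᵥ xhat) s1 = 0 := by
    have h := hpiB
    rw [dotProduct] at h
    have hsub : ∑ w ∈ ({s0, s1} : Finset (Fin n)), pdist w * (B *ᵥ xhat) w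
        = ∑ w, pdist w * (B *ᵥ xhat) w := by
      refine Finset.sum_subset (Finset.subset_univ _) ?_
      intro w _ hw
      simp only [Finset.mem_insert, Finset.mem_singleton] at hw
      push_neg at hw
      rw [hF w hw.1 hw.2, mul_zero]
    have h2 := hsub.trans h
    rwa [Finset.sum_pair hs] at h2
  set β : ℝ := pdist s1 * (B *ᵥ xhat) s1 with hβ
  have hp0 := (hppos s0).ne'
  have hp1 := (hppos s1).ne'
  -- B xhat = β • Π⁻¹ b
  have hBform : B *ᵥ xhat = β • (fun w => (pdist w)⁻¹ * bvec s1 s0 w) := by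
    funext w
    rw [Pi.smul_apply, smul_eq_mul]
    rcases eq_or_ne w s1 with h1 | h1
    · rw [h1, bvec_apply_self (Ne.symm hs), hβ, mul_one]
      field_simp
    · rcases eq_or_ne w s0 with h0 | h0
      · rw [h0, bvec_apply_other (Ne.symm hs)]
        have h2 : pdist s0 * (B *ᵥ xhat) s0 = -β := by linarith [hsum2]
        field_simp
        linear_combination h2
      · rw [hF w h0 h1, bvec_apply_ne h1 h0]
        ring
  -- the common scalar computations
  have hdiagb : (Matrix.diagonal (fun v => (pdist v)⁻¹)) *ᵥ (bvec s1 s0)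
      = fun w => (pdist w)⁻¹ * bvec s1 s0 w := by
    funext w; simp [Matrix.mulVec_diagonal]
  have hRb : R *ᵥ (bvec s1 s0) = Bplus *ᵥ (fun w => (pdist w)⁻¹ * bvec s1 s0 w) := by
    rw [hR, ← Matrix.mulVec_mulVec, hdiagb]
  -- first representation
  have hrep1 : ∀ w, xhat w = β * (bvec w s0 ⬝ᵥ (R *ᵥ bvec s1 s0)) := by
    intro w
    have hp := proj_const B Bplus hBplus.1 hkerB xhat w s0
    have hPB : (Bplus * B) *ᵥ xhat = β • (R *ᵥ bvec s1 s0) := by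
      rw [← Matrix.mulVec_mulVec, hBform, Matrix.mulVec_smul, hRb]
    rw [hPB] at hp
    rw [bvec_dot]
    simp only [Pi.smul_apply, smul_eq_mul] at hp
    rw [hx0] at hp
    linarith [hp]
  -- second representation
  have hcalLx : calL *ᵥ xhat = β • bvec s1 s0 := by
    rw [hcalL, ← Matrix.mulVec_mulVec, hBform]
    funext w
    simp only [Matrix.mulVec_smul, Pi.smul_apply, smul_eq_mul, Matrix.mulVec_diagonal]
    field_simp [(hppos w).ne']
  have hkercalL : ∀ x, calL *ᵥ x = 0 → ∀ u w : Fin n, x u = x w := by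
    intro x hx
    refine hkerB x ?_
    funext w
    have h0 := congrFun hx w
    rw [hcalL, ← Matrix.mulVec_mulVec] at h0
    simp only [Matrix.mulVec_diagonal, Pi.zero_apply] at h0
    rcases mul_eq_zero.mp h0 with h' | h'
    · exact absurd h' (hppos w).ne'
    · exact h'
  have hrep2 : ∀ w, xhat w = β * (bvec w s0 ⬝ᵥ (calLplus *ᵥ bvec s1 s0)) := by
    intro w
    have hp := proj_const calL calLplus hcalLplus.1 hkercalL xhat w s0
    have hPB : (calLplus * calL) *ᵥ xhat = β • (calLplus *ᵥ bvec s1 s0) := by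
      rw [← Matrix.mulVec_mulVec, hcalLx, Matrix.mulVec_smul]
    rw [hPB] at hp
    rw [bvec_dot]
    simp only [Pi.smul_apply, smul_eq_mul] at hp
    rw [hx0] at hp
    linarith [hp]
  -- finish
  intro v
  constructor
  · have ht : β * (bvec s1 s0 ⬝ᵥ (R *ᵥ bvec s1 s0)) = 1 := by
      rw [← hrep1 s1, hx1]
    have htne : (bvec s1 s0 ⬝ᵥ (R *ᵥ bvec s1 s0)) ≠ 0 := by
      intro h; rw [h, mul_zero] at ht; exact one_ne_zero ht.symm
    rw [eq_div_iff htne, hrep1 v]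
    calc β * (bvec v s0 ⬝ᵥ (R *ᵥ bvec s1 s0)) * (bvec s1 s0 ⬝ᵥ (R *ᵥ bvec s1 s0))
        = (bvec v s0 ⬝ᵥ (R *ᵥ bvec s1 s0)) * (β * (bvec s1 s0 ⬝ᵥ (R *ᵥ bvec s1 s0))) := by
          ring
      _ = bvec v s0 ⬝ᵥ (R *ᵥ bvec s1 s0) := by rw [ht, mul_one]
  · have ht : β * (bvec s1 s0 ⬝ᵥ (calLplus *ᵥ bvec s1 s0)) = 1 := by
      rw [← hrep2 s1, hx1]
    have htne : (bvec s1 s0 ⬝ᵥ (calLplus *ᵥ bvec s1 s0)) ≠ 0 := by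
      intro h; rw [h, mul_zero] at ht; exact one_ne_zero ht.symm
    rw [eq_div_iff htne, hrep2 v]
    calc β * (bvec v s0 ⬝ᵥ (calLplus *ᵥ bvec s1 s0)) * (bvec s1 s0 ⬝ᵥ (calLplus *ᵥ bvec s1 s0))
        = (bvec v s0 ⬝ᵥ (calLplus *ᵥ bvec s1 s0)) * (β * (bvec s1 s0 ⬝ᵥ (calLplus *ᵥ bvec s1 s0))) := by
          ring
      _ = bvec v s0 ⬝ᵥ (calLplus *ᵥ bvec s1 s0) := by rw [ht, mul_one]
end

section
/- In the absolute leader system on a connected weighted undirected graph with single leaders S0 = {s0} and S1 = {s1} (s0 ≠ s1), the steady-state opinion of every vertex v satisfies x̂_v = (b_{v,s0}ᵀ L⁺ b_{s1,s0}) / (b_{s1,s0}ᵀ L⁺ b_{s1,s0}). -/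
open Matrix BigOperators

lemma ker_const {n : ℕ} (A : Matrix (Fin n) (Fin n) ℝ)
    (hA : ∀ u v, 0 ≤ A u v) (hAsym : Aᵀ = A)
    (hconn : ∀ u v : Fin n, Relation.ReflTransGen (fun a b => 0 < A a b) u v)
    (L : Matrix (Fin n) (Fin n) ℝ)
    (hL : L = Matrix.diagonal (fun u => ∑ v, A u v) - A)
    (x : Fin n → ℝ) (hx : L.mulVec x = 0) :
    ∀ u v, x u = x v := by
  have hsym : ∀ u v, A u v = A v u := fun u v => congrFun (congrFun hAsym v) u
  have hLrow : ∀ u, ∑ v, L u v * x v = (∑ w, A u w) * x u - ∑ v, A u v * x v := by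
    intro u
    rw [hL]
    simp [Matrix.sub_apply, Matrix.diagonal_apply, sub_mul, Finset.sum_sub_distrib,
      Finset.sum_ite_eq, Finset.sum_mul]
  have h1 : ∀ u, ∑ v, L u v * x v = 0 := by
    intro u
    have := congrFun hx u
    simpa [Matrix.mulVec, dotProduct] using this
  have h2 : ∑ u, ∑ v, A u v * (x u ^ 2 - x u * x v) = 0 := by
    apply Finset.sum_eq_zero
    intro u _
    have h0 := h1 u
    rw [hLrow u, sub_eq_zero] at h0
    have key : (∑ w, A u w) * x u * x u - (∑ v, A u v * x v) * x u
        = ∑ v, A u v * (x u ^ 2 - x u * x v) := by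
      rw [Finset.sum_mul, Finset.sum_mul, Finset.sum_mul, ← Finset.sum_sub_distrib]
      exact Finset.sum_congr rfl fun v _ => by ring
    rw [← key, h0]
    ring
  have hswap : ∑ u, ∑ v, A u v * (x v ^ 2 - x u * x v)
      = ∑ u, ∑ v, A u v * (x u ^ 2 - x u * x v) := by
    rw [Finset.sum_comm]
    apply Finset.sum_congr rfl
    intro u _
    apply Finset.sum_congr rfl
    intro v _
    rw [hsym v u]
    ring
  have hQ : ∑ u, ∑ v, A u v * (x u - x v) ^ 2 = 0 := by
    have he : ∀ u v : Fin n, A u v * (x u - x v) ^ 2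
        = A u v * (x u ^ 2 - x u * x v) + A u v * (x v ^ 2 - x u * x v) := by
      intro u v; ring
    simp_rw [he, Finset.sum_add_distrib]
    rw [hswap, h2, add_zero]
  have hzero : ∀ u v, A u v * (x u - x v) ^ 2 = 0 := by
    intro u v
    have houter := (Finset.sum_eq_zero_iff_of_nonneg
      (fun u _ => Finset.sum_nonneg fun v _ => mul_nonneg (hA u v) (sq_nonneg _))).mp
      hQ u (Finset.mem_univ u)
    exact (Finset.sum_eq_zero_iff_of_nonneg
      (fun v _ => mul_nonneg (hA u v) (sq_nonneg _))).mp houter v (Finset.mem_univ v)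
  have hstep : ∀ u v, 0 < A u v → x u = x v := by
    intro u v h
    have h2 : (x u - x v) ^ 2 = 0 := by
      rcases mul_eq_zero.mp (hzero u v) with h' | h'
      · exact absurd h' (ne_of_gt h)
      · exact h'
    have := sq_eq_zero_iff.mp h2
    linarith [this]
  intro u v
  induction hconn u v with
  | refl => rfl
  | tail h hrel ih => exact ih.trans (hstep _ _ hrel)
/-- in the absolute leader system on a connected weighted undirected graph
with single leaders `S0 = {s0}`, `S1 = {s1}`, the steady-state opinion of every vertex
`v` is `(b_{v,s0}ᵀ L⁺ b_{s1,s0}) / (b_{s1,s0}ᵀ L⁺ b_{s1,s0})`. -/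
theorem stmt1
    (n : ℕ) (hn : 2 ≤ n)
    (A : Matrix (Fin n) (Fin n) ℝ)
    (hA : ∀ u v, 0 ≤ A u v) (hAsym : Aᵀ = A)
    (hconn : ∀ u v : Fin n, Relation.ReflTransGen (fun a b => 0 < A a b) u v)
    (L : Matrix (Fin n) (Fin n) ℝ)
    (hL : L = Matrix.diagonal (fun u => ∑ v, A u v) - A)
    (Lplus : Matrix (Fin n) (Fin n) ℝ) (hLplus : Penrose L Lplus)
    (s0 s1 : Fin n) (hs : s0 ≠ s1)
    -- the steady-state opinion vector of the absolute leader system with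
    -- `S0 = {s0}` and `S1 = {s1}`:
    (xhat : Fin n → ℝ)
    (hx0 : xhat s0 = 0) (hx1 : xhat s1 = 1)
    (hxF : ∀ v, v ≠ s0 → v ≠ s1 → L.mulVec xhat v = 0)
    -- the follower-follower submatrix of the Laplacian is invertible:
    (hinv : IsUnit (Matrix.det
      (Matrix.of (fun i j : {v : Fin n // v ≠ s0 ∧ v ≠ s1} => L i.1 j.1)))) :
    ∀ v : Fin n,
      xhat v =
        (bvec v s0 ⬝ᵥ Lplus.mulVec (bvec s1 s0)) /
          (bvec s1 s0 ⬝ᵥ Lplus.mulVec (bvec s1 s0)) := by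
  have hsymA : ∀ u v, A u v = A v u := fun u v => congrFun (congrFun hAsym v) u
  -- column sums of L are zero
  have hcol : ∀ u, ∑ v, L v u = 0 := by
    intro u
    rw [hL]
    simp only [Matrix.sub_apply, Matrix.diagonal_apply, Finset.sum_sub_distrib]
    rw [Finset.sum_ite_eq' Finset.univ u (fun v => ∑ w, A v w)]
    simp only [Finset.mem_univ, if_true]
    rw [sub_eq_zero]
    exact Finset.sum_congr rfl fun v _ => hsymA u v
  -- the total of L *ᵥ xhat is zero
  have hsumy : ∑ v, L.mulVec xhat v = 0 := by
    simp only [Matrix.mulVec, dotProduct]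
    rw [Finset.sum_comm]
    apply Finset.sum_eq_zero
    intro u _
    rw [← Finset.sum_mul, hcol u, zero_mul]
  set c : ℝ := L.mulVec xhat s1 with hc
  -- values of bvec
  have hb0 : bvec s1 s0 s0 = -1 := by
    simp [bvec, Pi.single_apply, hs, hs.symm]
  have hb1 : bvec s1 s0 s1 = 1 := by
    simp [bvec, Pi.single_apply, hs, hs.symm]
  have hbo : ∀ v, v ≠ s0 → v ≠ s1 → bvec s1 s0 v = 0 := by
    intro v h0 h1
    simp [bvec, Pi.single_apply, Ne.symm h0, Ne.symm h1]
  -- y = c • b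
  have hs01 : L.mulVec xhat s0 + L.mulVec xhat s1 = 0 := by
    have hsub := Finset.sum_subset (Finset.subset_univ ({s0, s1} : Finset (Fin n)))
      (f := fun v => L.mulVec xhat v)
      (by
        intro v _ hv
        simp only [Finset.mem_insert, Finset.mem_singleton, not_or] at hv
        exact hxF v hv.1 hv.2)
    rw [Finset.sum_pair hs] at hsub
    exact hsub.trans hsumy
  have hy : L.mulVec xhat = c • bvec s1 s0 := by
    funext v
    by_cases h0 : v = s0
    · subst h0
      simp only [Pi.smul_apply, hb0, smul_eq_mul]
      linarith [hs01]
    · by_cases h1 : v = s1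
      · subst h1
        simp only [Pi.smul_apply, hb1, smul_eq_mul, mul_one]
        exact hc.symm
      · rw [hxF v h0 h1]
        simp [hbo v h0 h1]
  -- projection
  set p : Fin n → ℝ := Lplus.mulVec (L.mulVec xhat) with hp
  have hker : L.mulVec (xhat - p) = 0 := by
    rw [Matrix.mulVec_sub, hp, Matrix.mulVec_mulVec, Matrix.mulVec_mulVec, hLplus.1,
      sub_self]
  have hconst := ker_const A hA hAsym hconn L hL (xhat - p) hker
  -- dot products with bvec
  have hdot : ∀ (u : Fin n) (w : Fin n → ℝ), bvec u s0 ⬝ᵥ w = w u - w s0 := by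
    intro u w
    simp [bvec, sub_dotProduct, single_dotProduct]
  have hpval : ∀ u : Fin n, bvec u s0 ⬝ᵥ p = xhat u := by
    intro u
    rw [hdot]
    have := hconst u s0
    simp only [Pi.sub_apply] at this
    linarith [this, hx0]
  have hpc : ∀ u : Fin n, bvec u s0 ⬝ᵥ p
      = c * (bvec u s0 ⬝ᵥ Lplus.mulVec (bvec s1 s0)) := by
    intro u
    rw [hp, hy, Matrix.mulVec_smul, dotProduct_smul, smul_eq_mul]
  have hkey : ∀ u : Fin n, xhat u = c * (bvec u s0 ⬝ᵥ Lplus.mulVec (bvec s1 s0)) := by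
    intro u
    rw [← hpc, hpval]
  have hcD : c * (bvec s1 s0 ⬝ᵥ Lplus.mulVec (bvec s1 s0)) = 1 := by
    rw [← hkey s1, hx1]
  have hD : bvec s1 s0 ⬝ᵥ Lplus.mulVec (bvec s1 s0) ≠ 0 := by
    intro h
    rw [h, mul_zero] at hcD
    norm_num at hcD
  intro v
  rw [eq_div_iff hD]
  have hv := hkey v
  linear_combination (bvec s1 s0 ⬝ᵥ Lplus.mulVec (bvec s1 s0)) * hv
    + (bvec v s0 ⬝ᵥ Lplus.mulVec (bvec s1 s0)) * hcD
end

section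
/- In the absolute leader system on a strongly connected weighted directed graph with single leaders S0 = {s0} and S1 = {s1} (s0 ≠ s1), for every α ∈ [0,1] the deviation of the average opinion from α satisfies |μ({s1}) − α| = |(1−α)·D^G_{s1,s0} − α·D^G_{s0,s1}| / (D^G_{s0,s1} + D^G_{s1,s0}). -/
open Matrix BigOperators

/-- Minimum principle propagation: if `x ≥ m` everywhere and at every point where `x = m`
the weighted average equation holds, then `x = m` propagates along edges. -/
private lemma prop_min {n : ℕ} (A : Matrix (Fin n) (Fin n) ℝ) (hA : ∀ u v, 0 ≤ A u v)
    (x : Fin n → ℝ) (m : ℝ) (hm : ∀ v, m ≤ x v)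
    (hharm : ∀ a, x a = m → ∑ v, A a v * x v = (∑ v, A a v) * m)
    {u w : Fin n} (hr : Relation.ReflTransGen (fun a b => 0 < A a b) u w)
    (hu : x u = m) : x w = m := by
  induction hr with
  | refl => exact hu
  | @tail b c hab hbc ih =>
    have key : ∑ v, A b v * (x v - m) = 0 := by
      have h := hharm b ih
      have e : ∑ v, A b v * (x v - m) = ∑ v, A b v * x v - (∑ v, A b v) * m := by
        rw [Finset.sum_mul, ← Finset.sum_sub_distrib]
        exact Finset.sum_congr rfl fun v _ => by ring
      rw [e, h, sub_self]
    have hall := (Finset.sum_eq_zero_iff_of_nonneg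
      (fun v _ => mul_nonneg (hA b v) (sub_nonneg.2 (hm v)))).1 key c (Finset.mem_univ c)
    have := (mul_eq_zero.1 hall).resolve_left (ne_of_gt hbc)
    linarith

/-- If all column sums of `M` vanish then `∑ (M *ᵥ x) = 0`. -/
private lemma sum_mulVec_eq_zero {n : ℕ} (M : Matrix (Fin n) (Fin n) ℝ) (x : Fin n → ℝ)
    (h : ∀ u, ∑ v, M v u = 0) : ∑ v, (M *ᵥ x) v = 0 := by
  simp only [Matrix.mulVec, dotProduct]
  rw [Finset.sum_comm]
  refine Finset.sum_eq_zero fun u _ => ?_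
  rw [← Finset.sum_mul, h u, zero_mul]

/-- in the absolute leader system on a strongly connected weighted directed
graph with single leaders `S0 = {s0}`, `S1 = {s1}`, for every `α ∈ [0,1]`,
`|μ({s1}) − α| = |(1−α)·D_{s1,s0} − α·D_{s0,s1}| / (D_{s0,s1} + D_{s1,s0})`,
where `D_{u,v} = (𝓛⁺)_{v,v} − (𝓛⁺)_{v,u}` is the domination score. -/
theorem stmt2
    (n : ℕ) (hn : 2 ≤ n)
    (A : Matrix (Fin n) (Fin n) ℝ)
    (hA : ∀ u v, 0 ≤ A u v)
    (hconn : ∀ u v : Fin n, Relation.ReflTransGen (fun a b => 0 < A a b) u v)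
    (d : Fin n → ℝ) (hd : d = fun u => ∑ v, A u v) (hdpos : ∀ u, 0 < d u)
    (W : Matrix (Fin n) (Fin n) ℝ)
    (hW : W = Aᵀ * Matrix.diagonal (fun u => (d u)⁻¹))
    (pdist : Fin n → ℝ) (hppos : ∀ v, 0 < pdist v) (hpsum : ∑ v, pdist v = 1)
    (hpstat : W.mulVec pdist = pdist)
    (L : Matrix (Fin n) (Fin n) ℝ) (hL : L = Matrix.diagonal d * (1 - Wᵀ))
    (calL : Matrix (Fin n) (Fin n) ℝ)
    (hcalL : calL = Matrix.diagonal pdist * (1 - Wᵀ))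
    (calLplus : Matrix (Fin n) (Fin n) ℝ) (hcalLplus : Penrose calL calLplus)
    -- the domination score `D^G_{u,v} = (𝓛⁺)_{v,v} − (𝓛⁺)_{v,u}`:
    (DS : Fin n → Fin n → ℝ)
    (hDS : DS = fun u v => calLplus v v - calLplus v u)
    (s0 s1 : Fin n) (hs : s0 ≠ s1)
    -- the steady-state opinion vector of the absolute leader system with
    -- `S0 = {s0}` and `S1 = {s1}`:
    (xhat : Fin n → ℝ)
    (hx0 : xhat s0 = 0) (hx1 : xhat s1 = 1)
    (hxF : ∀ v, v ≠ s0 → v ≠ s1 → L.mulVec xhat v = 0)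
    -- the follower-follower submatrix of the Laplacian is invertible:
    (hinv : IsUnit (Matrix.det
      (Matrix.of (fun i j : {v : Fin n // v ≠ s0 ∧ v ≠ s1} => L i.1 j.1))))
    -- the average opinion `μ({s1})`:
    (μ : ℝ) (hμ : μ = (n : ℝ)⁻¹ * ∑ v, xhat v)
    (α : ℝ) (hα : 0 ≤ α ∧ α ≤ 1) :
    |μ - α| = |(1 - α) * DS s1 s0 - α * DS s0 s1| / (DS s0 s1 + DS s1 s0) := by
  obtain ⟨h1, h2, h3, h4⟩ := hcalLplus
  -- basic structure: Wᵀ = diag(d⁻¹) * A, L = diag d − A, calL = diag(p/d) * L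
  have hWT : Wᵀ = Matrix.diagonal (fun u => (d u)⁻¹) * A := by
    rw [hW, Matrix.transpose_mul, Matrix.diagonal_transpose, Matrix.transpose_transpose]
  have hdiag1 : Matrix.diagonal d * Matrix.diagonal (fun u => (d u)⁻¹) = 1 := by
    rw [Matrix.diagonal_mul_diagonal]
    have : (fun u => d u * (d u)⁻¹) = fun _ : Fin n => (1 : ℝ) :=
      funext fun u => mul_inv_cancel₀ (hdpos u).ne'
    rw [this, Matrix.diagonal_one]
  have hLDA : L = Matrix.diagonal d - A := by
    rw [hL, hWT, mul_sub, mul_one, ← Matrix.mul_assoc, hdiag1, one_mul]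
  set q : Fin n → ℝ := fun v => pdist v * (d v)⁻¹ with hq
  have hqpos : ∀ v, 0 < q v := fun v => mul_pos (hppos v) (inv_pos.2 (hdpos v))
  have hcalLq : calL = Matrix.diagonal q * L := by
    have hfun : (fun v => q v * d v) = pdist := funext fun v => by
      have hne := (hdpos v).ne'
      simp only [hq]
      field_simp
    rw [hcalL, hL, ← Matrix.mul_assoc, Matrix.diagonal_mul_diagonal, hfun]
  -- entrywise application of L
  have hLapp : ∀ (f : Fin n → ℝ) a, (L *ᵥ f) a = d a * f a - ∑ v, A a v * f v := by
    intro f a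
    rw [hLDA, Matrix.sub_mulVec]
    simp only [Pi.sub_apply, Matrix.mulVec_diagonal]
    simp [Matrix.mulVec, dotProduct]
  have hcalLapp : ∀ (f : Fin n → ℝ) a, (calL *ᵥ f) a = q a * ((L *ᵥ f) a) := by
    intro f a
    rw [hcalLq, ← Matrix.mulVec_mulVec, Matrix.mulVec_diagonal]
  -- row sums of L vanish
  have hLrow : L *ᵥ (fun _ => (1:ℝ)) = 0 := by
    funext v
    rw [hLapp]
    simp [hd]
  have hcalLrow : calL *ᵥ (fun _ => (1:ℝ)) = 0 := by
    funext v
    rw [hcalLapp, hLrow]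
    simp
  -- column sums of calL vanish (stationarity)
  have hcalLcol : ∀ u, ∑ v, calL v u = 0 := by
    intro u
    have he : ∀ v, calL v u = pdist v * ((if v = u then (1:ℝ) else 0) - W u v) := by
      intro v
      rw [hcalL, Matrix.diagonal_mul, Matrix.sub_apply, Matrix.transpose_apply,
        Matrix.one_apply]
    have hst := congrFun hpstat u
    simp only [Matrix.mulVec, dotProduct] at hst
    calc ∑ v, calL v u = ∑ v, (pdist v * (if v = u then (1:ℝ) else 0) - W u v * pdist v) := by
          refine Finset.sum_congr rfl fun v _ => ?_
          rw [he v]; ring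
      _ = (∑ v, pdist v * (if v = u then (1:ℝ) else 0)) - ∑ v, W u v * pdist v := by
          rw [Finset.sum_sub_distrib]
      _ = pdist u - pdist u := by rw [hst]; simp
      _ = 0 := sub_self _
  -- column sums of calLplus vanish
  have hvm : ∀ (M : Matrix (Fin n) (Fin n) ℝ) u,
      ((fun _ => (1:ℝ)) ᵥ* M) u = ∑ v, M v u := by
    intro M u; simp [Matrix.vecMul, dotProduct]
  have hvP1 : (fun _ => (1:ℝ)) ᵥ* (calLplus * calL) = 0 := by
    rw [← h4, Matrix.vecMul_transpose, ← Matrix.mulVec_mulVec, hcalLrow, Matrix.mulVec_zero]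
  have hcolP : ∀ u, ∑ v, calLplus v u = 0 := by
    intro u
    rw [← hvm]
    conv_lhs => rw [← h2]
    rw [← Matrix.vecMul_vecMul, hvP1, Matrix.zero_vecMul]
    rfl
  -- the vector y = calL x̂
  set y : Fin n → ℝ := calL *ᵥ xhat with hy
  have hyF : ∀ v, v ≠ s0 → v ≠ s1 → y v = 0 := by
    intro v h0 h1'
    rw [hy, hcalLapp, hxF v h0 h1', mul_zero]
  have hsumy : ∑ v, y v = 0 := sum_mulVec_eq_zero calL xhat hcalLcol
  set β : ℝ := y s0 with hβ
  have hys1 : y s1 = -β := by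
    have hsub : ({s0, s1} : Finset (Fin n)) ⊆ Finset.univ := Finset.subset_univ _
    have hz : ∀ v ∈ Finset.univ, v ∉ ({s0, s1} : Finset (Fin n)) → y v = 0 := by
      intro v _ hv
      simp only [Finset.mem_insert, Finset.mem_singleton, not_or] at hv
      exact hyF v hv.1 hv.2
    have := Finset.sum_subset hsub hz
    rw [Finset.sum_pair hs] at this
    rw [hsumy] at this
    linarith
  -- w = calLplus y, z = x̂ − w
  set w : Fin n → ℝ := calLplus *ᵥ y with hw
  have hwv : ∀ v, w v = β * (calLplus v s0 - calLplus v s1) := by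
    intro v
    have : w v = ∑ u, calLplus v u * y u := by
      simp [hw, Matrix.mulVec, dotProduct]
    rw [this]
    have hsub : ({s0, s1} : Finset (Fin n)) ⊆ Finset.univ := Finset.subset_univ _
    have hz : ∀ u ∈ Finset.univ, u ∉ ({s0, s1} : Finset (Fin n)) →
        calLplus v u * y u = 0 := by
      intro u _ hu
      simp only [Finset.mem_insert, Finset.mem_singleton, not_or] at hu
      rw [hyF u hu.1 hu.2, mul_zero]
    rw [← Finset.sum_subset hsub hz, Finset.sum_pair hs, hys1, ← hβ]
    ring
  have hsumw : ∑ v, w v = 0 := sum_mulVec_eq_zero calLplus y hcolP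
  set z : Fin n → ℝ := xhat - w with hzdef
  have hcalLz : calL *ᵥ z = 0 := by
    rw [hzdef, Matrix.mulVec_sub, hw, Matrix.mulVec_mulVec, hy, Matrix.mulVec_mulVec,
      h1, sub_self]
  have hLz : ∀ v, (L *ᵥ z) v = 0 := by
    intro v
    have := congrFun hcalLz v
    rw [hcalLapp] at this
    have hq0 : q v ≠ 0 := (hqpos v).ne'
    simpa [hq0] using this
  -- z is constant
  obtain ⟨u0, -, hu0⟩ := Finset.exists_min_image Finset.univ z ⟨s0, Finset.mem_univ s0⟩
  have hzc : ∀ v, z v = z u0 := by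
    intro v
    refine prop_min A hA z (z u0) (fun v' => hu0 v' (Finset.mem_univ v')) ?_ (hconn u0 v) rfl
    intro a ha
    have h5 := hLz a
    rw [hLapp] at h5
    simp only [hd] at h5
    rw [← ha]
    linarith
  set c : ℝ := z u0 with hc
  -- x̂ is nonnegative (minimum principle)
  have hxnn : ∀ v, 0 ≤ xhat v := by
    by_contra hcon
    push_neg at hcon
    obtain ⟨v0, hv0⟩ := hcon
    obtain ⟨u1, -, hu1⟩ := Finset.exists_min_image Finset.univ xhat ⟨s0, Finset.mem_univ s0⟩
    have hm1 : xhat u1 < 0 := lt_of_le_of_lt (hu1 v0 (Finset.mem_univ v0)) hv0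
    have hreach : xhat s0 = xhat u1 := by
      refine prop_min A hA xhat (xhat u1) (fun v' => hu1 v' (Finset.mem_univ v')) ?_
        (hconn u1 s0) rfl
      intro a ha
      have ha0 : a ≠ s0 := by intro h; rw [h, hx0] at ha; linarith
      have ha1 : a ≠ s1 := by intro h; rw [h, hx1] at ha; linarith
      have h5 := hxF a ha0 ha1
      rw [show L.mulVec xhat a = (L *ᵥ xhat) a from rfl, hLapp] at h5
      simp only [hd] at h5
      rw [← ha]
      linarith
    rw [hx0] at hreach
    linarith
  -- β ≤ 0
  have hβle : β ≤ 0 := by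
    have : β = q s0 * ((L *ᵥ xhat) s0) := by rw [hβ, hy, hcalLapp]
    rw [this, hLapp, hx0, mul_zero, zero_sub]
    rw [mul_neg, neg_nonpos]
    exact mul_nonneg (hqpos s0).le
      (Finset.sum_nonneg fun v _ => mul_nonneg (hA s0 v) (hxnn v))
  -- μ equals the constant c
  have hsumz : ∑ v, z v = (n : ℝ) * c := by
    calc ∑ v, z v = ∑ _v : Fin n, c := Finset.sum_congr rfl fun v _ => hzc v
      _ = (n : ℝ) * c := by simp [mul_comm]
  have hsumx : ∑ v, xhat v = (n : ℝ) * c := by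
    have : ∑ v, xhat v = ∑ v, z v + ∑ v, w v := by
      rw [← Finset.sum_add_distrib]
      exact Finset.sum_congr rfl fun v _ => by simp [hzdef]
    rw [this, hsumz, hsumw, add_zero]
  have hnne : (n : ℝ) ≠ 0 := by positivity
  have hμc : μ = c := by
    rw [hμ, hsumx, ← mul_assoc, inv_mul_cancel₀ hnne, one_mul]
  -- the two evaluation equations
  have hzs0 : z s0 = c := hzc s0
  have hzs1 : z s1 = c := hzc s1
  have heq0 : c + β * (calLplus s0 s0 - calLplus s0 s1) = 0 := by
    have : xhat s0 = z s0 + w s0 := by simp [hzdef]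
    rw [hx0, hzs0, hwv s0] at this
    linarith
  have heq1 : c + β * (calLplus s1 s0 - calLplus s1 s1) = 1 := by
    have : xhat s1 = z s1 + w s1 := by simp [hzdef]
    rw [hx1, hzs1, hwv s1] at this
    linarith
  set D01 : ℝ := DS s0 s1 with hD01
  set D10 : ℝ := DS s1 s0 with hD10
  have hD01e : D01 = calLplus s1 s1 - calLplus s1 s0 := by rw [hD01, hDS]
  have hD10e : D10 = calLplus s0 s0 - calLplus s0 s1 := by rw [hD10, hDS]
  have heq0' : c + β * D10 = 0 := by rw [hD10e]; exact heq0
  have heq1' : c - β * D01 = 1 := by rw [hD01e]; linear_combination heq1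
  have hbS : β * (D01 + D10) = -1 := by linear_combination heq0' - heq1'
  have hβne : β ≠ 0 := by intro h; rw [h, zero_mul] at hbS; norm_num at hbS
  have hβneg : β < 0 := lt_of_le_of_ne hβle hβne
  have hSpos : 0 < D01 + D10 := by
    by_contra hcon
    push_neg at hcon
    nlinarith [mul_nonneg (neg_nonneg.2 hβneg.le) (neg_nonneg.2 hcon), hbS]
  have hmuS : μ * (D01 + D10) = D10 := by
    rw [hμc]
    have hceq : c = -(β * D10) := by linarith
    calc c * (D01 + D10) = D10 * (-(β * (D01 + D10))) := by rw [hceq]; ring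
      _ = D10 := by rw [hbS]; ring
  have hkey : (1 - α) * D10 - α * D01 = (μ - α) * (D01 + D10) := by linear_combination -hmuS
  rw [hkey, abs_mul, abs_of_pos hSpos, mul_div_assoc, div_self hSpos.ne', mul_one]
end

section
/- In the absolute leader system on a connected weighted undirected graph with single leaders S0 = {s0} and S1 = {s1} (s0 ≠ s1), the deviation of the average opinion from 1/2 satisfies |μ({s1}) − 1/2| = |θ(s0)⁻¹ − θ(s1)⁻¹| / (2·R_{s0,s1}). -/
/-!
Off the two leaders the opinion vector is harmonic, so `L x̂ = c (e_{s1} - e_{s0})` with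
`c = (L x̂)_{s1}`. On a connected graph the kernel of `L` is the constants, hence `x̂` agrees with
`c L⁺ (e_{s1} - e_{s0})` up to an additive constant; in terms of resistances,
`2 x̂_v = c (R_{s0,s1} + R_{s0,v} - R_{s1,v})`. Evaluating at `s1` gives `c R_{s0,s1} = 1`, and
averaging over `v` turns the two resistance sums into `n θ(s0)⁻¹` and `n θ(s1)⁻¹`. Finally
`R_{s0,s1} > 0`, since `L⁺` is positive semidefinite.
-/

open Matrix BigOperators

open Finset

namespace Penrose

variable {m : Type*} [Fintype m] {M P Q : Matrix m m ℝ}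

theorem unique (hP : Penrose M P) (hQ : Penrose M Q) : P = Q := by
  obtain ⟨hP1, hP2, hP3, hP4⟩ := hP
  obtain ⟨hQ1, hQ2, hQ3, hQ4⟩ := hQ
  have hMt : Mᵀ = Mᵀ * Pᵀ * Mᵀ := by
    conv_lhs => rw [← hP1]
    simp only [transpose_mul, Matrix.mul_assoc]
  have hMQ : M * Q = M * P :=
    calc M * Q = Qᵀ * Mᵀ := by rw [← hQ3, transpose_mul]
    _ = Qᵀ * Mᵀ * (Pᵀ * Mᵀ) := by rw [Matrix.mul_assoc, ← Matrix.mul_assoc Mᵀ, ← hMt]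
    _ = M * Q * M * P := by
      rw [← transpose_mul, ← transpose_mul, hQ3, hP3]; simp only [Matrix.mul_assoc]
    _ = M * P := by rw [hQ1]
  have hQM : Q * M = P * M :=
    calc Q * M = Mᵀ * Qᵀ := by rw [← hQ4, transpose_mul]
    _ = Mᵀ * Pᵀ * (Mᵀ * Qᵀ) := by rw [← Matrix.mul_assoc, ← hMt]
    _ = P * (M * Q * M) := by
      rw [← transpose_mul, ← transpose_mul, hQ4, hP4]; simp only [Matrix.mul_assoc]
    _ = P * M := by rw [hQ1]
  calc P = P * (M * P) := by rw [← Matrix.mul_assoc, hP2]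
  _ = Q * M * Q := by rw [← hMQ, ← Matrix.mul_assoc, hQM]
  _ = Q := hQ2

theorem transpose (hM : Mᵀ = M) (hP : Penrose M P) : Penrose M Pᵀ := by
  obtain ⟨hP1, hP2, hP3, hP4⟩ := hP
  refine ⟨?_, ?_, ?_, ?_⟩
  · simpa only [transpose_mul, hM, Matrix.mul_assoc] using congrArg (·ᵀ) hP1
  · simpa only [transpose_mul, hM, Matrix.mul_assoc] using congrArg (·ᵀ) hP2
  · rw [transpose_mul, transpose_transpose, hM, ← hP4, transpose_mul, hM]
  · rw [transpose_mul, transpose_transpose, hM, ← hP3, transpose_mul, hM]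

theorem transpose_eq (hM : Mᵀ = M) (hP : Penrose M P) : Pᵀ = P :=
  (hP.transpose hM).unique hP

theorem posSemidef (hM : M.PosSemidef) (hP : Penrose M P) : P.PosSemidef := by
  have hMt : Mᵀ = M := by simpa using hM.isHermitian.eq
  have h := hM.conjTranspose_mul_mul_same P
  rwa [conjTranspose_eq_transpose_of_trivial, hP.transpose_eq hMt, hP.2.1] at h

theorem mulVec_mulVec_mulVec (hP : Penrose M P) (x : m → ℝ) :
    M *ᵥ (P *ᵥ (M *ᵥ x)) = M *ᵥ x := by
  rw [mulVec_mulVec, mulVec_mulVec, hP.1]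

end Penrose

section Laplacian

variable {V : Type*} [Fintype V] [DecidableEq V] {A : Matrix V V ℝ}

def weightedLaplacian (A : Matrix V V ℝ) : Matrix V V ℝ :=
  diagonal (fun u => ∑ v, A u v) - A

theorem weightedLaplacian_transpose (hA : Aᵀ = A) :
    (weightedLaplacian A)ᵀ = weightedLaplacian A := by
  rw [weightedLaplacian, transpose_sub, diagonal_transpose, hA]

theorem weightedLaplacian_mulVec_apply (z : V → ℝ) (u : V) :
    (weightedLaplacian A *ᵥ z) u = (∑ v, A u v) * z u - ∑ v, A u v * z v := by
  simp [weightedLaplacian, mulVec, dotProduct, sub_mul, diagonal_apply, sum_sub_distrib]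

theorem weightedLaplacian_mulVec_one : weightedLaplacian A *ᵥ 1 = 0 := by
  ext u
  simp [weightedLaplacian_mulVec_apply]

theorem sum_weightedLaplacian_mulVec (hA : Aᵀ = A) (x : V → ℝ) :
    ∑ v, (weightedLaplacian A *ᵥ x) v = 0 := by
  have h := congrArg (· ⬝ᵥ x) (weightedLaplacian_mulVec_one (A := A))
  rw [← vecMul_transpose, weightedLaplacian_transpose hA] at h
  simpa [← dotProduct_mulVec, one_dotProduct] using h

theorem two_mul_dotProduct_weightedLaplacian_mulVec (hA : Aᵀ = A) (z : V → ℝ) :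
    2 * (z ⬝ᵥ weightedLaplacian A *ᵥ z) = ∑ u, ∑ v, A u v * (z u - z v) ^ 2 := by
  have hsymm : ∀ u v, A v u = A u v := fun u v => by rw [← transpose_apply A u v, hA]
  have hquad :
      z ⬝ᵥ weightedLaplacian A *ᵥ z = ∑ u, ∑ v, A u v * (z u ^ 2 - z u * z v) := by
    simp only [dotProduct, weightedLaplacian_mulVec_apply, mul_sub, Finset.sum_mul,
      Finset.mul_sum, ← Finset.sum_sub_distrib]
    exact Finset.sum_congr rfl fun u _ => Finset.sum_congr rfl fun v _ => by ring
  have hswap : ∑ u, ∑ v, A u v * (z v ^ 2 - z u * z v)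
      = ∑ u, ∑ v, A u v * (z u ^ 2 - z u * z v) := by
    rw [Finset.sum_comm]
    exact Finset.sum_congr rfl fun u _ => Finset.sum_congr rfl fun v _ => by rw [hsymm]; ring
  rw [hquad, two_mul]
  nth_rw 2 [← hswap]
  rw [← Finset.sum_add_distrib]
  exact Finset.sum_congr rfl fun u _ => by
    rw [← Finset.sum_add_distrib]; exact Finset.sum_congr rfl fun v _ => by ring

theorem posSemidef_weightedLaplacian (hA0 : ∀ u v, 0 ≤ A u v) (hA : Aᵀ = A) :
    (weightedLaplacian A).PosSemidef := by
  refine .of_dotProduct_mulVec_nonneg ?_ fun z => ?_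
  · rw [IsHermitian, conjTranspose_eq_transpose_of_trivial, weightedLaplacian_transpose hA]
  · have h := two_mul_dotProduct_weightedLaplacian_mulVec hA z
    have : 0 ≤ ∑ u, ∑ v, A u v * (z u - z v) ^ 2 :=
      sum_nonneg fun u _ => sum_nonneg fun v _ => mul_nonneg (hA0 u v) (sq_nonneg _)
    rw [star_trivial]
    linarith

theorem eq_of_weightedLaplacian_mulVec_eq_zero (hA0 : ∀ u v, 0 ≤ A u v) (hA : Aᵀ = A)
    (hconn : ∀ u v, Relation.ReflTransGen (fun a b => 0 < A a b) u v) {z : V → ℝ}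
    (hz : weightedLaplacian A *ᵥ z = 0) (u v : V) : z u = z v := by
  have hnonneg : ∀ u v, 0 ≤ A u v * (z u - z v) ^ 2 := fun u v =>
    mul_nonneg (hA0 u v) (sq_nonneg _)
  have hsum : ∑ u, ∑ v, A u v * (z u - z v) ^ 2 = 0 := by
    rw [← two_mul_dotProduct_weightedLaplacian_mulVec hA z, hz, dotProduct_zero, mul_zero]
  have hedge : ∀ a b, 0 < A a b → z a = z b := by
    intro a b hab
    have hrow := (sum_eq_zero_iff_of_nonneg fun u _ => sum_nonneg fun v _ => hnonneg u v).mp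
      hsum a (mem_univ a)
    have hterm := (sum_eq_zero_iff_of_nonneg fun v _ => hnonneg a v).mp hrow b (mem_univ b)
    simpa [hab.ne', sub_eq_zero] using hterm
  induction hconn u v with
  | refl => rfl
  | tail _ hbc ih => exact ih.trans (hedge _ _ hbc)

end Laplacian

section Resistance

variable {V : Type*}

def effectiveResistance (P : Matrix V V ℝ) (u v : V) : ℝ :=
  P u u - 2 * P u v + P v v

theorem effectiveResistance_self (P : Matrix V V ℝ) (u : V) : effectiveResistance P u u = 0 := by
  rw [effectiveResistance]; ring

theorem effectiveResistance_nonneg [Fintype V] [DecidableEq V] {P : Matrix V V ℝ}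
    (hP : P.PosSemidef) (u v : V) :
    0 ≤ effectiveResistance P u v := by
  have hsymm : P v u = P u v := by simpa using hP.isHermitian.apply u v
  have h := hP.dotProduct_mulVec_nonneg (Pi.single u 1 - Pi.single v 1)
  simp only [star_trivial, mulVec_sub, mulVec_single_one, dotProduct_sub, sub_dotProduct,
    single_dotProduct, col_apply, one_mul, hsymm] at h
  rw [effectiveResistance]
  linarith

end Resistance

section Leaders

variable {V : Type*} [Fintype V] [DecidableEq V]

theorem eq_smul_single_sub_single {R : Type*} [Ring R] {b : V → R} {s0 s1 : V} (hs : s0 ≠ s1)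
    (hsum : ∑ v, b v = 0) (hsupp : ∀ v, v ≠ s0 → v ≠ s1 → b v = 0) :
    b = b s1 • (Pi.single s1 1 - Pi.single s0 1) := by
  have hs0 : b s0 = -b s1 := by
    rw [← sum_subset (subset_univ {s0, s1}) fun v _ hv => ?_, sum_pair hs] at hsum
    · exact eq_neg_of_add_eq_zero_left hsum
    · simp only [mem_insert, mem_singleton, not_or] at hv
      exact hsupp v hv.1 hv.2
  ext v
  by_cases h1 : v = s1
  · subst h1; simp [hs.symm]
  by_cases h0 : v = s0
  · subst h0; simp [hs, hs0]
  · simp [h0, h1, hsupp v h0 h1]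

theorem two_mul_eq_of_harmonic_off_pair {A P : Matrix V V ℝ} (hA0 : ∀ u v, 0 ≤ A u v)
    (hA : Aᵀ = A) (hconn : ∀ u v, Relation.ReflTransGen (fun a b => 0 < A a b) u v)
    (hP : Penrose (weightedLaplacian A) P) {s0 s1 : V} (hs : s0 ≠ s1) {x : V → ℝ}
    (hx0 : x s0 = 0) (hxF : ∀ v, v ≠ s0 → v ≠ s1 → (weightedLaplacian A *ᵥ x) v = 0)
    (v : V) :
    2 * x v = (weightedLaplacian A *ᵥ x) s1 *
      (effectiveResistance P s0 s1 + effectiveResistance P s0 v - effectiveResistance P s1 v) := by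
  set L := weightedLaplacian A
  set c := (L *ᵥ x) s1
  have hsymm : ∀ u w, P w u = P u w := fun u w => by
    rw [← transpose_apply P u w, hP.transpose_eq (weightedLaplacian_transpose hA)]
  have hLx : L *ᵥ x = c • (Pi.single s1 1 - Pi.single s0 1) :=
    eq_smul_single_sub_single hs (sum_weightedLaplacian_mulVec hA x) hxF
  have hPLx : ∀ w, (P *ᵥ (L *ᵥ x)) w = c * (P w s1 - P w s0) := fun w => by
    simp [hLx, mulVec_smul, mulVec_sub]
  have hconst : x v - (P *ᵥ (L *ᵥ x)) v = x s0 - (P *ᵥ (L *ᵥ x)) s0 :=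
    eq_of_weightedLaplacian_mulVec_eq_zero hA0 hA hconn (z := x - P *ᵥ (L *ᵥ x))
      (by rw [mulVec_sub, hP.mulVec_mulVec_mulVec, sub_self]) v s0
  rw [hPLx, hPLx, hx0] at hconst
  rw [effectiveResistance, effectiveResistance, effectiveResistance, hsymm v s0, hsymm v s1]
  linear_combination 2 * hconst

end Leaders

theorem stmt4_general
    (n : ℕ)
    (A : Matrix (Fin n) (Fin n) ℝ)
    (hA : ∀ u v, 0 ≤ A u v) (hAsym : Aᵀ = A)
    (hconn : ∀ u v : Fin n, Relation.ReflTransGen (fun a b => 0 < A a b) u v)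
    (L : Matrix (Fin n) (Fin n) ℝ)
    (hL : L = Matrix.diagonal (fun u => ∑ v, A u v) - A)
    (Lplus : Matrix (Fin n) (Fin n) ℝ) (hLplus : Penrose L Lplus)
    -- effective resistance `R_{u,v} = (L⁺)_{u,u} − 2(L⁺)_{u,v} + (L⁺)_{v,v}`:
    (Reff : Fin n → Fin n → ℝ)
    (hReff : Reff = fun u v => Lplus u u - 2 * Lplus u v + Lplus v v)
    -- information centrality `θ(u) = n / Σ_v R_{u,v}`:
    (θ : Fin n → ℝ) (hθ : θ = fun u => (n : ℝ) / ∑ v, Reff u v)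
    (s0 s1 : Fin n) (hs : s0 ≠ s1)
    -- the steady-state opinion vector of the absolute leader system with
    -- `S0 = {s0}` and `S1 = {s1}`:
    (xhat : Fin n → ℝ)
    (hx0 : xhat s0 = 0) (hx1 : xhat s1 = 1)
    (hxF : ∀ v, v ≠ s0 → v ≠ s1 → L.mulVec xhat v = 0)
    -- the average opinion `μ({s1})`:
    (μ : ℝ) (hμ : μ = (n : ℝ)⁻¹ * ∑ v, xhat v) :
    |μ - 1 / 2| = |(θ s0)⁻¹ - (θ s1)⁻¹| / (2 * Reff s0 s1) := by
  obtain rfl : L = weightedLaplacian A := hL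
  obtain rfl : Reff = effectiveResistance Lplus := hReff
  subst hθ hμ
  have hpot := two_mul_eq_of_harmonic_off_pair hA hAsym hconn hLplus hs hx0 hxF
  set R := effectiveResistance Lplus s0 s1
  set c := (weightedLaplacian A *ᵥ xhat) s1
  set ρ0 := ∑ v, effectiveResistance Lplus s0 v
  set ρ1 := ∑ v, effectiveResistance Lplus s1 v
  have hcR : c * R = 1 := by
    have h := hpot s1
    rw [hx1, effectiveResistance_self] at h
    linarith
  have hRpos : 0 < R :=
    (effectiveResistance_nonneg (hLplus.posSemidef (posSemidef_weightedLaplacian hA hAsym))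
      s0 s1).lt_of_ne (right_ne_zero_of_mul_eq_one hcR).symm
  have hn : (n : ℝ) ≠ 0 := by have := s0.pos; positivity
  have hsum : 2 * ∑ v, xhat v = c * (n * R + ρ0 - ρ1) := by
    rw [mul_sum, sum_congr rfl fun v _ => hpot v, ← mul_sum]
    simp only [sum_add_distrib, sum_sub_distrib, sum_const, card_univ, Fintype.card_fin,
      nsmul_eq_mul, ρ0, ρ1]
  have hmean : (n : ℝ)⁻¹ * ∑ v, xhat v - 1 / 2 = ((n / ρ0)⁻¹ - (n / ρ1)⁻¹) / (2 * R) := by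
    rw [inv_div, inv_div]
    field_simp
    linear_combination R * hsum + (n * R + ρ0 - ρ1) * hcR
  rw [hmean, abs_div, abs_of_pos (mul_pos two_pos hRpos)]

/-- in the absolute leader system on a connected weighted undirected graph
with single leaders `s0 ≠ s1`, the deviation of the average opinion from `1/2` is
`|μ({s1}) − 1/2| = |θ(s0)⁻¹ − θ(s1)⁻¹| / (2 R_{s0,s1})`,
where `R` is the effective resistance and `θ` the information centrality. -/
theorem stmt4
    (n : ℕ) (hn : 2 ≤ n)
    (A : Matrix (Fin n) (Fin n) ℝ)
    (hA : ∀ u v, 0 ≤ A u v) (hAsym : Aᵀ = A)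
    (hconn : ∀ u v : Fin n, Relation.ReflTransGen (fun a b => 0 < A a b) u v)
    (L : Matrix (Fin n) (Fin n) ℝ)
    (hL : L = Matrix.diagonal (fun u => ∑ v, A u v) - A)
    (Lplus : Matrix (Fin n) (Fin n) ℝ) (hLplus : Penrose L Lplus)
    -- effective resistance `R_{u,v} = (L⁺)_{u,u} − 2(L⁺)_{u,v} + (L⁺)_{v,v}`:
    (Reff : Fin n → Fin n → ℝ)
    (hReff : Reff = fun u v => Lplus u u - 2 * Lplus u v + Lplus v v)
    -- information centrality `θ(u) = n / Σ_v R_{u,v}`: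
    (θ : Fin n → ℝ) (hθ : θ = fun u => (n : ℝ) / ∑ v, Reff u v)
    (s0 s1 : Fin n) (hs : s0 ≠ s1)
    -- the steady-state opinion vector of the absolute leader system with
    -- `S0 = {s0}` and `S1 = {s1}`:
    (xhat : Fin n → ℝ)
    (hx0 : xhat s0 = 0) (hx1 : xhat s1 = 1)
    (hxF : ∀ v, v ≠ s0 → v ≠ s1 → L.mulVec xhat v = 0)
    -- the follower-follower submatrix of the Laplacian is invertible:
    (hinv : IsUnit (Matrix.det
      (Matrix.of (fun i j : {v : Fin n // v ≠ s0 ∧ v ≠ s1} => L i.1 j.1))))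
    -- the average opinion `μ({s1})`:
    (μ : ℝ) (hμ : μ = (n : ℝ)⁻¹ * ∑ v, xhat v) :
    |μ - 1 / 2| = |(θ s0)⁻¹ - (θ s1)⁻¹| / (2 * Reff s0 s1) :=
  stmt4_general n A hA hAsym hconn L hL Lplus hLplus Reff hReff θ hθ s0 s1 hs xhat hx0 hx1 hxF μ hμ
end

section
/- In the influenced leader system on a connected weighted undirected graph with single leaders S0 = {s0} and S1 = {s1} (s0 ≠ s1) and stubbornness values κ0, κ1 > 0, the deviation of the average opinion from 1/2 satisfies |μ({s1}) − 1/2| = |θ(s0)⁻¹ + 1/κ0 − θ(s1)⁻¹ − 1/κ1| / (2·(R_{s0,s1} + 1/κ0 + 1/κ1)). -/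
open Matrix BigOperators

set_option maxHeartbeats 1600000

theorem penrose_unique' {m : Type*} [Fintype m] (M X Y : Matrix m m ℝ)
    (hX : M * X * M = M ∧ X * M * X = X ∧ (M * X)ᵀ = M * X ∧ (X * M)ᵀ = X * M)
    (hY : M * Y * M = M ∧ Y * M * Y = Y ∧ (M * Y)ᵀ = M * Y ∧ (Y * M)ᵀ = Y * M) : X = Y := by
  obtain ⟨h1, h2, h3, h4⟩ := hX
  obtain ⟨g1, g2, g3, g4⟩ := hY
  have hMXY : M * X = M * Y := by
    calc M * X = (M * Y * M) * X := by rw [g1]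
    _ = (M * Y) * (M * X) := by rw [Matrix.mul_assoc]
    _ = (M * Y)ᵀ * (M * X)ᵀ := by rw [g3, h3]
    _ = Yᵀ * (Mᵀ * Xᵀ * Mᵀ) := by simp only [Matrix.transpose_mul, Matrix.mul_assoc]
    _ = Yᵀ * (M * X * M)ᵀ := by simp only [Matrix.transpose_mul, Matrix.mul_assoc]
    _ = Yᵀ * Mᵀ := by rw [h1]
    _ = (M * Y)ᵀ := by rw [Matrix.transpose_mul]
    _ = M * Y := g3
  have hXMY : X * M = Y * M := by
    calc X * M = X * (M * Y * M) := by rw [g1]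
    _ = (X * M) * (Y * M) := by simp only [Matrix.mul_assoc]
    _ = (X * M)ᵀ * (Y * M)ᵀ := by rw [h4, g4]
    _ = (Mᵀ * Xᵀ * Mᵀ) * Yᵀ := by simp only [Matrix.transpose_mul, Matrix.mul_assoc]
    _ = (M * X * M)ᵀ * Yᵀ := by simp only [Matrix.transpose_mul, Matrix.mul_assoc]
    _ = Mᵀ * Yᵀ := by rw [h1]
    _ = (Y * M)ᵀ := by rw [Matrix.transpose_mul]
    _ = Y * M := g4
  calc X = X * M * X := h2.symm
  _ = X * M * Y := by rw [Matrix.mul_assoc, hMXY, ← Matrix.mul_assoc]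
  _ = Y * M * Y := by rw [hXMY]
  _ = Y := g2

theorem quad_eq' {n : ℕ} (A : Matrix (Fin n) (Fin n) ℝ) (hAsym : Aᵀ = A) (x : Fin n → ℝ) :
    x ⬝ᵥ (Matrix.diagonal (fun u => ∑ v, A u v) - A).mulVec x
      = (1/2) * ∑ u, ∑ v, A u v * (x u - x v)^2 := by
  have hswap : (∑ u, ∑ v, A u v * (x v)^2) = ∑ u, ∑ v, A u v * (x u)^2 := by
    rw [Finset.sum_comm]
    refine Finset.sum_congr rfl fun u _ => Finset.sum_congr rfl fun v _ => ?_
    have h : A v u = A u v := congrFun (congrFun hAsym u) v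
    rw [h]
  have h1 : x ⬝ᵥ (Matrix.diagonal (fun u => ∑ v, A u v)).mulVec x
      = ∑ u, ∑ v, A u v * (x u)^2 := by
    refine Finset.sum_congr rfl fun u _ => ?_
    rw [Matrix.mulVec_diagonal, Finset.sum_mul, Finset.mul_sum]
    exact Finset.sum_congr rfl fun v _ => by ring
  have h2 : x ⬝ᵥ A.mulVec x = ∑ u, ∑ v, A u v * (x u * x v) := by
    refine Finset.sum_congr rfl fun u _ => ?_
    rw [Matrix.mulVec, dotProduct, Finset.mul_sum]
    exact Finset.sum_congr rfl fun v _ => by ring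
  have h3 : ∑ u, ∑ v, A u v * (x u - x v)^2
      = (∑ u, ∑ v, A u v * (x u)^2) + (∑ u, ∑ v, A u v * (x v)^2)
        - 2 * ∑ u, ∑ v, A u v * (x u * x v) := by
    rw [← Finset.sum_add_distrib, Finset.mul_sum, ← Finset.sum_sub_distrib]
    refine Finset.sum_congr rfl fun u _ => ?_
    rw [← Finset.sum_add_distrib, Finset.mul_sum, ← Finset.sum_sub_distrib]
    exact Finset.sum_congr rfl fun v _ => by ring
  rw [Matrix.sub_mulVec, dotProduct_sub, h1, h2, h3, hswap]
  ring

theorem lap_ker' {n : ℕ} (A : Matrix (Fin n) (Fin n) ℝ) (hA : ∀ u v, 0 ≤ A u v)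
    (hAsym : Aᵀ = A)
    (hconn : ∀ u v : Fin n, Relation.ReflTransGen (fun a b => 0 < A a b) u v)
    (x : Fin n → ℝ)
    (hx : (Matrix.diagonal (fun u => ∑ v, A u v) - A).mulVec x = 0) :
    ∀ u v, x u = x v := by
  have hq : (1/2) * ∑ u, ∑ v, A u v * (x u - x v)^2 = 0 := by
    rw [← quad_eq' A hAsym x, hx, dotProduct_zero]
  have hsum : ∑ u, ∑ v, A u v * (x u - x v)^2 = 0 := by linarith
  have hterm : ∀ u v, A u v * (x u - x v)^2 = 0 := by
    intro u v
    have h1 : ∀ u ∈ Finset.univ, (0:ℝ) ≤ ∑ v, A u v * (x u - x v)^2 := fun u _ =>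
      Finset.sum_nonneg fun v _ => mul_nonneg (hA u v) (sq_nonneg _)
    have h2 := (Finset.sum_eq_zero_iff_of_nonneg h1).mp hsum u (Finset.mem_univ u)
    have h3 : ∀ v ∈ Finset.univ, (0:ℝ) ≤ A u v * (x u - x v)^2 := fun v _ =>
      mul_nonneg (hA u v) (sq_nonneg _)
    exact (Finset.sum_eq_zero_iff_of_nonneg h3).mp h2 v (Finset.mem_univ v)
  have hstep : ∀ a b, 0 < A a b → x a = x b := by
    intro a b hab
    have h2 : (x a - x b)^2 = 0 := by
      rcases mul_eq_zero.mp (hterm a b) with h | h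
      · exact absurd h (ne_of_gt hab)
      · exact h
    have h4 := pow_eq_zero_iff (n := 2) (by norm_num) |>.mp h2
    linarith [sub_eq_zero.mp h4]
  intro u v
  induction hconn u v with
  | refl => rfl
  | tail _ hab ih => exact ih.trans (hstep _ _ hab)

/-- in the influenced leader system on a connected weighted undirected
graph with single leaders `s0 ≠ s1` and stubbornness `κ0, κ1 > 0`, the deviation of the
average opinion from `1/2` is
`|μ({s1}) − 1/2| = |θ(s0)⁻¹ + 1/κ0 − θ(s1)⁻¹ − 1/κ1| / (2(R_{s0,s1} + 1/κ0 + 1/κ1))`. -/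
theorem stmt5
    (n : ℕ) (hn : 2 ≤ n)
    (A : Matrix (Fin n) (Fin n) ℝ)
    (hA : ∀ u v, 0 ≤ A u v) (hAsym : Aᵀ = A)
    (hconn : ∀ u v : Fin n, Relation.ReflTransGen (fun a b => 0 < A a b) u v)
    (L : Matrix (Fin n) (Fin n) ℝ)
    (hL : L = Matrix.diagonal (fun u => ∑ v, A u v) - A)
    (Lplus : Matrix (Fin n) (Fin n) ℝ) (hLplus : Penrose L Lplus)
    -- effective resistance `R_{u,v} = (L⁺)_{u,u} − 2(L⁺)_{u,v} + (L⁺)_{v,v}`: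
    (Reff : Fin n → Fin n → ℝ)
    (hReff : Reff = fun u v => Lplus u u - 2 * Lplus u v + Lplus v v)
    -- information centrality `θ(u) = n / Σ_v R_{u,v}`:
    (θ : Fin n → ℝ) (hθ : θ = fun u => (n : ℝ) / ∑ v, Reff u v)
    (s0 s1 : Fin n) (hs : s0 ≠ s1)
    (κ0 κ1 : ℝ) (hκ0 : 0 < κ0) (hκ1 : 0 < κ1)
    -- the influenced leader system matrix `L + κ0 E^{s0} + κ1 E^{s1}` is invertible:
    (hinv : IsUnit (L + κ0 • Matrix.diagonal (Pi.single s0 (1 : ℝ))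
        + κ1 • Matrix.diagonal (Pi.single s1 (1 : ℝ))).det)
    -- the steady-state opinion vector `x̂ = (L + κ0 E^{s0} + κ1 E^{s1})⁻¹ (κ1 e_{s1})`:
    (xhat : Fin n → ℝ)
    (hx : xhat = (L + κ0 • Matrix.diagonal (Pi.single s0 (1 : ℝ))
        + κ1 • Matrix.diagonal (Pi.single s1 (1 : ℝ)))⁻¹.mulVec
          (κ1 • (Pi.single s1 1 : Fin n → ℝ)))
    -- the average opinion `μ({s1})`:
    (μ : ℝ) (hμ : μ = (n : ℝ)⁻¹ * ∑ v, xhat v) :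
    |μ - 1 / 2| =
      |(θ s0)⁻¹ + 1 / κ0 - (θ s1)⁻¹ - 1 / κ1| /
        (2 * (Reff s0 s1 + 1 / κ0 + 1 / κ1)) := by
  have hn0 : (n:ℝ) ≠ 0 := Nat.cast_ne_zero.mpr (by omega)
  have hκ0' : κ0 ≠ 0 := ne_of_gt hκ0
  have hκ1' : κ1 ≠ 0 := ne_of_gt hκ1
  have hLsym : Lᵀ = L := by
    rw [hL, Matrix.transpose_sub, Matrix.diagonal_transpose, hAsym]
  obtain ⟨hp1, hp2, hp3, hp4⟩ := hLplus
  have hPsym : Lplusᵀ = Lplus := by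
    refine penrose_unique' L Lplusᵀ Lplus ⟨?_, ?_, ?_, ?_⟩ ⟨hp1, hp2, hp3, hp4⟩
    · have h := congrArg Matrix.transpose hp1
      simpa [Matrix.transpose_mul, hLsym, Matrix.mul_assoc] using h
    · have h := congrArg Matrix.transpose hp2
      simpa [Matrix.transpose_mul, hLsym, Matrix.mul_assoc] using h
    · calc (L * Lplusᵀ)ᵀ = Lplus * Lᵀ := by
            rw [Matrix.transpose_mul, Matrix.transpose_transpose]
      _ = Lplus * L := by rw [hLsym]
      _ = (Lplus * L)ᵀ := hp4.symm
      _ = Lᵀ * Lplusᵀ := by rw [Matrix.transpose_mul]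
      _ = L * Lplusᵀ := by rw [hLsym]
    · calc (Lplusᵀ * L)ᵀ = Lᵀ * Lplus := by
            rw [Matrix.transpose_mul, Matrix.transpose_transpose]
      _ = L * Lplus := by rw [hLsym]
      _ = (L * Lplus)ᵀ := hp3.symm
      _ = Lplusᵀ * Lᵀ := by rw [Matrix.transpose_mul]
      _ = Lplusᵀ * L := by rw [hLsym]
  have hPs : ∀ u v, Lplus u v = Lplus v u := fun u v => congrFun (congrFun hPsym v) u
  have hLs : ∀ u v, L u v = L v u := fun u v => congrFun (congrFun hLsym v) u
  -- zero row sums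
  have hrow : L *ᵥ (fun _ => (1:ℝ)) = 0 := by
    funext u
    show ∑ v, L u v * 1 = 0
    simp only [hL, Matrix.sub_apply, Matrix.diagonal_apply, mul_one]
    rw [Finset.sum_sub_distrib]
    simp [Finset.sum_ite_eq]
  have hker : ∀ z : Fin n → ℝ, L *ᵥ z = 0 → ∀ u v, z u = z v := by
    intro z hz
    exact lap_ker' A hA hAsym hconn z (by rw [← hL]; exact hz)
  -- projection property of L * Lplus
  have hproj : ∀ y : Fin n → ℝ, (∑ v, y v) = 0 → (L * Lplus) *ᵥ y = y := by
    intro y hy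
    have hQL : (1 - L * Lplus) * L = 0 := by
      rw [Matrix.sub_mul, Matrix.one_mul, hp1, sub_self]
    have hrowsQ : ∀ u, L *ᵥ (fun v => (1 - L * Lplus) u v) = 0 := by
      intro u
      funext w
      have hQLuw : ∑ v, (1 - L * Lplus) u v * L v w = 0 := by
        have h := congrFun (congrFun hQL u) w
        rwa [Matrix.mul_apply] at h
      show ∑ v, L w v * (1 - L * Lplus) u v = 0
      rw [← hQLuw]
      exact Finset.sum_congr rfl fun v _ => by rw [hLs w v]; ring
    have hconst : ∀ u v w, (1 - L * Lplus) u v = (1 - L * Lplus) u w :=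
      fun u v w => hker _ (hrowsQ u) v w
    have hQy : (1 - L * Lplus) *ᵥ y = 0 := by
      funext u
      show ∑ v, (1 - L * Lplus) u v * y v = 0
      calc ∑ v, (1 - L * Lplus) u v * y v
          = ∑ v, (1 - L * Lplus) u u * y v :=
            Finset.sum_congr rfl fun v _ => by rw [hconst u v u]
      _ = (1 - L * Lplus) u u * ∑ v, y v := by rw [Finset.mul_sum]
      _ = 0 := by rw [hy, mul_zero]
    have h0 : (1:Matrix (Fin n) (Fin n) ℝ) *ᵥ y - (L * Lplus) *ᵥ y = 0 := by
      rw [← Matrix.sub_mulVec]; exact hQy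
    have h1 := sub_eq_zero.mp h0
    rw [Matrix.one_mulVec] at h1
    exact h1.symm
  -- the special vector y
  set y : Fin n → ℝ :=
    fun v => (if v = s1 then (1:ℝ) else 0) - (if v = s0 then (1:ℝ) else 0) with hy
  have hysum : ∑ v, y v = 0 := by
    simp [hy, Finset.sum_sub_distrib]
  have hLpy : Lplus *ᵥ y = fun v => Lplus v s1 - Lplus v s0 := by
    funext v
    show ∑ w, Lplus v w * y w = _
    simp [hy, mul_sub, mul_ite, Finset.sum_sub_distrib]
  -- Reff s0 s1 nonneg
  have hReq : Reff s0 s1 = Lplus s0 s0 - 2 * Lplus s0 s1 + Lplus s1 s1 := by rw [hReff]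
  have hRnn : 0 ≤ Reff s0 s1 := by
    have hvm : y ᵥ* Lplus = Lplus *ᵥ y := by
      have h := Matrix.vecMul_transpose Lplus y
      rwa [hPsym] at h
    have hz : y ⬝ᵥ (Lplus *ᵥ y) = Reff s0 s1 := by
      rw [hLpy, hReq]
      show ∑ v, y v * (Lplus v s1 - Lplus v s0) = _
      simp only [hy]
      simp only [sub_mul, ite_mul, one_mul, zero_mul]
      rw [Finset.sum_sub_distrib]
      simp only [Finset.sum_ite_eq', Finset.mem_univ, if_true]
      rw [hPs s1 s0]
      ring
    have hpos : 0 ≤ y ⬝ᵥ (Lplus *ᵥ y) := by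
      have he : y ⬝ᵥ (Lplus *ᵥ y) = (Lplus *ᵥ y) ⬝ᵥ (L *ᵥ (Lplus *ᵥ y)) := by
        conv_lhs => rw [← hp2]
        rw [← Matrix.mulVec_mulVec, ← Matrix.mulVec_mulVec]
        rw [Matrix.dotProduct_mulVec, hvm]
      rw [he, hL, quad_eq' A hAsym]
      refine mul_nonneg (by norm_num) (Finset.sum_nonneg fun u _ =>
        Finset.sum_nonneg fun v _ => mul_nonneg (hA u v) (sq_nonneg _))
    linarith [hz ▸ hpos]
  have hσ : 0 < Reff s0 s1 + 1/κ0 + 1/κ1 := by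
    have h0 : 0 < 1/κ0 := by positivity
    have h1 : 0 < 1/κ1 := by positivity
    linarith
  have hσ0 : Reff s0 s1 + 1/κ0 + 1/κ1 ≠ 0 := ne_of_gt hσ
  set β : ℝ := (Reff s0 s1 + 1/κ0 + 1/κ1)⁻¹ with hβ
  set c : ℝ := β/κ0 - β*(Lplus s0 s1 - Lplus s0 s0) with hc
  set xstar : Fin n → ℝ := fun v => β * (Lplus v s1 - Lplus v s0) + c with hxs
  have hLxstar : L *ᵥ xstar = fun v => β * y v := by
    have e1 : xstar = β • (Lplus *ᵥ y) + c • (fun _ => (1:ℝ)) := by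
      funext v
      rw [hLpy]
      simp [hxs, smul_eq_mul, mul_comm]
    rw [e1, Matrix.mulVec_add, Matrix.mulVec_smul, Matrix.mulVec_smul,
      Matrix.mulVec_mulVec, hproj y hysum, hrow]
    funext v
    simp [smul_eq_mul]
  have hxstars0 : xstar s0 = β / κ0 := by
    simp only [hxs, hc]
    ring
  have hMxstar : (L + κ0 • Matrix.diagonal (Pi.single s0 (1 : ℝ))
      + κ1 • Matrix.diagonal (Pi.single s1 (1 : ℝ))) *ᵥ xstar
      = κ1 • (Pi.single s1 1 : Fin n → ℝ) := by
    funext v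
    have expand : ((L + κ0 • Matrix.diagonal (Pi.single s0 (1 : ℝ))
        + κ1 • Matrix.diagonal (Pi.single s1 (1 : ℝ))) *ᵥ xstar) v
        = (L *ᵥ xstar) v + κ0 * ((Pi.single s0 1 : Fin n → ℝ) v * xstar v)
          + κ1 * ((Pi.single s1 1 : Fin n → ℝ) v * xstar v) := by
      rw [Matrix.add_mulVec, Matrix.add_mulVec, Matrix.smul_mulVec,
        Matrix.smul_mulVec]
      simp [Matrix.mulVec_diagonal]
    rw [expand, hLxstar]
    by_cases h0 : v = s0
    · subst h0
      simp only [hy, Pi.single_apply, if_neg hs, if_neg (Ne.symm hs), eq_self_iff_true, if_true,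
        Pi.smul_apply, smul_eq_mul]
      rw [hxstars0]
      field_simp
      ring
    · by_cases h1 : v = s1
      · subst h1
        simp only [hy, Pi.single_apply, if_neg h0, eq_self_iff_true, if_true, Pi.smul_apply, smul_eq_mul]
        have hxss1 : xstar v = β * (Lplus v v - Lplus s0 v) + c := by
          simp only [hxs, hPs v s0]
        have hβ1 : β * (Reff s0 v + 1/κ0 + 1/κ1) = 1 := by
          rw [hβ]; exact inv_mul_cancel₀ hσ0
        have h1κ : κ1 * (1/κ1) = 1 := mul_one_div_cancel hκ1'
        rw [hxss1, hc]
        linear_combination κ1 * hβ1 - κ1 * β * hReq - β * h1κ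
      · simp only [hy, Pi.single_apply, if_neg h0, if_neg h1, Pi.smul_apply, smul_eq_mul]
        ring
  have hxhat : xhat = xstar := by
    rw [hx, ← hMxstar, Matrix.mulVec_mulVec,
      Matrix.nonsing_inv_mul _ hinv, Matrix.one_mulVec]
  have hsum : ∑ v, xstar v
      = β * ((∑ v, Lplus s1 v) - (∑ v, Lplus s0 v)) + n * c := by
    have e1 : ∑ v, Lplus v s1 = ∑ v, Lplus s1 v :=
      Finset.sum_congr rfl fun v _ => hPs v s1
    have e0 : ∑ v, Lplus v s0 = ∑ v, Lplus s0 v :=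
      Finset.sum_congr rfl fun v _ => hPs v s0
    calc ∑ v, xstar v = ∑ v, (β * (Lplus v s1 - Lplus v s0) + c) := rfl
    _ = β * ((∑ v, Lplus v s1) - ∑ v, Lplus v s0) + n * c := by
        rw [Finset.sum_add_distrib, Finset.sum_const, Finset.card_univ, Fintype.card_fin,
          ← Finset.mul_sum, Finset.sum_sub_distrib, nsmul_eq_mul]
    _ = _ := by rw [e1, e0]
  have hθinv : ∀ u, (θ u)⁻¹
      = ((n:ℝ) * Lplus u u - 2 * ∑ v, Lplus u v + ∑ v, Lplus v v) / n := by
    intro u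
    rw [hθ]
    show ((n:ℝ) / ∑ v, Reff u v)⁻¹ = _
    rw [inv_div]
    congr 1
    rw [hReff]
    show ∑ v, (Lplus u u - 2 * Lplus u v + Lplus v v) = _
    rw [Finset.sum_add_distrib, Finset.sum_sub_distrib, Finset.sum_const,
      Finset.card_univ, Fintype.card_fin, ← Finset.mul_sum, nsmul_eq_mul]
  have hfinal : μ - 1/2
      = ((θ s0)⁻¹ + 1 / κ0 - (θ s1)⁻¹ - 1 / κ1)
        / (2 * (Reff s0 s1 + 1 / κ0 + 1 / κ1)) := by
    have hβ1 : β * (Reff s0 s1 + 1/κ0 + 1/κ1) = 1 := by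
      rw [hβ]; exact inv_mul_cancel₀ hσ0
    have hnn : (n:ℝ) * (n:ℝ)⁻¹ = 1 := mul_inv_cancel₀ hn0
    have h2σ0 : 2 * (Reff s0 s1 + 1/κ0 + 1/κ1) ≠ 0 := by
      intro h; apply hσ0; linarith
    have hμval : μ = (β * ((∑ v, Lplus s1 v) - ∑ v, Lplus s0 v)) / n + c := by
      rw [hμ, hxhat, hsum]
      field_simp
    rw [hμval, hθinv s0, hθinv s1, hc, eq_div_iff h2σ0]
    linear_combination
      (2 * (((∑ v, Lplus s1 v) - ∑ v, Lplus s0 v)/(n:ℝ) + 1/κ0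
        - (Lplus s0 s1 - Lplus s0 s0))) * hβ1
      - hReq - (Lplus s0 s0 - Lplus s1 s1) * hnn
  rw [hfinal, abs_div, abs_of_pos (by linarith : (0:ℝ) < 2 * (Reff s0 s1 + 1/κ0 + 1/κ1))]
end

section
/- In the absolute leader system on a strongly connected weighted directed graph with fixed leader set S0 ≠ ∅, the average opinion μ, as a set function on subsets of V ∖ S0, is monotone and submodular: for all S1 ⊆ T1 ⊆ V ∖ S0 one has μ(S1) ≤ μ(T1), and for all S1 ⊆ T1 ⊆ V ∖ S0 and u ∈ V ∖ (S0 ∪ T1) one has μ(T1 ∪ {u}) − μ(T1) ≤ μ(S1 ∪ {u}) − μ(S1). -/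
open Matrix BigOperators

/-- Discrete minimum principle: if `z ≥ 0` on a nonempty boundary set `B` and
`z` is harmonic (w.r.t. nonnegative weights `A` with strongly connected support)
outside `B`, then `z ≥ 0` everywhere. -/
lemma stmt6_mp {n : ℕ} (A : Matrix (Fin n) (Fin n) ℝ) (hA : ∀ u v, 0 ≤ A u v)
    (hconn : ∀ u v : Fin n, Relation.ReflTransGen (fun a b => 0 < A a b) u v)
    (B : Finset (Fin n)) (hB : B.Nonempty) (z : Fin n → ℝ)
    (hbd : ∀ v ∈ B, 0 ≤ z v)
    (harm : ∀ v, v ∉ B → ∑ w, A v w * (z v - z w) = 0) :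
    ∀ v, 0 ≤ z v := by
  by_contra hcon
  push_neg at hcon
  obtain ⟨v1, hv1⟩ := hcon
  obtain ⟨b, hbB⟩ := hB
  obtain ⟨v0, -, hv0⟩ := Finset.exists_min_image Finset.univ z ⟨b, Finset.mem_univ b⟩
  have hmin : ∀ w, z v0 ≤ z w := fun w => hv0 w (Finset.mem_univ w)
  have hneg : z v0 < 0 := lt_of_le_of_lt (hmin v1) hv1
  have hall : ∀ w, Relation.ReflTransGen (fun a b => 0 < A a b) v0 w → z w = z v0 := by
    intro w hw
    induction hw with
    | refl => rfl
    | @tail m c hpath hedge ih =>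
      have hmB : m ∉ B := by
        intro h
        have := hbd m h
        rw [ih] at this
        exact absurd this (not_le.2 hneg)
      have hsum := harm m hmB
      have hnonpos : ∀ w ∈ Finset.univ, A m w * (z m - z w) ≤ 0 := by
        intro w _
        apply mul_nonpos_of_nonneg_of_nonpos (hA m w)
        rw [ih]
        linarith [hmin w]
      have hzero := (Finset.sum_eq_zero_iff_of_nonpos hnonpos).1 hsum c (Finset.mem_univ c)
      have : z m - z c = 0 := by
        rcases mul_eq_zero.1 hzero with h | h
        · exact absurd h (ne_of_gt hedge)
        · exact h
      rw [← ih]; linarith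
  have hb := hall b (hconn v0 b)
  have := hbd b hbB
  rw [hb] at this
  exact absurd this (not_le.2 hneg)

/-- in the absolute leader system on a strongly connected weighted directed
graph with fixed leader set `S0 ≠ ∅`, the average opinion `μ` is monotone and submodular
as a set function of the leader set `S1 ⊆ V ∖ S0`. -/
theorem stmt6
    (n : ℕ) (hn : 2 ≤ n)
    (A : Matrix (Fin n) (Fin n) ℝ)
    (hA : ∀ u v, 0 ≤ A u v)
    (hconn : ∀ u v : Fin n, Relation.ReflTransGen (fun a b => 0 < A a b) u v)
    (d : Fin n → ℝ) (hd : d = fun u => ∑ v, A u v) (hdpos : ∀ u, 0 < d u)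
    (W : Matrix (Fin n) (Fin n) ℝ)
    (hW : W = Aᵀ * Matrix.diagonal (fun u => (d u)⁻¹))
    (L : Matrix (Fin n) (Fin n) ℝ) (hL : L = Matrix.diagonal d * (1 - Wᵀ))
    (S0 : Finset (Fin n)) (hS0 : S0.Nonempty)
    -- for every admissible leader set `S1`, the follower-follower submatrix of the
    -- Laplacian is invertible:
    (hinv : ∀ S1 : Finset (Fin n), S1 ⊆ S0ᶜ → IsUnit (Matrix.det
      (Matrix.of (fun i j : {v : Fin n // v ∉ S0 ∪ S1} => L i.1 j.1))))
    -- `xhat S1` is the steady-state opinion vector of the absolute leader system with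
    -- leader sets `S0` (opinion 0) and `S1` (opinion 1):
    (xhat : Finset (Fin n) → Fin n → ℝ)
    (hx : ∀ S1 : Finset (Fin n), S1 ⊆ S0ᶜ →
      (∀ v ∈ S0, xhat S1 v = 0) ∧ (∀ v ∈ S1, xhat S1 v = 1) ∧
      (∀ v, v ∉ S0 ∪ S1 → L.mulVec (xhat S1) v = 0))
    -- the average opinion:
    (μ : Finset (Fin n) → ℝ) (hμ : μ = fun S1 => (n : ℝ)⁻¹ * ∑ v, xhat S1 v) :
    (∀ S1 T1 : Finset (Fin n), S1 ⊆ T1 → T1 ⊆ S0ᶜ → μ S1 ≤ μ T1) ∧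
    (∀ S1 T1 : Finset (Fin n), ∀ u : Fin n, S1 ⊆ T1 → T1 ⊆ S0ᶜ →
      u ∉ S0 → u ∉ T1 →
      μ (insert u T1) - μ T1 ≤ μ (insert u S1) - μ S1) := by
  -- L = diagonal d - A
  have hL' : L = Matrix.diagonal d - A := by
    subst hW hL
    rw [Matrix.transpose_mul, Matrix.transpose_transpose, Matrix.diagonal_transpose,
      Matrix.mul_sub, Matrix.mul_one, ← Matrix.mul_assoc, Matrix.diagonal_mul_diagonal]
    have h1 : (fun u => d u * (d u)⁻¹) = fun _ => (1:ℝ) :=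
      funext fun u => mul_inv_cancel₀ (hdpos u).ne'
    rw [h1, Matrix.diagonal_one, Matrix.one_mul]
  -- harmonicity in sum form
  have key : ∀ S1 : Finset (Fin n), S1 ⊆ S0ᶜ → ∀ v, v ∉ S0 ∪ S1 →
      ∑ w, A v w * (xhat S1 v - xhat S1 w) = 0 := by
    intro S1 hs v hv
    have h0 := (hx S1 hs).2.2 v hv
    rw [hL'] at h0
    have : L.mulVec (xhat S1) v = 0 := by rw [hL']; exact h0
    have hexp : ((Matrix.diagonal d - A).mulVec (xhat S1)) v
        = ∑ w, A v w * (xhat S1 v - xhat S1 w) := by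
      simp only [Matrix.mulVec, dotProduct, Matrix.sub_apply, Matrix.diagonal_apply,
        sub_mul, ite_mul, zero_mul, Finset.sum_sub_distrib, Finset.sum_ite_eq,
        Finset.mem_univ, if_true, mul_sub]
      rw [hd]
      rw [Finset.sum_mul]
    rw [← hexp, h0]
  -- 0 ≤ xhat ≤ 1 and pointwise monotonicity
  have hBne : ∀ S1 : Finset (Fin n), (S0 ∪ S1).Nonempty := by
    intro S1
    obtain ⟨s, hs⟩ := hS0
    exact ⟨s, Finset.mem_union_left _ hs⟩
  have hub : ∀ S1 : Finset (Fin n), S1 ⊆ S0ᶜ → ∀ v, xhat S1 v ≤ 1 := by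
    intro S1 hs v
    have := stmt6_mp A hA hconn (S0 ∪ S1) (hBne S1) (fun w => 1 - xhat S1 w)
      (by
        intro w hw
        rcases Finset.mem_union.1 hw with h | h
        · rw [(hx S1 hs).1 w h]; norm_num
        · rw [(hx S1 hs).2.1 w h]; norm_num)
      (by
        intro w hw
        have h := key S1 hs w hw
        have : ∀ u, A w u * ((1 - xhat S1 w) - (1 - xhat S1 u))
            = -(A w u * (xhat S1 w - xhat S1 u)) := by intro u; ring
        rw [Finset.sum_congr rfl fun u _ => this u, Finset.sum_neg_distrib, h, neg_zero]) v
    linarith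
  have hlb : ∀ S1 : Finset (Fin n), S1 ⊆ S0ᶜ → ∀ v, 0 ≤ xhat S1 v := by
    intro S1 hs v
    exact stmt6_mp A hA hconn (S0 ∪ S1) (hBne S1) (xhat S1)
      (by
        intro w hw
        rcases Finset.mem_union.1 hw with h | h
        · rw [(hx S1 hs).1 w h]
        · rw [(hx S1 hs).2.1 w h]; norm_num)
      (key S1 hs) v
  have hle : ∀ S1 T1 : Finset (Fin n), S1 ⊆ T1 → T1 ⊆ S0ᶜ →
      ∀ v, xhat S1 v ≤ xhat T1 v := by
    intro S1 T1 hst hts v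
    have hss : S1 ⊆ S0ᶜ := hst.trans hts
    have := stmt6_mp A hA hconn (S0 ∪ T1) (hBne T1)
      (fun w => xhat T1 w - xhat S1 w)
      (by
        intro w hw
        rcases Finset.mem_union.1 hw with h | h
        · rw [(hx S1 hss).1 w h, (hx T1 hts).1 w h]; norm_num
        · rw [(hx T1 hts).2.1 w h]
          have := hub S1 hss w
          linarith)
      (by
        intro w hw
        have hw' : w ∉ S0 ∪ S1 := by
          intro h
          apply hw
          rcases Finset.mem_union.1 h with h | h
          · exact Finset.mem_union_left _ h
          · exact Finset.mem_union_right _ (hst h)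
        have h1 := key T1 hts w hw
        have h2 := key S1 hss w hw'
        have heq : ∀ u, A w u * ((xhat T1 w - xhat S1 w) - (xhat T1 u - xhat S1 u))
            = A w u * (xhat T1 w - xhat T1 u) - A w u * (xhat S1 w - xhat S1 u) := by
          intro u; ring
        rw [Finset.sum_congr rfl fun u _ => heq u, Finset.sum_sub_distrib, h1, h2, sub_zero]) v
    linarith
  have hninv : (0:ℝ) ≤ (n : ℝ)⁻¹ := by positivity
  constructor
  · intro S1 T1 hst hts
    rw [hμ]
    exact mul_le_mul_of_nonneg_left (Finset.sum_le_sum fun v _ => hle S1 T1 hst hts v) hninv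
  · intro S1 T1 u hst hts huS0 huT1
    have hss : S1 ⊆ S0ᶜ := hst.trans hts
    have huc : u ∈ S0ᶜ := Finset.mem_compl.2 huS0
    have hts' : insert u T1 ⊆ S0ᶜ := Finset.insert_subset huc hts
    have hss' : insert u S1 ⊆ S0ᶜ := Finset.insert_subset huc hss
    set a := xhat S1
    set a' := xhat (insert u S1)
    set b := xhat T1
    set b' := xhat (insert u T1)
    have hz : ∀ v, 0 ≤ (a' v - a v) - (b' v - b v) := by
      apply stmt6_mp A hA hconn (insert u (S0 ∪ T1))
        ⟨u, Finset.mem_insert_self _ _⟩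
      · intro w hw
        rcases Finset.mem_insert.1 hw with h | h
        · subst h
          have ha'u : a' w = 1 := (hx _ hss').2.1 w (Finset.mem_insert_self _ _)
          have hb'u : b' w = 1 := (hx _ hts').2.1 w (Finset.mem_insert_self _ _)
          have := hle S1 T1 hst hts w
          rw [ha'u, hb'u]
          linarith
        · rcases Finset.mem_union.1 h with h | h
          · have h1 : a w = 0 := (hx S1 hss).1 w h
            have h2 : a' w = 0 := (hx _ hss').1 w h
            have h3 : b w = 0 := (hx T1 hts).1 w h
            have h4 : b' w = 0 := (hx _ hts').1 w h
            rw [h1, h2, h3, h4]; norm_num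
          · have h3 : b w = 1 := (hx T1 hts).2.1 w h
            have h4 : b' w = 1 := (hx _ hts').2.1 w (Finset.mem_insert_of_mem h)
            have := hle S1 (insert u S1) (Finset.subset_insert _ _) hss' w
            rw [h3, h4]
            linarith
      · intro w hw
        have hw1 : w ∉ S0 ∪ S1 := by
          intro h
          apply hw
          rcases Finset.mem_union.1 h with h | h
          · exact Finset.mem_insert_of_mem (Finset.mem_union_left _ h)
          · exact Finset.mem_insert_of_mem (Finset.mem_union_right _ (hst h))
        have hw2 : w ∉ S0 ∪ insert u S1 := by
          intro h
          apply hw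
          rcases Finset.mem_union.1 h with h | h
          · exact Finset.mem_insert_of_mem (Finset.mem_union_left _ h)
          · rcases Finset.mem_insert.1 h with h | h
            · exact h ▸ Finset.mem_insert_self _ _
            · exact Finset.mem_insert_of_mem (Finset.mem_union_right _ (hst h))
        have hw3 : w ∉ S0 ∪ T1 := fun h => hw (Finset.mem_insert_of_mem h)
        have hw4 : w ∉ S0 ∪ insert u T1 := by
          intro h
          apply hw
          rcases Finset.mem_union.1 h with h | h
          · exact Finset.mem_insert_of_mem (Finset.mem_union_left _ h)
          · rcases Finset.mem_insert.1 h with h | h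
            · exact h ▸ Finset.mem_insert_self _ _
            · exact Finset.mem_insert_of_mem (Finset.mem_union_right _ h)
        have h1 := key S1 hss w hw1
        have h2 := key (insert u S1) hss' w hw2
        have h3 := key T1 hts w hw3
        have h4 := key (insert u T1) hts' w hw4
        have heq : ∀ v, A w v * (((a' w - a w) - (b' w - b w)) - ((a' v - a v) - (b' v - b v)))
            = (A w v * (a' w - a' v) - A w v * (a w - a v))
              - (A w v * (b' w - b' v) - A w v * (b w - b v)) := by
          intro v; ring
        rw [Finset.sum_congr rfl fun v _ => heq v]
        rw [Finset.sum_sub_distrib, Finset.sum_sub_distrib, Finset.sum_sub_distrib,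
          h1, h2, h3, h4]
        ring
    have hsum : ∑ v, (b' v - b v) ≤ ∑ v, (a' v - a v) := by
      apply Finset.sum_le_sum
      intro v _
      have := hz v
      linarith
    rw [hμ]
    simp only
    rw [← mul_sub, ← mul_sub]
    apply mul_le_mul_of_nonneg_left _ hninv
    rw [← Finset.sum_sub_distrib, ← Finset.sum_sub_distrib]
    exact hsum
end

section
/- In the influenced leader system on a strongly connected weighted directed graph with fixed leader set S0 ≠ ∅ and positive stubbornness values, the average opinion μ, as a set function on subsets of V ∖ S0, is monotone and submodular: for all S1 ⊆ T1 ⊆ V ∖ S0 one has μ(S1) ≤ μ(T1), and for all S1 ⊆ T1 ⊆ V ∖ S0 and u ∈ V ∖ (S0 ∪ T1) one has μ(T1 ∪ {u}) − μ(T1) ≤ μ(S1 ∪ {u}) − μ(S1). -/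
/-!
Write `L = diag d - A`. By the maximum principle (strong connectivity, `c ≥ 0` and `c > 0`
somewhere), `(L + diag c) x ≥ 0` forces `x ≥ 0`; so `L + diag c` is invertible and vectors can
be compared through their images under it. This gives `0 ≤ x̂(S) ≤ 1` and `x̂(S) ≤ x̂(T)` for
`S ⊆ T`. For `u ∉ S0 ∪ S` the marginal gain is `x̂(S ∪ {u}) - x̂(S) = κ u (1 - x̂(S) u) y_S`,
where `y_S` is column `u` of `(L + E^{S0 ∪ S ∪ {u}} K)⁻¹`. Both factors are nonnegative and
decrease as `S` grows (for `y_S` because the diagonal grows), so the gain is pointwise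
submodular, hence so is the average.
-/

open Matrix

namespace InfluencedLeader

variable {ι : Type*} [Fintype ι] [DecidableEq ι]

def laplacian (A : Matrix ι ι ℝ) : Matrix ι ι ℝ :=
  diagonal (fun u => ∑ v, A u v) - A

theorem laplacian_mulVec_apply (A : Matrix ι ι ℝ) (x : ι → ℝ) (v : ι) :
    (laplacian A *ᵥ x) v = ∑ w, A v w * (x v - x w) := by
  rw [laplacian, sub_mulVec, Pi.sub_apply, mulVec_diagonal, mulVec, dotProduct, Finset.sum_mul,
    ← Finset.sum_sub_distrib]
  simp only [mul_sub]

theorem laplacian_mulVec_one (A : Matrix ι ι ℝ) : laplacian A *ᵥ 1 = 0 := by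
  ext v
  simp [laplacian_mulVec_apply]

theorem laplacian_add_diagonal_mulVec (A : Matrix ι ι ℝ) (c x : ι → ℝ) :
    (laplacian A + diagonal c) *ᵥ x = laplacian A *ᵥ x + c * x := by
  ext v
  simp [add_mulVec, mulVec_diagonal]

theorem diagonal_mul_one_sub_transpose_eq_laplacian {A : Matrix ι ι ℝ}
    (hA : ∀ u v, 0 ≤ A u v) :
    diagonal (fun u => ∑ v, A u v) *
        (1 - (Aᵀ * diagonal (fun u => (∑ v, A u v)⁻¹))ᵀ) = laplacian A := by
  ext u w
  -- a row with zero sum is itself zero, so `d u * ((d u)⁻¹ * A u w) = A u w` in all cases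
  have hrow : (∑ v, A u v) * ((∑ v, A u v)⁻¹ * A u w) = A u w := by
    rcases eq_or_ne (∑ v, A u v) 0 with h | h
    · rw [(Finset.sum_eq_zero_iff_of_nonneg fun v _ => hA u v).1 h w (Finset.mem_univ w)]
      ring
    · rw [← mul_assoc, mul_inv_cancel₀ h, one_mul]
  simp only [laplacian, transpose_mul, transpose_transpose, diagonal_transpose, Matrix.sub_apply,
    diagonal_mul]
  rw [_root_.mul_sub, hrow, one_apply, diagonal_apply, mul_ite, mul_one, mul_zero]

section MaximumPrinciple

variable {A : Matrix ι ι ℝ} (hA : ∀ u v, 0 ≤ A u v)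
  (hconn : ∀ u v, Relation.ReflTransGen (fun a b => 0 < A a b) u v)
  {c : ι → ℝ} (hc : 0 ≤ c) {s : ι} (hs : 0 < c s)
include hA hconn hc hs

/-- At a minimum `m` of `x` every term of the row `∑ w, A m w * (x m - x w) + c m * x m` is
nonpositive, so they all vanish; the minimum thus propagates along edges up to `s`, where
`c s * x s ≥ 0` forces `x s ≥ 0`. -/
theorem nonneg_of_mulVec_nonneg {x : ι → ℝ} (hx : 0 ≤ (laplacian A + diagonal c) *ᵥ x) :
    0 ≤ x := by
  obtain ⟨m, -, hm⟩ := Finset.univ.exists_min_image x ⟨s, Finset.mem_univ s⟩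
  have hmin : ∀ w, x m ≤ x w := fun w => hm w (Finset.mem_univ w)
  have hrow : ∀ a, 0 ≤ ∑ w, A a w * (x a - x w) + c a * x a := fun a => by
    simpa [laplacian_add_diagonal_mulVec, laplacian_mulVec_apply] using hx a
  have hterm : ∀ a, x a = x m → ∀ w, A a w * (x a - x w) ≤ 0 := fun a ha w =>
    mul_nonpos_of_nonneg_of_nonpos (hA a w) (by linarith [hmin w])
  suffices hxm : 0 ≤ x m from fun w => hxm.trans (hmin w)
  by_contra! hneg
  have hstep : ∀ a b, x a = x m → 0 < A a b → x b = x m := by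
    intro a b ha hab
    have hca : c a * x a ≤ 0 := mul_nonpos_of_nonneg_of_nonpos (hc a) (by linarith)
    have hsum : ∑ w, A a w * (x a - x w) = 0 :=
      le_antisymm (Finset.sum_nonpos fun w _ => hterm a ha w) (by linarith [hrow a])
    have hb := (Finset.sum_eq_zero_iff_of_nonpos fun w _ => hterm a ha w).1 hsum b
      (Finset.mem_univ b)
    linarith [(mul_eq_zero.1 hb).resolve_left hab.ne']
  have hreach : ∀ v, Relation.ReflTransGen (fun a b => 0 < A a b) m v → x v = x m := by
    intro v h
    induction h with
    | refl => rfl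
    | tail _ hab ih => exact hstep _ _ ih hab
  have hxs := hreach s (hconn m s)
  have hcs : c s * x s < 0 := mul_neg_of_pos_of_neg hs (hxs ▸ hneg)
  have hsum : ∑ w, A s w * (x s - x w) ≤ 0 := Finset.sum_nonpos fun w _ => hterm s hxs w
  linarith [hrow s]

theorem le_of_mulVec_le {x y : ι → ℝ}
    (h : (laplacian A + diagonal c) *ᵥ x ≤ (laplacian A + diagonal c) *ᵥ y) : x ≤ y :=
  sub_nonneg.1 <| nonneg_of_mulVec_nonneg hA hconn hc hs <| by
    rw [mulVec_sub]
    exact sub_nonneg.2 h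

theorem mulVec_inv_mulVec (b : ι → ℝ) :
    (laplacian A + diagonal c) *ᵥ ((laplacian A + diagonal c)⁻¹ *ᵥ b) = b := by
  have hinj : Function.Injective (laplacian A + diagonal c).mulVec := fun x y h =>
    le_antisymm (le_of_mulVec_le hA hconn hc hs h.le) (le_of_mulVec_le hA hconn hc hs h.ge)
  rw [mulVec_mulVec, mul_nonsing_inv _
    (isUnit_iff_isUnit_det _ |>.1 (mulVec_injective_iff_isUnit.1 hinj)), one_mulVec]

end MaximumPrinciple

/-- `x̂(S1)`, with `E^S K 1` encoded as the indicator of `S` applied to `κ`. -/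
noncomputable def opinion (A : Matrix ι ι ℝ) (κ : ι → ℝ) (S0 S1 : Finset ι) : ι → ℝ :=
  (laplacian A + diagonal ((↑(S0 ∪ S1) : Set ι).indicator κ))⁻¹ *ᵥ (↑S1 : Set ι).indicator κ

noncomputable def influence (A : Matrix ι ι ℝ) (κ : ι → ℝ) (S0 S1 : Finset ι) (u : ι) : ι → ℝ :=
  (laplacian A + diagonal ((↑(S0 ∪ S1) : Set ι).indicator κ))⁻¹ *ᵥ Pi.single u 1

section Opinion

variable {A : Matrix ι ι ℝ} (hA : ∀ u v, 0 ≤ A u v)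
  (hconn : ∀ u v, Relation.ReflTransGen (fun a b => 0 < A a b) u v)
  {κ : ι → ℝ} (hκ : ∀ v, 0 < κ v) {S0 : Finset ι} (hS0 : S0.Nonempty)
include hA hconn hκ hS0

theorem le_of_mulVec_le_union (S : Finset ι) {x y : ι → ℝ}
    (h : (laplacian A + diagonal ((↑(S0 ∪ S) : Set ι).indicator κ)) *ᵥ x ≤
      (laplacian A + diagonal ((↑(S0 ∪ S) : Set ι).indicator κ)) *ᵥ y) : x ≤ y := by
  obtain ⟨s, hs⟩ := hS0
  refine le_of_mulVec_le hA hconn (Set.indicator_nonneg fun v _ => (hκ v).le) (s := s) ?_ h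
  simpa [hs] using hκ s

theorem mulVec_inv_mulVec_union (S : Finset ι) (b : ι → ℝ) :
    (laplacian A + diagonal ((↑(S0 ∪ S) : Set ι).indicator κ)) *ᵥ
      ((laplacian A + diagonal ((↑(S0 ∪ S) : Set ι).indicator κ))⁻¹ *ᵥ b) = b := by
  obtain ⟨s, hs⟩ := hS0
  refine mulVec_inv_mulVec hA hconn (Set.indicator_nonneg fun v _ => (hκ v).le) (s := s) ?_ b
  simpa [hs] using hκ s

theorem mulVec_opinion (S : Finset ι) :
    (laplacian A + diagonal ((↑(S0 ∪ S) : Set ι).indicator κ)) *ᵥ opinion A κ S0 S =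
      (↑S : Set ι).indicator κ :=
  mulVec_inv_mulVec_union hA hconn hκ hS0 S _

theorem mulVec_influence (S : Finset ι) (u : ι) :
    (laplacian A + diagonal ((↑(S0 ∪ S) : Set ι).indicator κ)) *ᵥ influence A κ S0 S u =
      Pi.single u 1 :=
  mulVec_inv_mulVec_union hA hconn hκ hS0 S _

theorem opinion_nonneg (S : Finset ι) : 0 ≤ opinion A κ S0 S := by
  refine le_of_mulVec_le_union hA hconn hκ hS0 S ?_
  rw [mulVec_opinion hA hconn hκ hS0, mulVec_zero]
  exact Set.indicator_nonneg fun v _ => (hκ v).le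

theorem opinion_le_one (S : Finset ι) : opinion A κ S0 S ≤ 1 := by
  refine le_of_mulVec_le_union hA hconn hκ hS0 S ?_
  rw [mulVec_opinion hA hconn hκ hS0, laplacian_add_diagonal_mulVec, laplacian_mulVec_one,
    zero_add, mul_one]
  exact Set.indicator_le_indicator_of_subset (by simp) (fun v => (hκ v).le)

theorem opinion_mono {S T : Finset ι} (hST : S ⊆ T) : opinion A κ S0 S ≤ opinion A κ S0 T := by
  refine le_of_mulVec_le_union hA hconn hκ hS0 T fun v => ?_
  have hrow := congrFun (mulVec_opinion hA hconn hκ hS0 S) v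
  have h0 := opinion_nonneg hA hconn hκ hS0 S v
  have h1 := opinion_le_one hA hconn hκ hS0 S v
  rw [laplacian_add_diagonal_mulVec] at hrow
  rw [mulVec_opinion hA hconn hκ hS0, laplacian_add_diagonal_mulVec]
  simp only [Pi.add_apply, Pi.mul_apply, Set.indicator_apply, Finset.mem_coe,
    Finset.mem_union, Pi.zero_apply, Pi.one_apply] at hrow h0 h1 ⊢
  by_cases hv0 : v ∈ S0 <;> by_cases hvT : v ∈ T <;> by_cases hvS : v ∈ S <;>
    simp only [hv0, hvT, hvS, or_true, or_false, if_true, if_false] at hrow ⊢ <;>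
    first | nlinarith [hκ v] | exact absurd (hST hvS) hvT

theorem influence_nonneg (S : Finset ι) (u : ι) : 0 ≤ influence A κ S0 S u := by
  refine le_of_mulVec_le_union hA hconn hκ hS0 S ?_
  rw [mulVec_influence hA hconn hκ hS0, mulVec_zero]
  exact Pi.single_nonneg.2 zero_le_one

theorem influence_anti {S T : Finset ι} (hST : S ⊆ T) (u : ι) :
    influence A κ S0 T u ≤ influence A κ S0 S u := by
  refine le_of_mulVec_le_union hA hconn hκ hS0 S fun v => ?_
  have hrow := congrFun (mulVec_influence hA hconn hκ hS0 T u) v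
  have h0 := influence_nonneg hA hconn hκ hS0 T u v
  rw [laplacian_add_diagonal_mulVec] at hrow
  rw [mulVec_influence hA hconn hκ hS0, laplacian_add_diagonal_mulVec]
  simp only [Pi.add_apply, Pi.mul_apply, Set.indicator_apply, Finset.mem_coe,
    Finset.mem_union, Pi.zero_apply] at hrow h0 ⊢
  by_cases hv0 : v ∈ S0 <;> by_cases hvT : v ∈ T <;> by_cases hvS : v ∈ S <;>
    simp only [hv0, hvT, hvS, or_true, or_false, if_true, if_false] at hrow ⊢ <;>
    first | nlinarith [hκ v] | exact absurd (hST hvS) hvT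

/-- Adding `u` to the leaders changes only row `u` of the system: by `κ u * x̂(S) u` on the
left and by `κ u` on the right. -/
theorem opinion_insert_sub {S : Finset ι} {u : ι} (hu0 : u ∉ S0) (huS : u ∉ S) :
    opinion A κ S0 (insert u S) - opinion A κ S0 S =
      (κ u * (1 - opinion A κ S0 S u)) • influence A κ S0 (insert u S) u := by
  rw [sub_eq_iff_eq_add']
  have hinj : Function.Injective
      (laplacian A + diagonal ((↑(S0 ∪ insert u S) : Set ι).indicator κ)).mulVec :=
    fun x y h => le_antisymm (le_of_mulVec_le_union hA hconn hκ hS0 _ h.le)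
      (le_of_mulVec_le_union hA hconn hκ hS0 _ h.ge)
  refine hinj (funext fun v => ?_)
  have hrow := congrFun (mulVec_opinion hA hconn hκ hS0 S) v
  rw [laplacian_add_diagonal_mulVec] at hrow
  rw [mulVec_add, mulVec_smul, mulVec_influence hA hconn hκ hS0, mulVec_opinion hA hconn hκ hS0,
    laplacian_add_diagonal_mulVec]
  simp only [Pi.add_apply, Pi.mul_apply, Pi.smul_apply, smul_eq_mul, Set.indicator_apply,
    Finset.mem_coe, Finset.mem_union, Finset.mem_insert] at hrow ⊢
  rcases eq_or_ne v u with rfl | hvu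
  · simp only [hu0, huS, or_true, or_false, if_true, if_false, Pi.single_eq_same] at hrow ⊢
    linear_combination -hrow
  · simp only [hvu, false_or, Pi.single_eq_of_ne hvu, mul_zero, add_zero] at hrow ⊢
    exact hrow.symm

theorem opinion_insert_sub_anti {S T : Finset ι} (hST : S ⊆ T) {u : ι} (hu0 : u ∉ S0)
    (huT : u ∉ T) :
    opinion A κ S0 (insert u T) - opinion A κ S0 T ≤
      opinion A κ S0 (insert u S) - opinion A κ S0 S := by
  rw [opinion_insert_sub hA hconn hκ hS0 hu0 huT,
    opinion_insert_sub hA hconn hκ hS0 hu0 fun h => huT (hST h)]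
  intro v
  have hgain_nonneg : 0 ≤ κ u * (1 - opinion A κ S0 T u) :=
    mul_nonneg (hκ u).le (sub_nonneg.2 (opinion_le_one hA hconn hκ hS0 T u))
  have hgain_anti : κ u * (1 - opinion A κ S0 T u) ≤ κ u * (1 - opinion A κ S0 S u) :=
    mul_le_mul_of_nonneg_left (by linarith [opinion_mono hA hconn hκ hS0 hST u]) (hκ u).le
  exact mul_le_mul hgain_anti
    (influence_anti hA hconn hκ hS0 (Finset.insert_subset_insert u hST) u v)
    (influence_nonneg hA hconn hκ hS0 _ u v) (hgain_nonneg.trans hgain_anti)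

end Opinion

end InfluencedLeader

open InfluencedLeader

theorem stmt7_general
    (n : ℕ)
    (A : Matrix (Fin n) (Fin n) ℝ)
    (hA : ∀ u v, 0 ≤ A u v)
    (hconn : ∀ u v : Fin n, Relation.ReflTransGen (fun a b => 0 < A a b) u v)
    (d : Fin n → ℝ) (hd : d = fun u => ∑ v, A u v)
    (W : Matrix (Fin n) (Fin n) ℝ)
    (hW : W = Aᵀ * Matrix.diagonal (fun u => (d u)⁻¹))
    (L : Matrix (Fin n) (Fin n) ℝ) (hL : L = Matrix.diagonal d * (1 - Wᵀ))
    (S0 : Finset (Fin n)) (hS0 : S0.Nonempty)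
    -- stubbornness values:
    (κ : Fin n → ℝ) (hκ : ∀ v, 0 < κ v)
    -- `xhat S1 = (L + E^{S0 ∪ S1} K)⁻¹ E^{S1} K 1` is the steady-state opinion vector:
    (xhat : Finset (Fin n) → Fin n → ℝ)
    (hx : ∀ S1 : Finset (Fin n), xhat S1 =
      (L + Matrix.diagonal (fun v => if v ∈ S0 ∪ S1 then (1 : ℝ) else 0) *
        Matrix.diagonal κ)⁻¹.mulVec
        ((Matrix.diagonal (fun v => if v ∈ S1 then (1 : ℝ) else 0) *
          Matrix.diagonal κ).mulVec (fun _ => 1)))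
    -- the average opinion:
    (μ : Finset (Fin n) → ℝ) (hμ : μ = fun S1 => (n : ℝ)⁻¹ * ∑ v, xhat S1 v) :
    (∀ S1 T1 : Finset (Fin n), S1 ⊆ T1 → T1 ⊆ S0ᶜ → μ S1 ≤ μ T1) ∧
    (∀ S1 T1 : Finset (Fin n), ∀ u : Fin n, S1 ⊆ T1 → T1 ⊆ S0ᶜ →
      u ∉ S0 → u ∉ T1 →
      μ (insert u T1) - μ T1 ≤ μ (insert u S1) - μ S1) := by
  have hdiag (T : Finset (Fin n)) : diagonal (fun v => if v ∈ T then (1 : ℝ) else 0) *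
      diagonal κ = diagonal ((↑T : Set (Fin n)).indicator κ) := by
    rw [diagonal_mul_diagonal]
    congr with v
    simp [Set.indicator_apply]
  have hxhat : xhat = opinion A κ S0 := by
    funext S
    rw [hx, hL, hW, hd, diagonal_mul_one_sub_transpose_eq_laplacian hA, hdiag, hdiag, opinion]
    congr with v
    simp [mulVec_diagonal]
  subst hμ hxhat
  refine ⟨fun S1 T1 hST _ => ?_, fun S1 T1 u hST _ hu0 huT => ?_⟩
  · dsimp only
    gcongr with v
    exact opinion_mono hA hconn hκ hS0 hST v
  · dsimp only
    rw [← mul_sub, ← mul_sub, ← Finset.sum_sub_distrib, ← Finset.sum_sub_distrib]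
    refine mul_le_mul_of_nonneg_left (Finset.sum_le_sum fun v _ => ?_) (by positivity)
    exact opinion_insert_sub_anti hA hconn hκ hS0 hST hu0 huT v

/-- in the influenced leader system on a strongly connected weighted
directed graph with fixed leader set `S0 ≠ ∅` and positive stubbornness values, the
average opinion `μ` is monotone and submodular as a set function of the leader set
`S1 ⊆ V ∖ S0`. -/
theorem stmt7
    (n : ℕ) (hn : 2 ≤ n)
    (A : Matrix (Fin n) (Fin n) ℝ)
    (hA : ∀ u v, 0 ≤ A u v)
    (hconn : ∀ u v : Fin n, Relation.ReflTransGen (fun a b => 0 < A a b) u v)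
    (d : Fin n → ℝ) (hd : d = fun u => ∑ v, A u v) (hdpos : ∀ u, 0 < d u)
    (W : Matrix (Fin n) (Fin n) ℝ)
    (hW : W = Aᵀ * Matrix.diagonal (fun u => (d u)⁻¹))
    (L : Matrix (Fin n) (Fin n) ℝ) (hL : L = Matrix.diagonal d * (1 - Wᵀ))
    (S0 : Finset (Fin n)) (hS0 : S0.Nonempty)
    -- stubbornness values:
    (κ : Fin n → ℝ) (hκ : ∀ v, 0 < κ v)
    -- for every admissible leader set `S1`, the matrix `L + E^{S0 ∪ S1} K` is
    -- invertible:
    (hinv : ∀ S1 : Finset (Fin n), S1 ⊆ S0ᶜ → IsUnit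
      (L + Matrix.diagonal (fun v => if v ∈ S0 ∪ S1 then (1 : ℝ) else 0) *
        Matrix.diagonal κ).det)
    -- `xhat S1 = (L + E^{S0 ∪ S1} K)⁻¹ E^{S1} K 1` is the steady-state opinion vector:
    (xhat : Finset (Fin n) → Fin n → ℝ)
    (hx : ∀ S1 : Finset (Fin n), xhat S1 =
      (L + Matrix.diagonal (fun v => if v ∈ S0 ∪ S1 then (1 : ℝ) else 0) *
        Matrix.diagonal κ)⁻¹.mulVec
        ((Matrix.diagonal (fun v => if v ∈ S1 then (1 : ℝ) else 0) *
          Matrix.diagonal κ).mulVec (fun _ => 1)))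
    -- the average opinion:
    (μ : Finset (Fin n) → ℝ) (hμ : μ = fun S1 => (n : ℝ)⁻¹ * ∑ v, xhat S1 v) :
    (∀ S1 T1 : Finset (Fin n), S1 ⊆ T1 → T1 ⊆ S0ᶜ → μ S1 ≤ μ T1) ∧
    (∀ S1 T1 : Finset (Fin n), ∀ u : Fin n, S1 ⊆ T1 → T1 ⊆ S0ᶜ →
      u ∉ S0 → u ∉ T1 →
      μ (insert u T1) - μ T1 ≤ μ (insert u S1) - μ S1) :=
  stmt7_general n A hA hconn d hd W hW L hL S0 hS0 κ hκ xhat hx μ hμ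
end

section
/- In the absolute leader system on a strongly connected weighted directed graph with fixed leader set S0 ≠ ∅, the steady-state opinion of every vertex is monotone in the leader set S1: for all S1 ⊆ T1 ⊆ V ∖ S0 and every vertex v ∈ V, x̂(T1)_v ≥ x̂(S1)_v. -/
open Matrix BigOperators

-- minimum principle
lemma minpr (n : ℕ) (hn : 0 < n) (A : Matrix (Fin n) (Fin n) ℝ) (hA : ∀ u v, 0 ≤ A u v)
    (hconn : ∀ u v : Fin n, Relation.ReflTransGen (fun a b => 0 < A a b) u v)
    (x : Fin n → ℝ) (S : Finset (Fin n)) (s0 : Fin n) (hs0 : s0 ∈ S) (b : ℝ)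
    (hb : ∀ v ∈ S, b ≤ x v)
    (hharm : ∀ v ∉ S, (∑ u, A v u) * x v = ∑ u, A v u * x u) :
    ∀ v, b ≤ x v := by
  haveI : Nonempty (Fin n) := ⟨⟨0, hn⟩⟩
  have hne : (Finset.univ : Finset (Fin n)).Nonempty := Finset.univ_nonempty
  set m : ℝ := Finset.univ.inf' hne x with hm
  have hmle : ∀ v, m ≤ x v := fun v => Finset.inf'_le x (Finset.mem_univ v)
  intro v
  by_contra hlt
  push_neg at hlt
  have hmb : m < b := lt_of_le_of_lt (hmle v) hlt
  obtain ⟨v0, _, hv0⟩ := Finset.exists_mem_eq_inf' hne x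
  -- claim: if x v = m and edge v→u then x u = m
  have claim : ∀ v u : Fin n, x v = m → 0 < A v u → x u = m := by
    intro v u hv hvu
    have hvS : v ∉ S := by
      intro hvS
      exact absurd (hb v hvS) (by rw [hv]; exact not_le.2 hmb)
    have h1 := hharm v hvS
    have h2 : ∑ u, A v u * (x u - m) = 0 := by
      have : ∑ u, A v u * (x u - m) = (∑ u, A v u * x u) - (∑ u, A v u) * m := by
        rw [Finset.sum_mul]
        rw [← Finset.sum_sub_distrib]
        congr 1; ext u; ring
      rw [this, ← h1, hv]; ring
    have h3 : ∀ u ∈ Finset.univ, 0 ≤ A v u * (x u - m) := by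
      intro u _
      exact mul_nonneg (hA v u) (sub_nonneg.2 (hmle u))
    have h4 := (Finset.sum_eq_zero_iff_of_nonneg h3).1 h2 u (Finset.mem_univ u)
    rcases mul_eq_zero.1 h4 with h | h
    · exact absurd h (ne_of_gt hvu)
    · linarith [sub_eq_zero.1 h]
  -- propagate along path v0 → s0
  have hall : ∀ w, Relation.ReflTransGen (fun a b => 0 < A a b) v0 w → x w = m := by
    intro w h
    induction h with
    | refl => exact hv0.symm
    | tail hab hbc ih => exact claim _ _ ih hbc
  have hs0m : x s0 = m := hall s0 (hconn v0 s0)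
  exact absurd (hb s0 hs0) (by rw [hs0m]; exact not_le.2 hmb)

lemma Lapply (n : ℕ) (A : Matrix (Fin n) (Fin n) ℝ)
    (d : Fin n → ℝ) (hd : d = fun u => ∑ v, A u v) (hdpos : ∀ u, 0 < d u)
    (W : Matrix (Fin n) (Fin n) ℝ)
    (hW : W = Aᵀ * Matrix.diagonal (fun u => (d u)⁻¹))
    (L : Matrix (Fin n) (Fin n) ℝ) (hL : L = Matrix.diagonal d * (1 - Wᵀ))
    (x : Fin n → ℝ) (v : Fin n) :
    L.mulVec x v = (∑ u, A v u) * x v - ∑ u, A v u * x u := by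
  have hWt : ∀ i j, Wᵀ i j = A i j * (d i)⁻¹ := by
    intro i j
    simp [hW, Matrix.transpose_apply, Matrix.mul_apply, Matrix.diagonal,
      Finset.sum_ite_eq, Matrix.transpose_apply]
  have hLapp : ∀ i j, L i j = d i * ((if i = j then (1:ℝ) else 0) - A i j * (d i)⁻¹) := by
    intro i j
    have h1 : L i j = d i * ((1 - Wᵀ) i j) := by
      simp [hL, Matrix.mul_apply, Matrix.diagonal_apply, ite_mul, Finset.sum_ite_eq]
    rw [h1, Matrix.sub_apply, Matrix.one_apply, hWt]
  have hdv : d v ≠ 0 := (hdpos v).ne'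
  have : L.mulVec x v = ∑ j, (d v * ((if v = j then (1:ℝ) else 0) - A v j * (d v)⁻¹)) * x j := by
    simp [Matrix.mulVec, dotProduct, hLapp]
  rw [this]
  have : ∀ j, (d v * ((if v = j then (1:ℝ) else 0) - A v j * (d v)⁻¹)) * x j
      = (if v = j then d v * x j else 0) - A v j * x j := by
    intro j
    have hc : d v * (A v j * (d v)⁻¹) = A v j := by
      rw [mul_comm (A v j) _, ← mul_assoc, mul_inv_cancel₀ hdv, one_mul]
    have key : ∀ t : ℝ, (d v * (t - A v j * (d v)⁻¹)) * x j = (d v * t) * x j - A v j * x j := by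
      intro t
      linear_combination (-(x j)) * hc
    by_cases h : v = j
    · rw [if_pos h, if_pos h, key, mul_one]
    · rw [if_neg h, if_neg h, key, mul_zero, zero_mul]
  simp only [this, Finset.sum_sub_distrib, Finset.sum_ite_eq, Finset.mem_univ, if_true]
  rw [hd]


/-- in the absolute leader system on a strongly connected weighted directed
graph with fixed leader set `S0 ≠ ∅`, the steady-state opinion of every vertex is
monotone in the leader set `S1`: for `S1 ⊆ T1 ⊆ V ∖ S0` and every vertex `v`,
`x̂(T1)_v ≥ x̂(S1)_v`. -/
theorem stmt8
    (n : ℕ) (hn : 2 ≤ n)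
    (A : Matrix (Fin n) (Fin n) ℝ)
    (hA : ∀ u v, 0 ≤ A u v)
    (hconn : ∀ u v : Fin n, Relation.ReflTransGen (fun a b => 0 < A a b) u v)
    (d : Fin n → ℝ) (hd : d = fun u => ∑ v, A u v) (hdpos : ∀ u, 0 < d u)
    (W : Matrix (Fin n) (Fin n) ℝ)
    (hW : W = Aᵀ * Matrix.diagonal (fun u => (d u)⁻¹))
    (L : Matrix (Fin n) (Fin n) ℝ) (hL : L = Matrix.diagonal d * (1 - Wᵀ))
    (S0 : Finset (Fin n)) (hS0 : S0.Nonempty)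
    -- for every admissible leader set `S1`, the follower-follower submatrix of the
    -- Laplacian is invertible:
    (hinv : ∀ S1 : Finset (Fin n), S1 ⊆ S0ᶜ → IsUnit (Matrix.det
      (Matrix.of (fun i j : {v : Fin n // v ∉ S0 ∪ S1} => L i.1 j.1))))
    -- `xhat S1` is the steady-state opinion vector of the absolute leader system with
    -- leader sets `S0` (opinion 0) and `S1` (opinion 1):
    (xhat : Finset (Fin n) → Fin n → ℝ)
    (hx : ∀ S1 : Finset (Fin n), S1 ⊆ S0ᶜ →
      (∀ v ∈ S0, xhat S1 v = 0) ∧ (∀ v ∈ S1, xhat S1 v = 1) ∧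
      (∀ v, v ∉ S0 ∪ S1 → L.mulVec (xhat S1) v = 0)) :
    ∀ S1 T1 : Finset (Fin n), S1 ⊆ T1 → T1 ⊆ S0ᶜ →
      ∀ v : Fin n, xhat S1 v ≤ xhat T1 v := by
  have hpos : 0 < n := by omega
  obtain ⟨s0, hs0⟩ := hS0
  -- harmonicity in scalar form
  have harm : ∀ S1 : Finset (Fin n), S1 ⊆ S0ᶜ → ∀ w, w ∉ S0 ∪ S1 →
      (∑ u, A w u) * xhat S1 w = ∑ u, A w u * xhat S1 u := by
    intro S1 hS1 w hw
    have h0 := (hx S1 hS1).2.2 w hw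
    have := Lapply n A d hd hdpos W hW L hL (xhat S1) w
    rw [h0] at this
    linarith [this]
  intro S1 T1 hST hT v
  have hS1 : S1 ⊆ S0ᶜ := hST.trans hT
  -- step 1 : xhat S1 ≤ 1 everywhere
  have hle1 : ∀ w, xhat S1 w ≤ 1 := by
    have := minpr n hpos A hA hconn (fun w => 1 - xhat S1 w) (S0 ∪ S1) s0
      (Finset.mem_union_left _ hs0) 0
      (by
        intro w hw
        show (0:ℝ) ≤ 1 - xhat S1 w
        rcases Finset.mem_union.1 hw with h | h
        · rw [(hx S1 hS1).1 w h]; norm_num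
        · rw [(hx S1 hS1).2.1 w h]; norm_num)
      (by
        intro w hw
        have h1 := harm S1 hS1 w hw
        have h2 : ∑ u, A w u * (1 - xhat S1 u) = (∑ u, A w u) - ∑ u, A w u * xhat S1 u := by
          rw [← Finset.sum_sub_distrib]
          congr 1; ext u; ring
        rw [h2]; ring_nf; linarith [h1])
    intro w
    have h := this w
    linarith
  -- step 2 : monotonicity
  have := minpr n hpos A hA hconn (fun w => xhat T1 w - xhat S1 w) (S0 ∪ T1) s0
    (Finset.mem_union_left _ hs0) 0
    (by
      intro w hw
      show (0:ℝ) ≤ xhat T1 w - xhat S1 w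
      rcases Finset.mem_union.1 hw with h | h
      · rw [(hx S1 hS1).1 w h, (hx T1 hT).1 w h]; norm_num
      · rw [(hx T1 hT).2.1 w h]
        simp only [sub_nonneg]
        exact hle1 w)
    (by
      intro w hw
      have hw' : w ∉ S0 ∪ S1 := by
        intro h
        rcases Finset.mem_union.1 h with h | h
        · exact hw (Finset.mem_union_left _ h)
        · exact hw (Finset.mem_union_right _ (hST h))
      have h1 := harm S1 hS1 w hw'
      have h2 := harm T1 hT w hw
      have h3 : ∑ u, A w u * (xhat T1 u - xhat S1 u)
          = (∑ u, A w u * xhat T1 u) - ∑ u, A w u * xhat S1 u := by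
        rw [← Finset.sum_sub_distrib]
        congr 1; ext u; ring
      rw [h3]; ring_nf; linarith [h1, h2])
  have h := this v
  linarith
end

section
/- In the absolute leader system on a strongly connected weighted directed graph with fixed leader set S0 ≠ ∅, the steady-state opinion of every vertex is submodular in the leader set S1: for all S1 ⊆ T1 ⊆ V ∖ S0, every u ∈ V ∖ (S0 ∪ T1), and every vertex v ∈ V, x̂(T1 ∪ {u})_v − x̂(T1)_v ≤ x̂(S1 ∪ {u})_v − x̂(S1)_v. -/
/-!
Every steady state is harmonic off its leader set for the Laplacian `diag(A𝟙) - A`, whose action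
is `(L x)_v = ∑_w A_{v,w} (x_v - x_w)`. Such functions obey a minimum principle: a minimum below
the boundary values would propagate along edges to a leader in `S0`. Applying it to `1 - x̂(S1)`,
to `x̂(T1) - x̂(S1)` and to `(x̂(S1 ∪ {u}) - x̂(S1)) - (x̂(T1 ∪ {u}) - x̂(T1))`, each harmonic off
`S0 ∪ T1 ∪ {u}` by linearity, gives in turn `x̂ ≤ 1`, monotonicity, and submodularity: on the
boundary the last difference is `x̂(T1)_u - x̂(S1)_u` at `u` and `x̂(S1 ∪ {u})_w - x̂(S1)_w` on
`T1`, both nonnegative by monotonicity.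
-/

open Matrix Finset

namespace Matrix

variable {ι : Type*} [Fintype ι] [DecidableEq ι]

def laplacian (A : Matrix ι ι ℝ) : Matrix ι ι ℝ :=
  diagonal (fun u => ∑ v, A u v) - A

theorem diagonal_mul_one_sub_transpose_mul_diagonal_inv (A : Matrix ι ι ℝ) {d : ι → ℝ}
    (hd : ∀ u, d u ≠ 0) :
    diagonal d * (1 - (Aᵀ * diagonal fun u => (d u)⁻¹)ᵀ) = diagonal d - A := by
  rw [transpose_mul, transpose_transpose, diagonal_transpose, mul_sub, mul_one,
    ← Matrix.mul_assoc, diagonal_mul_diagonal]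
  simp only [mul_inv_cancel₀ (hd _), diagonal_one, Matrix.one_mul]

theorem laplacian_mulVec_apply (A : Matrix ι ι ℝ) (x : ι → ℝ) (v : ι) :
    (laplacian A *ᵥ x) v = ∑ w, A v w * (x v - x w) := by
  rw [laplacian, sub_mulVec, Pi.sub_apply, mulVec_diagonal, mulVec, dotProduct, sum_mul,
    ← sum_sub_distrib]
  simp only [mul_sub]

theorem laplacian_mulVec_one (A : Matrix ι ι ℝ) : laplacian A *ᵥ 1 = 0 := by
  ext v
  simp [laplacian_mulVec_apply]

theorem nonneg_of_laplacian_mulVec_nonneg {A : Matrix ι ι ℝ} (hA : ∀ u v, 0 ≤ A u v)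
    {S : Finset ι} (hreach : ∀ u, ∃ s ∈ S, Relation.ReflTransGen (fun a b => 0 < A a b) u s)
    {x : ι → ℝ} (hS : ∀ v ∈ S, 0 ≤ x v) (hsuper : ∀ v ∉ S, 0 ≤ (laplacian A *ᵥ x) v) (v : ι) :
    0 ≤ x v := by
  by_contra! hneg
  obtain ⟨a, -, hmin⟩ := exists_min_image univ x ⟨v, mem_univ v⟩
  have hmin' : ∀ w, x a ≤ x w := fun w => hmin w (mem_univ w)
  have ha : x a < 0 := (hmin' v).trans_lt hneg
  have propagate : ∀ b c, x b = x a → 0 < A b c → x c = x a := by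
    intro b c hb hbc
    have hbS : b ∉ S := fun hbS => (hS b hbS).not_gt (hb ▸ ha)
    have hterm : ∀ w ∈ univ, A b w * (x b - x w) ≤ 0 := fun w _ =>
      mul_nonpos_of_nonneg_of_nonpos (hA b w) (by linarith [hmin' w])
    have hsum : ∑ w, A b w * (x b - x w) = 0 :=
      le_antisymm (sum_nonpos hterm) (laplacian_mulVec_apply A x b ▸ hsuper b hbS)
    have hc := (sum_eq_zero_iff_of_nonpos hterm).1 hsum c (mem_univ c)
    have hc' := (mul_eq_zero.1 hc).resolve_left hbc.ne'
    linarith [hmin' c]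
  obtain ⟨s, hs, hpath⟩ := hreach a
  have hxs : x s = x a := by
    clear hs
    induction hpath with
    | refl => rfl
    | tail _ hbc ih => exact propagate _ _ ih hbc
  linarith [hS s hs]

end Matrix

section LeaderSystem

variable {ι : Type*} [Fintype ι] [DecidableEq ι]

def IsLeaderSteadyState (A : Matrix ι ι ℝ) (S0 S1 : Finset ι) (x : ι → ℝ) : Prop :=
  (∀ v ∈ S0, x v = 0) ∧ (∀ v ∈ S1, x v = 1) ∧
    ∀ v, v ∉ S0 ∪ S1 → (laplacian A *ᵥ x) v = 0

variable {A : Matrix ι ι ℝ} {S0 S1 T1 : Finset ι} {x y : ι → ℝ}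

variable (hA : ∀ u v, 0 ≤ A u v)
  (hreach : ∀ u, ∃ s ∈ S0, Relation.ReflTransGen (fun a b => 0 < A a b) u s)
include hA hreach

theorem nonneg_of_harmonic_off_union {B : Finset ι} {f : ι → ℝ} (hB : ∀ v ∈ S0 ∪ B, 0 ≤ f v)
    (hf : ∀ v ∉ S0 ∪ B, (laplacian A *ᵥ f) v = 0) (v : ι) : 0 ≤ f v :=
  nonneg_of_laplacian_mulVec_nonneg hA
    (fun u => (hreach u).imp fun _ hs => ⟨mem_union_left _ hs.1, hs.2⟩) hB
    (fun w hw => (hf w hw).ge) v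

namespace IsLeaderSteadyState

theorem le_one (hx : IsLeaderSteadyState A S0 S1 x) (v : ι) : x v ≤ 1 := by
  have h := nonneg_of_harmonic_off_union hA hreach (B := S1) (f := 1 - x)
    (fun w hw => by
      rcases mem_union.1 hw with hw | hw
      · simp [hx.1 w hw]
      · simp [hx.2.1 w hw])
    (fun w hw => by simp [mulVec_sub, laplacian_mulVec_one, hx.2.2 w hw]) v
  simpa using h

theorem mono (hx : IsLeaderSteadyState A S0 S1 x) (hy : IsLeaderSteadyState A S0 T1 y)
    (hST : S1 ⊆ T1) (v : ι) : x v ≤ y v := by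
  have h := nonneg_of_harmonic_off_union hA hreach (B := T1) (f := y - x)
    (fun w hw => by
      rcases mem_union.1 hw with hw | hw
      · simp [hx.1 w hw, hy.1 w hw]
      · simp [hy.2.1 w hw, hx.le_one hA hreach w])
    (fun w hw => by
      have hw' : w ∉ S0 ∪ S1 := fun h => hw (union_subset_union_right hST h)
      simp [mulVec_sub, hx.2.2 w hw', hy.2.2 w hw]) v
  simpa using h

theorem submodular {u : ι} {xu yu : ι → ℝ}
    (hx : IsLeaderSteadyState A S0 S1 x) (hxu : IsLeaderSteadyState A S0 (insert u S1) xu)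
    (hy : IsLeaderSteadyState A S0 T1 y) (hyu : IsLeaderSteadyState A S0 (insert u T1) yu)
    (hST : S1 ⊆ T1) (v : ι) : yu v - y v ≤ xu v - x v := by
  have h := nonneg_of_harmonic_off_union hA hreach (B := insert u T1) (f := (xu - x) - (yu - y))
    (fun w hw => by
      rcases mem_union.1 hw with hw | hw
      · simp [hx.1 w hw, hxu.1 w hw, hy.1 w hw, hyu.1 w hw]
      rcases mem_insert.1 hw with rfl | hw
      · simp [hxu.2.1 w (mem_insert_self _ _), hyu.2.1 w (mem_insert_self _ _),
          hx.mono hA hreach hy hST w]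
      · simp [hy.2.1 w hw, hyu.2.1 w (mem_insert_of_mem hw),
          hx.mono hA hreach hxu (subset_insert u S1) w])
    (fun w hw => by
      have hT : S0 ∪ T1 ⊆ S0 ∪ insert u T1 := union_subset_union_right (subset_insert u T1)
      have hSu : S0 ∪ insert u S1 ⊆ S0 ∪ insert u T1 :=
        union_subset_union_right (insert_subset_insert u hST)
      have hS : S0 ∪ S1 ⊆ S0 ∪ insert u T1 := (union_subset_union_right hST).trans hT
      simp [mulVec_sub, hx.2.2 w (fun h => hw (hS h)), hxu.2.2 w (fun h => hw (hSu h)),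
        hy.2.2 w (fun h => hw (hT h)), hyu.2.2 w hw]) v
  simp only [Pi.sub_apply] at h
  linarith

end IsLeaderSteadyState

end LeaderSystem

theorem stmt9_general
    (n : ℕ)
    (A : Matrix (Fin n) (Fin n) ℝ)
    (hA : ∀ u v, 0 ≤ A u v)
    (hconn : ∀ u v : Fin n, Relation.ReflTransGen (fun a b => 0 < A a b) u v)
    (d : Fin n → ℝ) (hd : d = fun u => ∑ v, A u v) (hdpos : ∀ u, 0 < d u)
    (W : Matrix (Fin n) (Fin n) ℝ)
    (hW : W = Aᵀ * Matrix.diagonal (fun u => (d u)⁻¹))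
    (L : Matrix (Fin n) (Fin n) ℝ) (hL : L = Matrix.diagonal d * (1 - Wᵀ))
    (S0 : Finset (Fin n)) (hS0 : S0.Nonempty)
    -- `xhat S1` is the steady-state opinion vector of the absolute leader system with
    -- leader sets `S0` (opinion 0) and `S1` (opinion 1):
    (xhat : Finset (Fin n) → Fin n → ℝ)
    (hx : ∀ S1 : Finset (Fin n), S1 ⊆ S0ᶜ →
      (∀ v ∈ S0, xhat S1 v = 0) ∧ (∀ v ∈ S1, xhat S1 v = 1) ∧
      (∀ v, v ∉ S0 ∪ S1 → L.mulVec (xhat S1) v = 0)) :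
    ∀ S1 T1 : Finset (Fin n), ∀ u : Fin n, S1 ⊆ T1 → T1 ⊆ S0ᶜ →
      u ∉ S0 → u ∉ T1 →
      ∀ v : Fin n,
        xhat (insert u T1) v - xhat T1 v ≤ xhat (insert u S1) v - xhat S1 v := by
  intro S1 T1 u hST hT hu _ v
  obtain ⟨s0, hs0⟩ := hS0
  have hLap : L = laplacian A := by
    rw [hL, hW, diagonal_mul_one_sub_transpose_mul_diagonal_inv A fun u => (hdpos u).ne', hd]
    rfl
  subst hLap
  have steady : ∀ B ⊆ S0ᶜ, IsLeaderSteadyState A S0 B (xhat B) := hx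
  have huc : u ∈ S0ᶜ := mem_compl.2 hu
  exact IsLeaderSteadyState.submodular hA (fun a => ⟨s0, hs0, hconn a s0⟩)
    (steady S1 (hST.trans hT)) (steady _ (insert_subset huc (hST.trans hT)))
    (steady T1 hT) (steady _ (insert_subset huc hT)) hST v

/-- in the absolute leader system on a strongly connected weighted directed
graph with fixed leader set `S0 ≠ ∅`, the steady-state opinion of every vertex is
submodular in the leader set `S1`: for `S1 ⊆ T1 ⊆ V ∖ S0`, `u ∈ V ∖ (S0 ∪ T1)` and
every vertex `v`, `x̂(T1 ∪ {u})_v − x̂(T1)_v ≤ x̂(S1 ∪ {u})_v − x̂(S1)_v`. -/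
theorem stmt9
    (n : ℕ) (hn : 2 ≤ n)
    (A : Matrix (Fin n) (Fin n) ℝ)
    (hA : ∀ u v, 0 ≤ A u v)
    (hconn : ∀ u v : Fin n, Relation.ReflTransGen (fun a b => 0 < A a b) u v)
    (d : Fin n → ℝ) (hd : d = fun u => ∑ v, A u v) (hdpos : ∀ u, 0 < d u)
    (W : Matrix (Fin n) (Fin n) ℝ)
    (hW : W = Aᵀ * Matrix.diagonal (fun u => (d u)⁻¹))
    (L : Matrix (Fin n) (Fin n) ℝ) (hL : L = Matrix.diagonal d * (1 - Wᵀ))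
    (S0 : Finset (Fin n)) (hS0 : S0.Nonempty)
    -- for every admissible leader set `S1`, the follower-follower submatrix of the
    -- Laplacian is invertible:
    (hinv : ∀ S1 : Finset (Fin n), S1 ⊆ S0ᶜ → IsUnit (Matrix.det
      (Matrix.of (fun i j : {v : Fin n // v ∉ S0 ∪ S1} => L i.1 j.1))))
    -- `xhat S1` is the steady-state opinion vector of the absolute leader system with
    -- leader sets `S0` (opinion 0) and `S1` (opinion 1):
    (xhat : Finset (Fin n) → Fin n → ℝ)
    (hx : ∀ S1 : Finset (Fin n), S1 ⊆ S0ᶜ →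
      (∀ v ∈ S0, xhat S1 v = 0) ∧ (∀ v ∈ S1, xhat S1 v = 1) ∧
      (∀ v, v ∉ S0 ∪ S1 → L.mulVec (xhat S1) v = 0)) :
    ∀ S1 T1 : Finset (Fin n), ∀ u : Fin n, S1 ⊆ T1 → T1 ⊆ S0ᶜ →
      u ∉ S0 → u ∉ T1 →
      ∀ v : Fin n,
        xhat (insert u T1) v - xhat T1 v ≤ xhat (insert u S1) v - xhat S1 v :=
  stmt9_general n A hA hconn d hd hdpos W hW L hL S0 hS0 xhat hx
end

section
/- In the influenced leader system on a strongly connected weighted directed graph with fixed leader set S0 ≠ ∅ and positive stubbornness values, the steady-state opinion of every vertex is submodular in the leader set S1: for all S1 ⊆ T1 ⊆ V ∖ S0, every u ∈ V ∖ (S0 ∪ T1), and every vertex v ∈ V, x̂(T1 ∪ {u})_v − x̂(T1)_v ≤ x̂(S1 ∪ {u})_v − x̂(S1)_v. -/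
open Matrix BigOperators

/-- Minimum principle: for `M = D - A + diag c` with `A` nonnegative, `d` the row
sums of `A`, `c ≥ 0` positive on the nonempty set `S0`, and the graph of `A`
strongly connected, `M x ≥ 0` entrywise implies `x ≥ 0` entrywise. -/
lemma stmt11_minprin (n : ℕ)
    (A : Matrix (Fin n) (Fin n) ℝ) (hA : ∀ u v, 0 ≤ A u v)
    (hconn : ∀ u v : Fin n, Relation.ReflTransGen (fun a b => 0 < A a b) u v)
    (d : Fin n → ℝ) (hd : d = fun u => ∑ v, A u v)
    (S0 : Finset (Fin n)) (hS0 : S0.Nonempty)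
    (c : Fin n → ℝ) (hc : ∀ v, 0 ≤ c v) (hcS0 : ∀ v ∈ S0, 0 < c v)
    (x : Fin n → ℝ)
    (hpos : ∀ i, 0 ≤ ((Matrix.diagonal d - A + Matrix.diagonal c).mulVec x) i) :
    ∀ i, 0 ≤ x i := by
  obtain ⟨s0, hs0⟩ := hS0
  haveI : Nonempty (Fin n) := ⟨s0⟩
  set m := Finset.univ.inf' Finset.univ_nonempty x with hm
  have hmle : ∀ k, m ≤ x k := fun k => Finset.inf'_le x (Finset.mem_univ k)
  have hexpand : ∀ i, ((Matrix.diagonal d - A + Matrix.diagonal c).mulVec x) i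
      = d i * x i + c i * x i - ∑ k, A i k * x k := by
    intro i
    have hAx : (A.mulVec x) i = ∑ k, A i k * x k := by
      simp [Matrix.mulVec, dotProduct]
    simp only [Matrix.add_mulVec, Matrix.sub_mulVec, Pi.add_apply, Pi.sub_apply,
      Matrix.mulVec_diagonal, hAx]
    ring
  suffices h0 : 0 ≤ m by intro i; exact h0.trans (hmle i)
  by_contra hneg
  push_neg at hneg
  have key : ∀ i, x i = m → i ∉ S0 ∧ ∀ k, 0 < A i k → x k = m := by
    intro i hi
    have hdi : d i = ∑ k, A i k := by rw [hd]
    have hsumge : d i * m ≤ ∑ k, A i k * x k := by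
      have h1 : ∑ k, A i k * m ≤ ∑ k, A i k * x k :=
        Finset.sum_le_sum fun k _ => mul_le_mul_of_nonneg_left (hmle k) (hA i k)
      calc d i * m = ∑ k, A i k * m := by rw [hdi, Finset.sum_mul]
        _ ≤ ∑ k, A i k * x k := h1
    have h1 : 0 ≤ d i * m + c i * m - ∑ k, A i k * x k := by
      have h2 := hpos i
      rw [hexpand i, hi] at h2
      exact h2
    have hcim : 0 ≤ c i * m := by linarith
    have hci : c i = 0 := by
      rcases (hc i).lt_or_eq with h | h
      · exfalso
        have := mul_neg_of_pos_of_neg h hneg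
        linarith
      · exact h.symm
    have hiS0 : i ∉ S0 := by
      intro hmem
      have := hcS0 i hmem
      rw [hci] at this
      exact lt_irrefl 0 this
    have hsumeq : ∑ k, A i k * (x k - m) = 0 := by
      have expand : ∑ k, A i k * (x k - m) = (∑ k, A i k * x k) - d i * m := by
        rw [hdi, Finset.sum_mul]
        rw [← Finset.sum_sub_distrib]
        congr 1
        funext k
        ring
      rw [expand]
      rw [hci] at h1
      linarith
    have hterm := (Finset.sum_eq_zero_iff_of_nonneg
      (fun k _ => mul_nonneg (hA i k) (by linarith [hmle k]))).mp hsumeq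
    refine ⟨hiS0, fun k hk => ?_⟩
    have h3 := hterm k (Finset.mem_univ k)
    have h4 : x k - m = 0 := (mul_eq_zero.mp h3).resolve_left (ne_of_gt hk)
    linarith
  obtain ⟨i0, -, hi0⟩ := Finset.exists_mem_eq_inf' Finset.univ_nonempty x
  have hreach : ∀ j, Relation.ReflTransGen (fun a b => 0 < A a b) i0 j → x j = m := by
    intro j hj
    induction hj with
    | refl => exact hi0.symm
    | tail h1 h2 ih => exact (key _ ih).2 _ h2
  have hxs0 : x s0 = m := hreach s0 (hconn i0 s0)
  exact (key s0 hxs0).1 hs0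

/-- in the influenced leader system on a strongly connected weighted
directed graph with fixed leader set `S0 ≠ ∅` and positive stubbornness values, the
steady-state opinion of every vertex is submodular in the leader set `S1`: for
`S1 ⊆ T1 ⊆ V ∖ S0`, `u ∈ V ∖ (S0 ∪ T1)` and every vertex `v`,
`x̂(T1 ∪ {u})_v − x̂(T1)_v ≤ x̂(S1 ∪ {u})_v − x̂(S1)_v`. -/
theorem stmt11
    (n : ℕ) (hn : 2 ≤ n)
    (A : Matrix (Fin n) (Fin n) ℝ)
    (hA : ∀ u v, 0 ≤ A u v)
    (hconn : ∀ u v : Fin n, Relation.ReflTransGen (fun a b => 0 < A a b) u v)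
    (d : Fin n → ℝ) (hd : d = fun u => ∑ v, A u v) (hdpos : ∀ u, 0 < d u)
    (W : Matrix (Fin n) (Fin n) ℝ)
    (hW : W = Aᵀ * Matrix.diagonal (fun u => (d u)⁻¹))
    (L : Matrix (Fin n) (Fin n) ℝ) (hL : L = Matrix.diagonal d * (1 - Wᵀ))
    (S0 : Finset (Fin n)) (hS0 : S0.Nonempty)
    -- stubbornness values:
    (κ : Fin n → ℝ) (hκ : ∀ v, 0 < κ v)
    -- for every admissible leader set `S1`, the matrix `L + E^{S0 ∪ S1} K` is
    -- invertible:
    (hinv : ∀ S1 : Finset (Fin n), S1 ⊆ S0ᶜ → IsUnit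
      (L + Matrix.diagonal (fun v => if v ∈ S0 ∪ S1 then (1 : ℝ) else 0) *
        Matrix.diagonal κ).det)
    -- `xhat S1 = (L + E^{S0 ∪ S1} K)⁻¹ E^{S1} K 1` is the steady-state opinion vector:
    (xhat : Finset (Fin n) → Fin n → ℝ)
    (hx : ∀ S1 : Finset (Fin n), xhat S1 =
      (L + Matrix.diagonal (fun v => if v ∈ S0 ∪ S1 then (1 : ℝ) else 0) *
        Matrix.diagonal κ)⁻¹.mulVec
        ((Matrix.diagonal (fun v => if v ∈ S1 then (1 : ℝ) else 0) *
          Matrix.diagonal κ).mulVec (fun _ => 1))) :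
    ∀ S1 T1 : Finset (Fin n), ∀ u : Fin n, S1 ⊆ T1 → T1 ⊆ S0ᶜ →
      u ∉ S0 → u ∉ T1 →
      ∀ v : Fin n,
        xhat (insert u T1) v - xhat T1 v ≤ xhat (insert u S1) v - xhat S1 v := by
  intro S1 T1 u hST hTS0 huS0 huT1 v
  -- L = D - A
  have hLDA : L = Matrix.diagonal d - A := by
    have hWt : Wᵀ = Matrix.diagonal (fun u => (d u)⁻¹) * A := by
      rw [hW, Matrix.transpose_mul, Matrix.transpose_transpose, Matrix.diagonal_transpose]
    rw [hL, hWt, mul_sub, mul_one, ← mul_assoc, Matrix.diagonal_mul_diagonal]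
    have h1 : (fun u => d u * (d u)⁻¹) = fun _ => (1 : ℝ) :=
      funext fun u => mul_inv_cancel₀ (hdpos u).ne'
    rw [h1, Matrix.diagonal_one, one_mul]
  set cB : Finset (Fin n) → Fin n → ℝ :=
    fun B v => (if v ∈ S0 ∪ B then (1 : ℝ) else 0) * κ v with hcB
  set MB : Finset (Fin n) → Matrix (Fin n) (Fin n) ℝ :=
    fun B => Matrix.diagonal d - A + Matrix.diagonal (cB B) with hMB
  set bB : Finset (Fin n) → Fin n → ℝ :=
    fun B v => (if v ∈ B then (1 : ℝ) else 0) * κ v with hbB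
  have hMeq : ∀ B : Finset (Fin n),
      L + Matrix.diagonal (fun v => if v ∈ S0 ∪ B then (1 : ℝ) else 0) *
        Matrix.diagonal κ = MB B := by
    intro B
    rw [hLDA, Matrix.diagonal_mul_diagonal]
  have hinv' : ∀ B : Finset (Fin n), B ⊆ S0ᶜ → IsUnit (MB B).det := by
    intro B hB
    rw [← hMeq B]
    exact hinv B hB
  have hbeq : ∀ B : Finset (Fin n),
      ((Matrix.diagonal (fun v => if v ∈ B then (1 : ℝ) else 0) *
        Matrix.diagonal κ).mulVec (fun _ => 1)) = bB B := by
    intro B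
    funext w
    rw [Matrix.diagonal_mul_diagonal, Matrix.mulVec_diagonal]
    simp only [hbB, mul_one]
  have hxB : ∀ B : Finset (Fin n), xhat B = (MB B)⁻¹.mulVec (bB B) := by
    intro B
    rw [hx B, hMeq B, hbeq B]
  have hMxhat : ∀ B : Finset (Fin n), B ⊆ S0ᶜ → (MB B).mulVec (xhat B) = bB B := by
    intro B hB
    rw [hxB B, Matrix.mulVec_mulVec, Matrix.mul_nonsing_inv _ (hinv' B hB), Matrix.one_mulVec]
  -- the minimum principle specialised to `MB B`
  have hprin : ∀ B : Finset (Fin n), ∀ y : Fin n → ℝ,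
      (∀ i, 0 ≤ ((MB B).mulVec y) i) → ∀ i, 0 ≤ y i := by
    intro B y hy
    refine stmt11_minprin n A hA hconn d hd S0 hS0 (cB B) ?_ ?_ y ?_
    · intro w
      simp only [hcB]
      split_ifs with h
      · simpa using (hκ w).le
      · simp
    · intro w hw
      simp only [hcB]
      rw [if_pos (Finset.mem_union_left _ hw), one_mul]
      exact hκ w
    · intro i
      exact hy i
  -- expansion of a matrix-vector product entry
  have hexp : ∀ B : Finset (Fin n), ∀ y : Fin n → ℝ, ∀ i,
      ((MB B).mulVec y) i = d i * y i + cB B i * y i - ∑ k, A i k * y k := by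
    intro B y i
    have hAx : (A.mulVec y) i = ∑ k, A i k * y k := by
      simp [Matrix.mulVec, dotProduct]
    simp only [hMB, Matrix.add_mulVec, Matrix.sub_mulVec, Pi.add_apply, Pi.sub_apply,
      Matrix.mulVec_diagonal, hAx]
    ring
  -- solving a linear system with `MB B`
  have hsolve : ∀ B : Finset (Fin n), B ⊆ S0ᶜ → ∀ y w : Fin n → ℝ,
      (MB B).mulVec y = w → y = (MB B)⁻¹.mulVec w := by
    intro B hB y w h
    have h2 := congrArg ((MB B)⁻¹.mulVec) h
    rwa [Matrix.mulVec_mulVec, Matrix.nonsing_inv_mul _ (hinv' B hB), Matrix.one_mulVec] at h2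
  -- nonnegativity of the inverse entries
  have hinvnn : ∀ B : Finset (Fin n), B ⊆ S0ᶜ → ∀ i j, 0 ≤ (MB B)⁻¹ i j := by
    intro B hB i j
    have h1 : ∀ i, 0 ≤ ((MB B).mulVec ((MB B)⁻¹.mulVec (Pi.single j 1))) i := by
      intro i
      rw [Matrix.mulVec_mulVec, Matrix.mul_nonsing_inv _ (hinv' B hB), Matrix.one_mulVec]
      by_cases h : i = j
      · subst h; simp
      · simp [Pi.single_eq_of_ne h]
    have h2 := hprin B _ h1 i
    rw [Matrix.mulVec_single] at h2
    simpa using h2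
  -- `0 ≤ xhat B`
  have hx0 : ∀ B : Finset (Fin n), B ⊆ S0ᶜ → ∀ i, 0 ≤ xhat B i := by
    intro B hB
    refine hprin B _ (fun i => ?_)
    rw [hMxhat B hB]
    simp only [hbB]
    split_ifs with h
    · simpa using (hκ i).le
    · simp
  -- `xhat B ≤ 1`
  have hxle1 : ∀ B : Finset (Fin n), B ⊆ S0ᶜ → ∀ i, xhat B i ≤ 1 := by
    intro B hB
    have key : ∀ i, 0 ≤ ((MB B).mulVec ((fun _ => (1 : ℝ)) - xhat B)) i := by
      intro i
      rw [Matrix.mulVec_sub, Pi.sub_apply, hMxhat B hB]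
      have h1 : ((MB B).mulVec (fun _ => (1 : ℝ))) i = cB B i := by
        rw [hexp B (fun _ => 1) i]
        have h2 : d i = ∑ k, A i k := by rw [hd]
        simp only [mul_one]
        rw [h2]
        simp
      rw [h1]
      -- 0 ≤ cB B i - bB B i
      simp only [hcB, hbB]
      by_cases hiB : i ∈ B
      · rw [if_pos hiB, if_pos (Finset.mem_union_right _ hiB)]
        simp
      · rw [if_neg hiB, zero_mul, sub_zero]
        split_ifs with h
        · simpa using (hκ i).le
        · simp
    intro i
    have h3 := hprin B _ key i
    simp only [Pi.sub_apply] at h3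
    linarith
  -- `cB` is monotone
  have hcmono : ∀ S T : Finset (Fin n), S ⊆ T → ∀ k, cB S k ≤ cB T k := by
    intro S T h k
    simp only [hcB]
    by_cases h1 : k ∈ S0 ∪ S
    · rw [if_pos h1,
        if_pos ((Finset.union_subset_union (Finset.Subset.refl S0) h) h1)]
    · rw [if_neg h1, zero_mul]
      split_ifs with h2
      · rw [one_mul]; exact (hκ k).le
      · rw [zero_mul]
  -- monotonicity of `xhat`
  have hmono : ∀ S T : Finset (Fin n), S ⊆ T → T ⊆ S0ᶜ → ∀ i, xhat S i ≤ xhat T i := by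
    intro S T hSTsub hTsub i
    have hSsub : S ⊆ S0ᶜ := hSTsub.trans hTsub
    -- bB T - bB S = cB T - cB S for S ⊆ T ⊆ S0ᶜ
    have hδ : ∀ j, bB T j - bB S j = cB T j - cB S j := by
      intro j
      simp only [hbB, hcB]
      by_cases hj0 : j ∈ S0
      · have hjT : j ∉ T := fun h => (Finset.mem_compl.mp (hTsub h)) hj0
        have hjS : j ∉ S := fun h => hjT (hSTsub h)
        rw [if_neg hjT, if_neg hjS, if_pos (Finset.mem_union_left _ hj0),
          if_pos (Finset.mem_union_left _ hj0)]
        ring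
      · have e1 : j ∈ S0 ∪ T ↔ j ∈ T := by simp [Finset.mem_union, hj0]
        have e2 : j ∈ S0 ∪ S ↔ j ∈ S := by simp [Finset.mem_union, hj0]
        rw [if_congr e1 rfl rfl, if_congr e2 rfl rfl]
    have key : ∀ j, 0 ≤ ((MB T).mulVec (xhat T - xhat S)) j := by
      intro j
      rw [Matrix.mulVec_sub, Pi.sub_apply, hMxhat T hTsub]
      have e1 := hexp T (xhat S) j
      have e2 := hexp S (xhat S) j
      have e3 : ((MB S).mulVec (xhat S)) j = bB S j := by rw [hMxhat S hSsub]
      have e4 : ((MB T).mulVec (xhat S)) j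
          = bB S j + (cB T j - cB S j) * xhat S j := by
        rw [e1]; rw [e3] at e2; linarith [e2]
      rw [e4]
      have h5 := hδ j
      have h6 : 0 ≤ cB T j - cB S j := by linarith [hcmono S T hSTsub j]
      have h7 : xhat S j ≤ 1 := hxle1 S hSsub j
      nlinarith [mul_nonneg h6 (sub_nonneg.mpr h7)]
    have h8 := hprin T _ key i
    simp only [Pi.sub_apply] at h8
    linarith
  -- entrywise monotonicity of the inverse
  have hinvmono : ∀ S T : Finset (Fin n), S ⊆ T → T ⊆ S0ᶜ →
      ∀ i j, (MB T)⁻¹ i j ≤ (MB S)⁻¹ i j := by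
    intro S T hSTsub hTsub i j
    have hSsub : S ⊆ S0ᶜ := hSTsub.trans hTsub
    have hdiffM : MB T - MB S = Matrix.diagonal (fun w => cB T w - cB S w) := by
      simp only [hMB]
      ext a b
      by_cases hab : a = b
      · subst hab
        simp only [Matrix.sub_apply, Matrix.add_apply, Matrix.diagonal_apply_eq]
        ring
      · simp only [Matrix.sub_apply, Matrix.add_apply, Matrix.diagonal_apply_ne _ hab]
        ring
    have hid : (MB S)⁻¹ - (MB T)⁻¹ = (MB T)⁻¹ * (MB T - MB S) * (MB S)⁻¹ := by
      rw [mul_sub, Matrix.nonsing_inv_mul _ (hinv' T hTsub), sub_mul, one_mul,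
        mul_assoc, Matrix.mul_nonsing_inv _ (hinv' S hSsub), mul_one]
    have hentry : 0 ≤ ((MB T)⁻¹ * (MB T - MB S) * (MB S)⁻¹) i j := by
      rw [hdiffM, Matrix.mul_apply]
      apply Finset.sum_nonneg
      intro k _
      rw [Matrix.mul_diagonal]
      have h6 : 0 ≤ cB T k - cB S k := by linarith [hcmono S T hSTsub k]
      exact mul_nonneg (mul_nonneg (hinvnn T hTsub i k) h6) (hinvnn S hSsub k j)
    have h2 : (MB S)⁻¹ i j - (MB T)⁻¹ i j
        = ((MB T)⁻¹ * (MB T - MB S) * (MB S)⁻¹) i j := by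
      rw [← hid, Matrix.sub_apply]
    linarith
  -- the rank-one difference formula
  have hdiff : ∀ B : Finset (Fin n), B ⊆ S0ᶜ → u ∉ B → ∀ w : Fin n,
      xhat (insert u B) w - xhat B w
        = κ u * (1 - xhat B u) * (MB (insert u B))⁻¹ w u := by
    intro B hB huB w
    have hB' : insert u B ⊆ S0ᶜ := by
      intro z hz
      rcases Finset.mem_insert.mp hz with h | h
      · subst h; exact Finset.mem_compl.mpr huS0
      · exact hB h
    have hbd : ∀ i, bB (insert u B) i - bB B i = (if i = u then κ u else 0) := by
      intro i
      simp only [hbB]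
      by_cases hiu : i = u
      · subst hiu
        rw [if_pos (Finset.mem_insert_self i B), if_neg huB, if_pos rfl]
        ring
      · have e1 : i ∈ insert u B ↔ i ∈ B := by simp [Finset.mem_insert, hiu]
        rw [if_congr e1 rfl rfl, if_neg hiu]
        ring
    have hcd : ∀ i, cB (insert u B) i - cB B i = (if i = u then κ u else 0) := by
      intro i
      simp only [hcB]
      by_cases hiu : i = u
      · subst hiu
        have h1 : i ∈ S0 ∪ insert i B := Finset.mem_union_right _ (Finset.mem_insert_self i B)
        have h2 : i ∉ S0 ∪ B := by
          rw [Finset.mem_union]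
          rintro (h | h)
          · exact huS0 h
          · exact huB h
        rw [if_pos h1, if_neg h2, if_pos rfl]
        ring
      · have e1 : i ∈ S0 ∪ insert u B ↔ i ∈ S0 ∪ B := by
          simp [Finset.mem_union, Finset.mem_insert, hiu]
        rw [if_congr e1 rfl rfl, if_neg hiu]
        ring
    have hvec : (MB (insert u B)).mulVec (xhat (insert u B) - xhat B)
        = Pi.single u (κ u * (1 - xhat B u)) := by
      funext i
      rw [Matrix.mulVec_sub, Pi.sub_apply, hMxhat _ hB']
      have e1 := hexp (insert u B) (xhat B) i
      have e2 := hexp B (xhat B) i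
      have e3 : ((MB B).mulVec (xhat B)) i = bB B i := by rw [hMxhat B hB]
      have e4 : ((MB (insert u B)).mulVec (xhat B)) i
          = bB B i + (cB (insert u B) i - cB B i) * xhat B i := by
        rw [e1]; rw [e3] at e2; linarith [e2]
      rw [e4]
      have h5 := hbd i
      have h6 := hcd i
      by_cases hiu : i = u
      · subst hiu
        rw [if_pos rfl] at h5 h6
        rw [Pi.single_eq_same]
        linear_combination h5 - xhat B i * h6
      · rw [if_neg hiu] at h5 h6
        rw [Pi.single_eq_of_ne hiu]
        linear_combination h5 - xhat B i * h6
    have h7 := hsolve (insert u B) hB' _ _ hvec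
    have h8 := congrFun h7 w
    rw [Pi.sub_apply, Matrix.mulVec_single] at h8
    simp only [Pi.smul_apply, op_smul_eq_mul, Matrix.col_apply] at h8
    rw [h8]
    ring
  -- assemble
  have hSsub : S1 ⊆ S0ᶜ := hST.trans hTS0
  have huS1 : u ∉ S1 := fun h => huT1 (hST h)
  have hTu : insert u S1 ⊆ insert u T1 := Finset.insert_subset_insert _ hST
  have hTusub : insert u T1 ⊆ S0ᶜ := by
    intro z hz
    rcases Finset.mem_insert.mp hz with h | h
    · subst h; exact Finset.mem_compl.mpr huS0
    · exact hTS0 h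
  rw [hdiff T1 hTS0 huT1 v, hdiff S1 hSsub huS1 v]
  have h1 : 0 ≤ 1 - xhat T1 u := by linarith [hxle1 T1 hTS0 u]
  have h2 : 1 - xhat T1 u ≤ 1 - xhat S1 u := by linarith [hmono S1 T1 hST hTS0 u]
  have h3 : 0 ≤ (MB (insert u T1))⁻¹ v u := hinvnn _ hTusub v u
  have h4 : (MB (insert u T1))⁻¹ v u ≤ (MB (insert u S1))⁻¹ v u :=
    hinvmono _ _ hTu hTusub v u
  have h5 : (1 - xhat T1 u) * (MB (insert u T1))⁻¹ v u
      ≤ (1 - xhat S1 u) * (MB (insert u S1))⁻¹ v u := by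
    nlinarith [mul_nonneg (sub_nonneg.mpr h2) h3,
      mul_nonneg (h1.trans h2) (sub_nonneg.mpr h4)]
  have h6 : 0 ≤ κ u := (hκ u).le
  calc κ u * (1 - xhat T1 u) * (MB (insert u T1))⁻¹ v u
      = κ u * ((1 - xhat T1 u) * (MB (insert u T1))⁻¹ v u) := by ring
    _ ≤ κ u * ((1 - xhat S1 u) * (MB (insert u S1))⁻¹ v u) :=
        mul_le_mul_of_nonneg_left h5 h6
    _ = κ u * (1 - xhat S1 u) * (MB (insert u S1))⁻¹ v u := by ring
end

section
/- For the Laplacian L = D(I − Wᵀ) and the matrix 𝓛 = Π(I − Wᵀ) of a strongly connected weighted directed graph, and for all vectors p, r ∈ ℝⁿ with pᵀ1 = 0 and rᵀ1 = 0, it holds that pᵀ L⁺ D Π⁻¹ r = pᵀ 𝓛⁺ r. -/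
open Matrix BigOperators

/-!
Put `x = 𝓛⁺ r`. Since `ker 𝓛ᵀ = span 1` and `r ⟂ 1`, `r` lies in the range of `𝓛`, on which
`𝓛 𝓛⁺` is the identity, so `𝓛 x = r`. As `L = D Π⁻¹ 𝓛`, this gives `L⁺ D Π⁻¹ r = L⁺ L x`, which
differs from `x` by an element of `ker L = span 1`, invisible to `p ⟂ 1`.
-/

section

variable {m : Type*} [Fintype m]

theorem Penrose.mulVec_mulVec_of_orthogonal_ker_transpose {M Mp : Matrix m m ℝ}
    (h : Penrose M Mp) {r : m → ℝ} (hr : ∀ y, Mᵀ *ᵥ y = 0 → r ⬝ᵥ y = 0) :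
    M *ᵥ (Mp *ᵥ r) = r := by
  obtain ⟨hMMpM, -, hMMp, -⟩ := h
  set v := r - M *ᵥ (Mp *ᵥ r)
  have hv : Mᵀ *ᵥ v = 0 := by
    have hT : Mᵀ * M * Mp = Mᵀ := by rw [mul_assoc, ← hMMp, ← transpose_mul, hMMpM]
    rw [mulVec_sub, mulVec_mulVec, mulVec_mulVec, hT, sub_self]
  have hvv : v ⬝ᵥ v = 0 := by
    calc v ⬝ᵥ v = r ⬝ᵥ v - (Mᵀ *ᵥ v) ⬝ᵥ (Mp *ᵥ r) := by
          rw [mulVec_transpose, ← dotProduct_mulVec, dotProduct_comm r v, ← dotProduct_sub]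
      _ = 0 := by rw [hr v hv, hv, zero_dotProduct, sub_zero]
  exact (sub_eq_zero.mp (dotProduct_self_eq_zero.mp hvv)).symm

theorem dotProduct_mulVec_mul_of_orthogonal_ker {M Mp : Matrix m m ℝ} (h : M * Mp * M = M)
    {p : m → ℝ} (hp : ∀ y, M *ᵥ y = 0 → p ⬝ᵥ y = 0) (x : m → ℝ) :
    p ⬝ᵥ (Mp * M) *ᵥ x = p ⬝ᵥ x := by
  have hker := hp ((Mp * M) *ᵥ x - x) (by rw [mulVec_sub, mulVec_mulVec, ← mul_assoc, h, sub_self])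
  rwa [dotProduct_sub, sub_eq_zero] at hker

theorem dotProduct_eq_zero_of_eq_const {p : m → ℝ} (hp : p ⬝ᵥ (fun _ => (1 : ℝ)) = 0)
    {y : m → ℝ} (hy : ∃ c : ℝ, y = fun _ => c) : p ⬝ᵥ y = 0 := by
  obtain ⟨c, rfl⟩ := hy
  have hc : (fun _ : m => c) = c • fun _ => (1 : ℝ) := by ext; simp
  rw [hc, dotProduct_smul, hp, smul_zero]

variable [DecidableEq m] {w : m → ℝ}

theorem diagonal_mul_mulVec_eq_zero_iff (hw : ∀ i, w i ≠ 0) (B : Matrix m m ℝ) (y : m → ℝ) :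
    (diagonal w * B) *ᵥ y = 0 ↔ B *ᵥ y = 0 := by
  rw [← mulVec_mulVec]
  constructor
  · intro h
    funext i
    simpa [mulVec_diagonal, hw i] using congrFun h i
  · intro h
    rw [h, mulVec_zero]

theorem exists_eq_const_of_mul_diagonal_mulVec_eq_zero (hw : ∀ i, w i ≠ 0)
    {B : Matrix m m ℝ} (hB : ∀ z, B *ᵥ z = 0 → ∃ c : ℝ, z = c • w)
    {y : m → ℝ} (hy : (B * diagonal w) *ᵥ y = 0) : ∃ c : ℝ, y = fun _ => c := by
  rw [← mulVec_mulVec] at hy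
  obtain ⟨c, hc⟩ := hB _ hy
  refine ⟨c, funext fun i => mul_left_cancel₀ (hw i) ?_⟩
  simpa [mulVec_diagonal, mul_comm] using congrFun hc i

end

theorem stmt14_general
    (n : ℕ)
    (d : Fin n → ℝ) (hdpos : ∀ u, 0 < d u)
    (W : Matrix (Fin n) (Fin n) ℝ)
    (pdist : Fin n → ℝ) (hppos : ∀ v, 0 < pdist v)
    (L : Matrix (Fin n) (Fin n) ℝ) (hL : L = Matrix.diagonal d * (1 - Wᵀ))
    (calL : Matrix (Fin n) (Fin n) ℝ)
    (hcalL : calL = Matrix.diagonal pdist * (1 - Wᵀ))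
    -- kernel assumptions (hold by strong connectivity):
    (hker1 : ∀ x : Fin n → ℝ,
      ((1 : Matrix (Fin n) (Fin n) ℝ) - Wᵀ).mulVec x = 0 ↔ ∃ c : ℝ, x = fun _ => c)
    (hker2 : ∀ y : Fin n → ℝ,
      ((1 : Matrix (Fin n) (Fin n) ℝ) - W).mulVec y = 0 ↔ ∃ c : ℝ, y = c • pdist)
    (Lplus : Matrix (Fin n) (Fin n) ℝ) (hLplus : Penrose L Lplus)
    (calLplus : Matrix (Fin n) (Fin n) ℝ) (hcalLplus : Penrose calL calLplus) :
    ∀ p r : Fin n → ℝ, p ⬝ᵥ (fun _ => (1 : ℝ)) = 0 → r ⬝ᵥ (fun _ => (1 : ℝ)) = 0 →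
      p ⬝ᵥ (Lplus * Matrix.diagonal d *
          Matrix.diagonal (fun v => (pdist v)⁻¹)).mulVec r =
        p ⬝ᵥ calLplus.mulVec r := by
  intro p r hp hr
  have hπ : ∀ v, pdist v ≠ 0 := fun v => (hppos v).ne'
  have hLcalL : L = diagonal d * diagonal (fun v => (pdist v)⁻¹) * calL := by
    have hcancel : diagonal (fun v => (pdist v)⁻¹) * diagonal pdist = 1 := by
      rw [diagonal_mul_diagonal, ← diagonal_one]
      exact congrArg diagonal (funext fun v => inv_mul_cancel₀ (hπ v))
    rw [hL, hcalL, mul_assoc, ← mul_assoc _ (diagonal pdist), hcancel, one_mul]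
  have hcalLT : calLᵀ = (1 - W) * diagonal pdist := by
    rw [hcalL, transpose_mul, transpose_sub, transpose_one, transpose_transpose,
      diagonal_transpose]
  set x := calLplus *ᵥ r
  have hx : calL *ᵥ x = r := hcalLplus.mulVec_mulVec_of_orthogonal_ker_transpose fun y hy =>
    dotProduct_eq_zero_of_eq_const hr <| exists_eq_const_of_mul_diagonal_mulVec_eq_zero hπ
      (fun z => (hker2 z).1) (hcalLT ▸ hy)
  calc p ⬝ᵥ (Lplus * diagonal d * diagonal (fun v => (pdist v)⁻¹)) *ᵥ r
      = p ⬝ᵥ (Lplus * L) *ᵥ x := by rw [← hx, mulVec_mulVec, hLcalL]; simp only [mul_assoc]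
    _ = p ⬝ᵥ x := dotProduct_mulVec_mul_of_orthogonal_ker hLplus.1 (fun y hy =>
      dotProduct_eq_zero_of_eq_const hp <| (hker1 y).1 <|
        (diagonal_mul_mulVec_eq_zero_iff (fun u => (hdpos u).ne') _ y).1 (hL ▸ hy)) x

/-- for the Laplacian `L = D(I − Wᵀ)` and `𝓛 = Π(I − Wᵀ)` of a strongly
connected weighted directed graph, for all `p ⟂ 1` and `r ⟂ 1`,
`pᵀ L⁺ D Π⁻¹ r = pᵀ 𝓛⁺ r`. -/
theorem stmt14
    (n : ℕ) (hn : 2 ≤ n)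
    (A : Matrix (Fin n) (Fin n) ℝ)
    (hA : ∀ u v, 0 ≤ A u v)
    (hconn : ∀ u v : Fin n, Relation.ReflTransGen (fun a b => 0 < A a b) u v)
    (d : Fin n → ℝ) (hd : d = fun u => ∑ v, A u v) (hdpos : ∀ u, 0 < d u)
    (W : Matrix (Fin n) (Fin n) ℝ)
    (hW : W = Aᵀ * Matrix.diagonal (fun u => (d u)⁻¹))
    (pdist : Fin n → ℝ) (hppos : ∀ v, 0 < pdist v) (hpsum : ∑ v, pdist v = 1)
    (hpstat : W.mulVec pdist = pdist)
    (L : Matrix (Fin n) (Fin n) ℝ) (hL : L = Matrix.diagonal d * (1 - Wᵀ))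
    (calL : Matrix (Fin n) (Fin n) ℝ)
    (hcalL : calL = Matrix.diagonal pdist * (1 - Wᵀ))
    -- kernel assumptions (hold by strong connectivity):
    (hker1 : ∀ x : Fin n → ℝ,
      ((1 : Matrix (Fin n) (Fin n) ℝ) - Wᵀ).mulVec x = 0 ↔ ∃ c : ℝ, x = fun _ => c)
    (hker2 : ∀ y : Fin n → ℝ,
      ((1 : Matrix (Fin n) (Fin n) ℝ) - W).mulVec y = 0 ↔ ∃ c : ℝ, y = c • pdist)
    (Lplus : Matrix (Fin n) (Fin n) ℝ) (hLplus : Penrose L Lplus)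
    (calLplus : Matrix (Fin n) (Fin n) ℝ) (hcalLplus : Penrose calL calLplus) :
    ∀ p r : Fin n → ℝ, p ⬝ᵥ (fun _ => (1 : ℝ)) = 0 → r ⬝ᵥ (fun _ => (1 : ℝ)) = 0 →
      p ⬝ᵥ (Lplus * Matrix.diagonal d *
          Matrix.diagonal (fun v => (pdist v)⁻¹)).mulVec r =
        p ⬝ᵥ calLplus.mulVec r :=
  stmt14_general n d hdpos W pdist hppos L hL calL hcalL hker1 hker2 Lplus hLplus calLplus hcalLplus
end

section
/- For a strongly connected weighted directed graph with random-walk transition matrix W and stationary distribution π (Π = diag(π)), and for every vector y ∈ ℝⁿ with yᵀ1 = 0, it holds that Π(I − Wᵀ)·(I − Wᵀ)⁺·Π⁻¹·y = (I − (1/n)·1·1ᵀ)·y, and hence this product equals y. -/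
open Matrix BigOperators

/-- for a strongly connected weighted directed graph with random-walk
matrix `W` and stationary distribution `π`, for every `y ⟂ 1`,
`Π(I − Wᵀ)(I − Wᵀ)⁺Π⁻¹ y = (I − (1/n)·1·1ᵀ) y`, and hence this product equals `y`. -/
theorem stmt15
    (n : ℕ) (hn : 2 ≤ n)
    (A : Matrix (Fin n) (Fin n) ℝ)
    (hA : ∀ u v, 0 ≤ A u v)
    (hconn : ∀ u v : Fin n, Relation.ReflTransGen (fun a b => 0 < A a b) u v)
    (d : Fin n → ℝ) (hd : d = fun u => ∑ v, A u v) (hdpos : ∀ u, 0 < d u)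
    (W : Matrix (Fin n) (Fin n) ℝ)
    (hW : W = Aᵀ * Matrix.diagonal (fun u => (d u)⁻¹))
    (pdist : Fin n → ℝ) (hppos : ∀ v, 0 < pdist v) (hpsum : ∑ v, pdist v = 1)
    (hpstat : W.mulVec pdist = pdist)
    -- kernel assumption (holds by strong connectivity):
    (hker : ∀ y : Fin n → ℝ,
      ((1 : Matrix (Fin n) (Fin n) ℝ) - W).mulVec y = 0 ↔ ∃ c : ℝ, y = c • pdist)
    -- `(I − Wᵀ)⁺`:
    (Bplus : Matrix (Fin n) (Fin n) ℝ)
    (hBplus : Penrose ((1 : Matrix (Fin n) (Fin n) ℝ) - Wᵀ) Bplus) :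
    ∀ y : Fin n → ℝ, y ⬝ᵥ (fun _ => (1 : ℝ)) = 0 →
      (Matrix.diagonal pdist * ((1 : Matrix (Fin n) (Fin n) ℝ) - Wᵀ) * Bplus *
          Matrix.diagonal (fun v => (pdist v)⁻¹)).mulVec y =
        ((1 : Matrix (Fin n) (Fin n) ℝ) -
          (n : ℝ)⁻¹ • Matrix.of (fun _ _ : Fin n => (1 : ℝ))).mulVec y ∧
      (Matrix.diagonal pdist * ((1 : Matrix (Fin n) (Fin n) ℝ) - Wᵀ) * Bplus *
          Matrix.diagonal (fun v => (pdist v)⁻¹)).mulVec y = y := by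

  obtain ⟨h1, h2, h3, h4⟩ := hBplus
  intro y hy
  set B : Matrix (Fin n) (Fin n) ℝ := (1 : Matrix (Fin n) (Fin n) ℝ) - Wᵀ with hB
  set P : Matrix (Fin n) (Fin n) ℝ := B * Bplus with hP
  have hBt : Bᵀ = (1 : Matrix (Fin n) (Fin n) ℝ) - W := by
    simp [hB, Matrix.transpose_sub]
  set x : Fin n → ℝ := fun v => (pdist v)⁻¹ * y v with hx
  have hxdiag : (Matrix.diagonal (fun v => (pdist v)⁻¹)).mulVec y = x := by
    funext v; simp [Matrix.mulVec_diagonal, hx]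
  have hsum : ∑ v, y v = 0 := by simpa [dotProduct] using hy
  have hxp : pdist ⬝ᵥ x = 0 := by
    have : ∀ v, pdist v * x v = y v := fun v =>
      mul_inv_cancel_left₀ (hppos v).ne' (y v)
    simpa [dotProduct, this] using hsum
  have hPP : P * P = P := by
    nth_rewrite 2 [hP]
    rw [← Matrix.mul_assoc, h1, hP]
  have hBtP : Bᵀ * P = Bᵀ := by
    rw [← h3, ← Matrix.transpose_mul, h1]
  set z : Fin n → ℝ := x - P.mulVec x with hz
  have hz0 : ((1 : Matrix (Fin n) (Fin n) ℝ) - W).mulVec z = 0 := by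
    rw [← hBt, hz, Matrix.mulVec_sub, Matrix.mulVec_mulVec, hBtP, sub_self]
  obtain ⟨c, hc⟩ := (hker z).mp hz0
  have hzx : z ⬝ᵥ x = 0 := by
    rw [hc, smul_dotProduct, hxp, smul_zero]
  have hPz : P.mulVec z = 0 := by
    rw [hz, Matrix.mulVec_sub, Matrix.mulVec_mulVec, hPP, sub_self]
  have hzPx : z ⬝ᵥ P.mulVec x = 0 := by
    rw [Matrix.dotProduct_mulVec, ← Matrix.mulVec_transpose, h3, hPz,
      zero_dotProduct]
  have hzz : z ⬝ᵥ z = 0 := by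
    calc z ⬝ᵥ z = z ⬝ᵥ x - z ⬝ᵥ P.mulVec x := by
          rw [hz]; rw [dotProduct_sub]
      _ = 0 := by rw [hzx, hzPx, sub_zero]
  have hz00 : z = 0 := by
    funext v
    have hnn : ∀ i ∈ Finset.univ, 0 ≤ z i * z i := fun i _ => mul_self_nonneg _
    have := (Finset.sum_eq_zero_iff_of_nonneg hnn).mp hzz v (Finset.mem_univ v)
    exact mul_self_eq_zero.mp this
  have hPx : P.mulVec x = x := by
    have h' : x - P.mulVec x = 0 := by rw [← hz]; exact hz00
    exact (sub_eq_zero.mp h').symm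
  have hmain : (Matrix.diagonal pdist * B * Bplus *
      Matrix.diagonal (fun v => (pdist v)⁻¹)).mulVec y = y := by
    have hBBx : B.mulVec (Bplus.mulVec x) = x := by
      rw [Matrix.mulVec_mulVec, ← hP, hPx]
    rw [← Matrix.mulVec_mulVec, hxdiag, ← Matrix.mulVec_mulVec,
      ← Matrix.mulVec_mulVec, hBBx]
    funext v
    simp only [Matrix.mulVec_diagonal, hx]
    exact mul_inv_cancel_left₀ (hppos v).ne' (y v)
  have hones : (Matrix.of (fun _ _ : Fin n => (1 : ℝ))).mulVec y = 0 := by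
    funext v
    simp [Matrix.mulVec, dotProduct, hsum]
  have hrhs : ((1 : Matrix (Fin n) (Fin n) ℝ) -
      (n : ℝ)⁻¹ • Matrix.of (fun _ _ : Fin n => (1 : ℝ))).mulVec y = y := by
    rw [Matrix.sub_mulVec, Matrix.one_mulVec, Matrix.smul_mulVec, hones,
      smul_zero, sub_zero]
  exact ⟨hmain.trans hrhs.symm, hmain⟩
end

section
/- For a strongly connected weighted directed graph with 𝓛 = Π(I − Wᵀ) and R = (I − Wᵀ)⁺Π⁻¹, and for all vectors p, r ∈ ℝⁿ with pᵀ1 = 0 and rᵀ1 = 0, it holds that pᵀ 𝓛⁺ r = pᵀ R r. -/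
/-!
For a Moore–Penrose pair `(M, M⁺)`, `M M⁺` is the orthogonal projection onto `range M`, the
orthogonal complement of `ker Mᵀ`. Here `ker 𝓛ᵀ = span 1` and `ker (I − Wᵀ)ᵀ = span π`, so
`r ⟂ 1` gives `𝓛 𝓛⁺ r = r` and `Π⁻¹ r ⟂ π` gives `(I − Wᵀ)(I − Wᵀ)⁺ Π⁻¹ r = Π⁻¹ r`. Hence
both `𝓛⁺ r` and `R r` solve `(I − Wᵀ) x = Π⁻¹ r`; their difference lies in
`ker (I − Wᵀ) = span 1`, which `p` annihilates.
-/

open Matrix BigOperators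

section

variable {ι : Type*} [Fintype ι]

lemma dotProduct_const_eq_zero {p : ι → ℝ} (hp : p ⬝ᵥ (fun _ => (1 : ℝ)) = 0) (c : ℝ) :
    p ⬝ᵥ (fun _ => c) = 0 := by
  simpa [dotProduct, ← Finset.sum_mul] using Or.inl hp

lemma Penrose.mulVec_mulVec_eq_self {M Mp : Matrix ι ι ℝ} (h : Penrose M Mp) {r : ι → ℝ}
    (hr : ∀ v, Mᵀ *ᵥ v = 0 → r ⬝ᵥ v = 0) : M *ᵥ (Mp *ᵥ r) = r := by
  obtain ⟨h1, -, h3, -⟩ := h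
  set e := r - M *ᵥ (Mp *ᵥ r)
  have hMe : Mᵀ *ᵥ e = 0 := by
    have : Mᵀ * (M * Mp) = Mᵀ := by rw [← h3, ← transpose_mul, h1]
    simp only [e, mulVec_sub, mulVec_mulVec, this, sub_self]
  have hee : e ⬝ᵥ e = 0 := by
    calc e ⬝ᵥ e = r ⬝ᵥ e - (Mp *ᵥ r) ⬝ᵥ (Mᵀ *ᵥ e) := by
          rw [dotProduct_mulVec, vecMul_transpose, ← sub_dotProduct]
      _ = 0 := by rw [hr e hMe, hMe, dotProduct_zero, sub_zero]
  exact (sub_eq_zero.1 (dotProduct_self_eq_zero.1 hee)).symm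

variable [DecidableEq ι]

lemma exists_eq_const_of_transpose_diagonal_mul_mulVec_eq_zero {B : Matrix ι ι ℝ} {π : ι → ℝ}
    (hπ : ∀ i, π i ≠ 0) (hker : ∀ y, Bᵀ *ᵥ y = 0 → ∃ c : ℝ, y = c • π) {v : ι → ℝ}
    (hv : (diagonal π * B)ᵀ *ᵥ v = 0) : ∃ c : ℝ, v = fun _ => c := by
  rw [transpose_mul, diagonal_transpose, ← mulVec_mulVec] at hv
  obtain ⟨c, hc⟩ := hker _ hv
  refine ⟨c, funext fun i => mul_left_cancel₀ (hπ i) ?_⟩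
  simpa [mulVec_diagonal, mul_comm] using congrFun hc i

lemma diagonal_inv_mulVec_dotProduct_smul {π : ι → ℝ} (hπ : ∀ i, π i ≠ 0) (r : ι → ℝ) (c : ℝ) :
    (diagonal (fun i => (π i)⁻¹) *ᵥ r) ⬝ᵥ (c • π) = r ⬝ᵥ (fun _ => c) := by
  refine Finset.sum_congr rfl fun i _ => ?_
  simp only [mulVec_diagonal, Pi.smul_apply, smul_eq_mul]
  field_simp [hπ i]

end

theorem stmt16_general
    (n : ℕ)
    (W : Matrix (Fin n) (Fin n) ℝ)
    (pdist : Fin n → ℝ) (hppos : ∀ v, 0 < pdist v)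
    (calL : Matrix (Fin n) (Fin n) ℝ)
    (hcalL : calL = Matrix.diagonal pdist * (1 - Wᵀ))
    -- kernel assumptions (hold by strong connectivity):
    (hker1 : ∀ x : Fin n → ℝ,
      ((1 : Matrix (Fin n) (Fin n) ℝ) - Wᵀ).mulVec x = 0 ↔ ∃ c : ℝ, x = fun _ => c)
    (hker2 : ∀ y : Fin n → ℝ,
      ((1 : Matrix (Fin n) (Fin n) ℝ) - W).mulVec y = 0 ↔ ∃ c : ℝ, y = c • pdist)
    (calLplus : Matrix (Fin n) (Fin n) ℝ) (hcalLplus : Penrose calL calLplus)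
    -- `(I − Wᵀ)⁺` and `R = (I − Wᵀ)⁺ Π⁻¹`:
    (Bplus : Matrix (Fin n) (Fin n) ℝ)
    (hBplus : Penrose ((1 : Matrix (Fin n) (Fin n) ℝ) - Wᵀ) Bplus)
    (R : Matrix (Fin n) (Fin n) ℝ)
    (hR : R = Bplus * Matrix.diagonal (fun v => (pdist v)⁻¹)) :
    ∀ p r : Fin n → ℝ, p ⬝ᵥ (fun _ => (1 : ℝ)) = 0 → r ⬝ᵥ (fun _ => (1 : ℝ)) = 0 →
      p ⬝ᵥ calLplus.mulVec r = p ⬝ᵥ R.mulVec r := by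
  intro p r hp hr
  have hπ : ∀ v, pdist v ≠ 0 := fun v => (hppos v).ne'
  set B : Matrix (Fin n) (Fin n) ℝ := 1 - Wᵀ
  have hkerB : ∀ y, Bᵀ *ᵥ y = 0 → ∃ c : ℝ, y = c • pdist := fun y hy =>
    (hker2 y).1 (by simpa [B, transpose_sub] using hy)
  set s := diagonal (fun v => (pdist v)⁻¹) *ᵥ r
  have hLr : calL *ᵥ (calLplus *ᵥ r) = r := hcalLplus.mulVec_mulVec_eq_self fun v hv => by
    obtain ⟨c, rfl⟩ :=
      exists_eq_const_of_transpose_diagonal_mul_mulVec_eq_zero hπ hkerB (hcalL ▸ hv)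
    exact dotProduct_const_eq_zero hr c
  have hBs : B *ᵥ (Bplus *ᵥ s) = s := hBplus.mulVec_mulVec_eq_self fun v hv => by
    obtain ⟨c, rfl⟩ := hkerB v hv
    rw [diagonal_inv_mulVec_dotProduct_smul hπ, dotProduct_const_eq_zero hr c]
  have hBLr : B *ᵥ (calLplus *ᵥ r) = s := by
    have h : diagonal pdist *ᵥ (B *ᵥ (calLplus *ᵥ r)) = r := by
      rw [mulVec_mulVec, ← hcalL, hLr]
    calc B *ᵥ (calLplus *ᵥ r)
        = diagonal (fun v => (pdist v)⁻¹) *ᵥ (diagonal pdist *ᵥ (B *ᵥ (calLplus *ᵥ r))) := by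
          rw [mulVec_mulVec _ _ (diagonal pdist), diagonal_mul_diagonal]; simp [hπ]
      _ = s := by rw [h]
  obtain ⟨c, hc⟩ := (hker1 _).1 (show B *ᵥ (calLplus *ᵥ r - R *ᵥ r) = 0 by
    rw [mulVec_sub, hBLr, hR, ← mulVec_mulVec, hBs, sub_self])
  rw [← sub_eq_zero, ← dotProduct_sub, hc, dotProduct_const_eq_zero hp]

/-- for a strongly connected weighted directed graph with
`𝓛 = Π(I − Wᵀ)` and `R = (I − Wᵀ)⁺Π⁻¹`, for all `p ⟂ 1` and `r ⟂ 1`,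
`pᵀ 𝓛⁺ r = pᵀ R r`. -/
theorem stmt16
    (n : ℕ) (hn : 2 ≤ n)
    (A : Matrix (Fin n) (Fin n) ℝ)
    (hA : ∀ u v, 0 ≤ A u v)
    (hconn : ∀ u v : Fin n, Relation.ReflTransGen (fun a b => 0 < A a b) u v)
    (d : Fin n → ℝ) (hd : d = fun u => ∑ v, A u v) (hdpos : ∀ u, 0 < d u)
    (W : Matrix (Fin n) (Fin n) ℝ)
    (hW : W = Aᵀ * Matrix.diagonal (fun u => (d u)⁻¹))
    (pdist : Fin n → ℝ) (hppos : ∀ v, 0 < pdist v) (hpsum : ∑ v, pdist v = 1)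
    (hpstat : W.mulVec pdist = pdist)
    (calL : Matrix (Fin n) (Fin n) ℝ)
    (hcalL : calL = Matrix.diagonal pdist * (1 - Wᵀ))
    -- kernel assumptions (hold by strong connectivity):
    (hker1 : ∀ x : Fin n → ℝ,
      ((1 : Matrix (Fin n) (Fin n) ℝ) - Wᵀ).mulVec x = 0 ↔ ∃ c : ℝ, x = fun _ => c)
    (hker2 : ∀ y : Fin n → ℝ,
      ((1 : Matrix (Fin n) (Fin n) ℝ) - W).mulVec y = 0 ↔ ∃ c : ℝ, y = c • pdist)
    (calLplus : Matrix (Fin n) (Fin n) ℝ) (hcalLplus : Penrose calL calLplus)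
    -- `(I − Wᵀ)⁺` and `R = (I − Wᵀ)⁺ Π⁻¹`:
    (Bplus : Matrix (Fin n) (Fin n) ℝ)
    (hBplus : Penrose ((1 : Matrix (Fin n) (Fin n) ℝ) - Wᵀ) Bplus)
    (R : Matrix (Fin n) (Fin n) ℝ)
    (hR : R = Bplus * Matrix.diagonal (fun v => (pdist v)⁻¹)) :
    ∀ p r : Fin n → ℝ, p ⬝ᵥ (fun _ => (1 : ℝ)) = 0 → r ⬝ᵥ (fun _ => (1 : ℝ)) = 0 →
      p ⬝ᵥ calLplus.mulVec r = p ⬝ᵥ R.mulVec r :=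
  stmt16_general n W pdist hppos calL hcalL hker1 hker2 calLplus hcalLplus Bplus hBplus R hR
end

section
/- For the Laplacian L = D(I − Wᵀ) of a strongly connected weighted directed graph, any vertex s0, and any κ0 > 0, the matrix L + κ0·e_{s0}·e_{s0}ᵀ is invertible and its inverse equals L⁺ − (1/q_{s0})·(L⁺e_{s0})·qᵀ − 1·(e_{s0}ᵀL⁺) + (1/κ0 + (L⁺)_{s0,s0})·(1/q_{s0})·1·qᵀ, where q = D⁻¹π. -/
/-!
Write `e = e_s`, `1` for the all-ones vector and `B` for the proposed inverse, built from any
`G` with `L G L = L`. A direct computation gives `B e = κ⁻¹ 1` whatever `G` is, and since `q` is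
a left null vector of `L`, `B L = G L - 1 (eᵀ G L)`. The columns of `I - G L` lie in
`ker L = span 1`, so `I - G L = 1 (eᵀ (I - G L))`, which turns `B L` into `I - 1 eᵀ`. Hence
`B (L + κ e eᵀ) = I - 1 eᵀ + κ (B e) eᵀ = I`.
-/

open Matrix

namespace Matrix

variable {ι : Type*} [Fintype ι] [DecidableEq ι]

theorem eq_vecMulVec_one_of_mul_eq_zero {R : Type*} [Semiring R] {M N : Matrix ι ι R}
    (hker : ∀ x, M *ᵥ x = 0 → ∃ c : R, x = fun _ => c) (hMN : M * N = 0) (s : ι) :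
    N = vecMulVec 1 (N s) := by
  ext i j
  obtain ⟨c, hc⟩ := hker (N *ᵥ Pi.single j 1) (by rw [mulVec_mulVec, hMN, zero_mulVec])
  have hcol : ∀ k, N k j = c := fun k => by simpa [mulVec_single_one] using congrFun hc k
  simp [vecMulVec_apply, hcol]

variable {K : Type*} [Field K]

/-- Built from a generalized inverse `G` of `L` and a left null vector `q` of `L`, this is the
inverse of `L` grounded at `s`, i.e. of `L + κ eₛ eₛᵀ`. -/
def groundedInv (G : Matrix ι ι K) (q : ι → K) (s : ι) (κ : K) : Matrix ι ι K :=
  G - (q s)⁻¹ • vecMulVec (G *ᵥ Pi.single s 1) q - vecMulVec 1 (G s)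
    + ((κ⁻¹ + G s s) * (q s)⁻¹) • vecMulVec 1 q

variable {L G : Matrix ι ι K} {q : ι → K} {s : ι} {κ : K}

theorem groundedInv_mulVec_single (hqs : q s ≠ 0) :
    groundedInv G q s κ *ᵥ Pi.single s 1 = κ⁻¹ • 1 := by
  simp only [groundedInv, add_mulVec, sub_mulVec, smul_mulVec, vecMulVec_mulVec, op_smul_eq_smul,
    dotProduct_single_one, smul_smul, inv_mul_cancel₀ hqs, mul_assoc, mul_one]
  module

theorem groundedInv_mul (hker : ∀ x, L *ᵥ x = 0 → ∃ c : K, x = fun _ => c)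
    (hLGL : L * G * L = L) (hqL : q ᵥ* L = 0) :
    groundedInv G q s κ * L = 1 - vecMulVec 1 (Pi.single s 1) := by
  have hN : 1 - G * L = vecMulVec 1 ((1 - G * L) s) :=
    eq_vecMulVec_one_of_mul_eq_zero hker
      (by rw [Matrix.mul_sub, Matrix.mul_one, ← Matrix.mul_assoc, hLGL, sub_self]) s
  have hrow : (1 - G * L) s = Pi.single s 1 - G s ᵥ* L := by
    ext j
    simp [one_apply, Pi.single_apply, eq_comm, mul_apply, vecMul, dotProduct]
  rw [hrow, vecMulVec_sub] at hN
  simp only [groundedInv, add_mul, sub_mul, smul_mul, vecMulVec_mul, hqL, vecMulVec_zero,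
    smul_zero, sub_zero, add_zero]
  calc G * L - vecMulVec 1 (G s ᵥ* L)
      = 1 - (1 - G * L) - vecMulVec 1 (G s ᵥ* L) := by abel
    _ = 1 - vecMulVec 1 (Pi.single s 1) := by rw [hN]; abel

theorem groundedInv_mul_add_smul_vecMulVec_single
    (hker : ∀ x, L *ᵥ x = 0 → ∃ c : K, x = fun _ => c) (hLGL : L * G * L = L)
    (hqL : q ᵥ* L = 0) (hqs : q s ≠ 0) (hκ : κ ≠ 0) :
    groundedInv G q s κ * (L + κ • vecMulVec (Pi.single s 1) (Pi.single s 1)) = 1 := by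
  rw [Matrix.mul_add, groundedInv_mul hker hLGL hqL, Matrix.mul_smul, mul_vecMulVec,
    groundedInv_mulVec_single hqs, smul_vecMulVec, smul_smul, mul_inv_cancel₀ hκ,
    one_smul, sub_add_cancel]

end Matrix

theorem stmt17_general
    (n : ℕ)
    (d : Fin n → ℝ) (hdpos : ∀ u, 0 < d u)
    (pdist : Fin n → ℝ) (hppos : ∀ v, 0 < pdist v)
    (L : Matrix (Fin n) (Fin n) ℝ)
    -- `q = D⁻¹ π`:
    (q : Fin n → ℝ) (hq : q = fun v => (d v)⁻¹ * pdist v)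
    -- kernel assumptions (hold by strong connectivity):
    (hker1 : ∀ x : Fin n → ℝ, L.mulVec x = 0 ↔ ∃ c : ℝ, x = fun _ => c)
    (hker2 : ∀ y : Fin n → ℝ, Lᵀ.mulVec y = 0 ↔ ∃ c : ℝ, y = c • q)
    (Lplus : Matrix (Fin n) (Fin n) ℝ) (hLplus : Penrose L Lplus)
    (s0 : Fin n) (κ0 : ℝ) (hκ0 : 0 < κ0) :
    IsUnit (L + κ0 • Matrix.vecMulVec (Pi.single s0 (1 : ℝ))
        (Pi.single s0 (1 : ℝ))).det ∧
    (L + κ0 • Matrix.vecMulVec (Pi.single s0 (1 : ℝ)) (Pi.single s0 (1 : ℝ)))⁻¹ =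
      Lplus
        - (q s0)⁻¹ • Matrix.vecMulVec (Lplus.mulVec (Pi.single s0 (1 : ℝ))) q
        - Matrix.vecMulVec (fun _ => (1 : ℝ)) (fun j => Lplus s0 j)
        + ((κ0⁻¹ + Lplus s0 s0) * (q s0)⁻¹) •
            Matrix.vecMulVec (fun _ => (1 : ℝ)) q := by
  have hqs : q s0 ≠ 0 := by
    rw [hq]
    exact (mul_pos (inv_pos.2 (hdpos s0)) (hppos s0)).ne'
  have hqL : q ᵥ* L = 0 := by
    rw [← mulVec_transpose]
    exact (hker2 q).2 ⟨1, (one_smul ℝ q).symm⟩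
  have hinv := groundedInv_mul_add_smul_vecMulVec_single (fun x => (hker1 x).1)
    hLplus.1 hqL hqs hκ0.ne'
  exact ⟨isUnit_det_of_left_inverse hinv, inv_eq_left_inv hinv⟩

/-- for the Laplacian `L = D(I − Wᵀ)` of a strongly connected weighted
directed graph, any vertex `s0` and any `κ0 > 0`, the matrix `L + κ0 e_{s0} e_{s0}ᵀ`
is invertible and
`(L + κ0 e_{s0} e_{s0}ᵀ)⁻¹ = L⁺ − (1/q_{s0}) (L⁺ e_{s0}) qᵀ − 1 (e_{s0}ᵀ L⁺)
  + (1/κ0 + (L⁺)_{s0,s0}) (1/q_{s0}) 1 qᵀ`, where `q = D⁻¹π`. -/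
theorem stmt17
    (n : ℕ) (hn : 2 ≤ n)
    (A : Matrix (Fin n) (Fin n) ℝ)
    (hA : ∀ u v, 0 ≤ A u v)
    (hconn : ∀ u v : Fin n, Relation.ReflTransGen (fun a b => 0 < A a b) u v)
    (d : Fin n → ℝ) (hd : d = fun u => ∑ v, A u v) (hdpos : ∀ u, 0 < d u)
    (W : Matrix (Fin n) (Fin n) ℝ)
    (hW : W = Aᵀ * Matrix.diagonal (fun u => (d u)⁻¹))
    (pdist : Fin n → ℝ) (hppos : ∀ v, 0 < pdist v) (hpsum : ∑ v, pdist v = 1)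
    (hpstat : W.mulVec pdist = pdist)
    (L : Matrix (Fin n) (Fin n) ℝ) (hL : L = Matrix.diagonal d * (1 - Wᵀ))
    -- `q = D⁻¹ π`:
    (q : Fin n → ℝ) (hq : q = fun v => (d v)⁻¹ * pdist v)
    -- kernel assumptions (hold by strong connectivity):
    (hker1 : ∀ x : Fin n → ℝ, L.mulVec x = 0 ↔ ∃ c : ℝ, x = fun _ => c)
    (hker2 : ∀ y : Fin n → ℝ, Lᵀ.mulVec y = 0 ↔ ∃ c : ℝ, y = c • q)
    (Lplus : Matrix (Fin n) (Fin n) ℝ) (hLplus : Penrose L Lplus)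
    (s0 : Fin n) (κ0 : ℝ) (hκ0 : 0 < κ0) :
    IsUnit (L + κ0 • Matrix.vecMulVec (Pi.single s0 (1 : ℝ))
        (Pi.single s0 (1 : ℝ))).det ∧
    (L + κ0 • Matrix.vecMulVec (Pi.single s0 (1 : ℝ)) (Pi.single s0 (1 : ℝ)))⁻¹ =
      Lplus
        - (q s0)⁻¹ • Matrix.vecMulVec (Lplus.mulVec (Pi.single s0 (1 : ℝ))) q
        - Matrix.vecMulVec (fun _ => (1 : ℝ)) (fun j => Lplus s0 j)
        + ((κ0⁻¹ + Lplus s0 s0) * (q s0)⁻¹) •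
            Matrix.vecMulVec (fun _ => (1 : ℝ)) q :=
  stmt17_general n d hdpos pdist hppos L q hq hker1 hker2 Lplus hLplus s0 κ0 hκ0
end

section
/- Let V be a finite set, Q ⊆ V, and let μ be a real-valued set function on subsets of V with μ(∅) = 0 that is monotone (S ⊆ T implies μ(S) ≤ μ(T)) and submodular (for all S ⊆ T ⊆ V and u ∈ V ∖ T, μ(T ∪ {u}) − μ(T) ≤ μ(S ∪ {u}) − μ(S)). Let s_1, …, s_{t+1} be distinct elements of Q chosen greedily: setting P_0 = ∅ and P_i = {s_1, …, s_i}, assume that for each i = 1, …, t+1 and every u ∈ Q ∖ P_{i−1}, μ(P_{i−1} ∪ {s_i}) ≥ μ(P_{i−1} ∪ {u}). Then the marginal gain of the last element satisfies μ(P_{t+1}) − μ(P_t) ≤ μ(P_{t+1})/(t+1), and equivalently μ(P_t) ≥ (t/(t+1))·μ(P_{t+1}). -/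
/-!
Submodularity and the greedy choice together make the marginal gains along a greedy sequence
non-increasing: the gain of `s_{t+1}` on top of `P_t` is at most its gain on top of the smaller
`P_j`, which is at most the gain of the greedy choice `s_{j+1}` there. Hence `t + 1` copies of the
last gain are bounded by the telescoping sum of all gains, which is `μ(P_{t+1}) - μ(∅) = μ(P_{t+1})`.
-/

open Finset

theorem succ_mul_sub_le_sub_zero_of_forall_sub_le (f : ℕ → ℝ) (t : ℕ)
    (h : ∀ j ≤ t, f (t + 1) - f t ≤ f (j + 1) - f j) :
    ((t : ℝ) + 1) * (f (t + 1) - f t) ≤ f (t + 1) - f 0 := by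
  calc ((t : ℝ) + 1) * (f (t + 1) - f t)
      = #(range (t + 1)) • (f (t + 1) - f t) := by simp
    _ ≤ ∑ j ∈ range (t + 1), (f (j + 1) - f j) :=
        card_nsmul_le_sum _ _ _ fun j hj => h j (Nat.lt_succ_iff.mp (mem_range.mp hj))
    _ = f (t + 1) - f 0 := sum_range_sub f (t + 1)

section Prefix

variable {α : Type*} [DecidableEq α] (s : ℕ → α)

theorem image_Icc_one_succ (i : ℕ) :
    (Icc 1 (i + 1)).image s = insert (s (i + 1)) ((Icc 1 i).image s) := by
  rw [← insert_Icc_right_eq_Icc_add_one (by omega), image_insert]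

theorem monotone_image_Icc_one : Monotone fun i => (Icc 1 i).image s :=
  fun _ _ hij => image_subset_image (Icc_subset_Icc_right hij)

theorem notMem_image_Icc_one_of_injOn {n i : ℕ} (hs : Set.InjOn s (Set.Icc 1 n)) (hi : i < n) :
    s n ∉ (Icc 1 i).image s := by
  simp only [mem_image, mem_Icc, not_exists, not_and]
  intro j hj hsj
  have : j = n := hs ⟨hj.1, by omega⟩ ⟨by omega, le_rfl⟩ hsj
  omega

end Prefix

theorem greedy_last_gain_le_gain {α : Type*} [DecidableEq α] (Q : Finset α)
    (μ : Finset α → ℝ)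
    (hsub : ∀ S T : Finset α, ∀ u : α, S ⊆ T → u ∉ T →
      μ (insert u T) - μ T ≤ μ (insert u S) - μ S)
    (s : ℕ → α) (P : ℕ → Finset α) (hP_mono : Monotone P)
    (hP_succ : ∀ i, P (i + 1) = insert (s (i + 1)) (P i))
    {t j : ℕ} (hjt : j ≤ t) (hlast_mem : s (t + 1) ∈ Q) (hlast_notMem : s (t + 1) ∉ P t)
    (hgreedy : ∀ i ∈ Icc 1 (t + 1), ∀ u ∈ Q, u ∉ P (i - 1) →
      μ (insert u (P (i - 1))) ≤ μ (insert (s i) (P (i - 1)))) :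
    μ (P (t + 1)) - μ (P t) ≤ μ (P (j + 1)) - μ (P j) := by
  have hsub_step : μ (P (t + 1)) - μ (P t) ≤ μ (insert (s (t + 1)) (P j)) - μ (P j) := by
    rw [hP_succ]
    exact hsub _ _ _ (hP_mono hjt) hlast_notMem
  have hgreedy_step : μ (insert (s (t + 1)) (P j)) ≤ μ (P (j + 1)) := by
    rw [hP_succ]
    exact hgreedy (j + 1) (mem_Icc.mpr ⟨by omega, by omega⟩) _ hlast_mem
      fun h => hlast_notMem (hP_mono hjt h)
  linarith

theorem stmt19_general
    {α : Type*} [DecidableEq α]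
    (Q : Finset α)
    (μ : Finset α → ℝ)
    (hμ0 : μ ∅ = 0)
    (hsub : ∀ S T : Finset α, ∀ u : α, S ⊆ T → u ∉ T →
      μ (insert u T) - μ T ≤ μ (insert u S) - μ S)
    (t : ℕ) (s : ℕ → α)
    -- `s_1, …, s_{t+1}` are distinct elements of `Q`:
    (hdistinct : Set.InjOn s (Set.Icc 1 (t + 1)))
    (hmem : ∀ i ∈ Finset.Icc 1 (t + 1), s i ∈ Q)
    -- `P_i = {s_1, …, s_i}`:
    (P : ℕ → Finset α) (hP : P = fun i => (Finset.Icc 1 i).image s)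
    -- the sequence is chosen greedily:
    (hgreedy : ∀ i ∈ Finset.Icc 1 (t + 1), ∀ u ∈ Q, u ∉ P (i - 1) →
      μ (insert u (P (i - 1))) ≤ μ (insert (s i) (P (i - 1)))) :
    μ (P (t + 1)) - μ (P t) ≤ μ (P (t + 1)) / (t + 1) ∧
    ((t : ℝ) / (t + 1)) * μ (P (t + 1)) ≤ μ (P t) := by
  have hP0 : μ (P 0) = 0 := by simp [hP, hμ0]
  have hbound : ((t : ℝ) + 1) * (μ (P (t + 1)) - μ (P t)) ≤ μ (P (t + 1)) := by
    have := succ_mul_sub_le_sub_zero_of_forall_sub_le (μ ∘ P) t fun j hjt =>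
      greedy_last_gain_le_gain Q μ hsub s P (hP ▸ monotone_image_Icc_one s)
        (hP ▸ image_Icc_one_succ s) hjt (hmem (t + 1) (by simp))
        (hP ▸ notMem_image_Icc_one_of_injOn s hdistinct (by omega)) hgreedy
    simpa [hP0] using this
  have ht : (0 : ℝ) < t + 1 := by positivity
  constructor
  · rw [le_div_iff₀ ht]
    linarith
  · rw [div_mul_eq_mul_div, div_le_iff₀ ht]
    linarith

/-- for a monotone submodular set function `μ` with `μ(∅) = 0` and a
greedily chosen sequence `s_1, …, s_{t+1}` of distinct elements of `Q` with prefixes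
`P_i = {s_1, …, s_i}`, the marginal gain of the last element satisfies
`μ(P_{t+1}) − μ(P_t) ≤ μ(P_{t+1})/(t+1)`, equivalently
`μ(P_t) ≥ (t/(t+1))·μ(P_{t+1})`. -/
theorem stmt19
    {α : Type*} [Fintype α] [DecidableEq α]
    (Q : Finset α)
    (μ : Finset α → ℝ)
    (hμ0 : μ ∅ = 0)
    (hmono : ∀ S T : Finset α, S ⊆ T → μ S ≤ μ T)
    (hsub : ∀ S T : Finset α, ∀ u : α, S ⊆ T → u ∉ T →
      μ (insert u T) - μ T ≤ μ (insert u S) - μ S)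
    (t : ℕ) (s : ℕ → α)
    -- `s_1, …, s_{t+1}` are distinct elements of `Q`:
    (hdistinct : Set.InjOn s (Set.Icc 1 (t + 1)))
    (hmem : ∀ i ∈ Finset.Icc 1 (t + 1), s i ∈ Q)
    -- `P_i = {s_1, …, s_i}`:
    (P : ℕ → Finset α) (hP : P = fun i => (Finset.Icc 1 i).image s)
    -- the sequence is chosen greedily:
    (hgreedy : ∀ i ∈ Finset.Icc 1 (t + 1), ∀ u ∈ Q, u ∉ P (i - 1) →
      μ (insert u (P (i - 1))) ≤ μ (insert (s i) (P (i - 1)))) :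
    μ (P (t + 1)) - μ (P t) ≤ μ (P (t + 1)) / (t + 1) ∧
    ((t : ℝ) / (t + 1)) * μ (P (t + 1)) ≤ μ (P t) :=
  stmt19_general Q μ hμ0 hsub t s hdistinct hmem P hP hgreedy
end
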